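/- arXiv:2211.00117 — 13 statements merged into one kernel-verified Lean document; each statement's English description precedes it below -/
import Mathlib

section
/- Let (Ω, κ) be a finite measure space and T an averaging operator on L²(κ). Then: (1) for every f ∈ L¹(κ) there exists a (κ-a.e. unique) function g ∈ L¹(κ) such that ∫ f·(Th) dκ = ∫ g·h dκ for all h ∈ L^∞(κ) (so the adjoint T* maps L¹(κ) into L¹(κ), and consequently T is weak*-continuous on L^∞(κ)); (2) if f ≥ 0 κ-a.e. then g ≥ 0 κ-a.e. (T* is order-preserving); (3) if f ≥ 0 κ-a.e. then ∫ g dκ = ∫ f dκ, i.e. T* is an isometry on the positive cone of L¹(κ). -/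
set_option linter.unusedSectionVars false

open MeasureTheory ENNReal Filter Topology

section Helpers

variable {Ω : Type*} [MeasurableSpace Ω] {κ : Measure Ω} [IsFiniteMeasure κ]

noncomputable def oneL2 (κ : Measure Ω) [IsFiniteMeasure κ] : Lp ℝ 2 κ :=
  (memLp_const (1 : ℝ)).toLp _

lemma oneL2_coe : ⇑(oneL2 κ) =ᵐ[κ] fun _ => (1 : ℝ) := MemLp.coeFn_toLp _

noncomputable def indL2 (κ : Measure Ω) [IsFiniteMeasure κ] {A : Set Ω} (hA : MeasurableSet A) :
    Lp ℝ 2 κ :=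
  indicatorConstLp 2 hA (measure_ne_top κ A) (1 : ℝ)

lemma indL2_coe {A : Set Ω} (hA : MeasurableSet A) :
    ⇑(indL2 κ hA) =ᵐ[κ] A.indicator fun _ => (1 : ℝ) := indicatorConstLp_coeFn

lemma indL2_bdd {A : Set Ω} (hA : MeasurableSet A) : ∀ᵐ x ∂κ, |(indL2 κ hA) x| ≤ 1 := by
  filter_upwards [indL2_coe (κ := κ) hA] with x hx
  rw [hx]
  by_cases hxA : x ∈ A <;> simp [Set.indicator_apply, hxA]

lemma indL2_nonneg {A : Set Ω} (hA : MeasurableSet A) :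
    (0 : Ω → ℝ) ≤ᵐ[κ] ⇑(indL2 κ hA) := by
  filter_upwards [indL2_coe (κ := κ) hA] with x hx
  rw [Pi.zero_apply, hx]
  by_cases hxA : x ∈ A <;> simp [Set.indicator_apply, hxA]

lemma memℒp_top_bound {h : Ω → ℝ} (hm : MemLp h ∞ κ) :
    ∃ C : ℝ, 0 ≤ C ∧ ∀ᵐ x ∂κ, |h x| ≤ C := by
  refine ⟨(eLpNormEssSup h κ).toReal, ENNReal.toReal_nonneg, ?_⟩
  have hlt : eLpNormEssSup h κ < ∞ := by
    have := hm.2; rwa [eLpNorm_exponent_top] at this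
  filter_upwards [enorm_ae_le_eLpNormEssSup h κ] with x hx
  have h2 := ENNReal.toReal_mono hlt.ne hx
  simpa [Real.norm_eq_abs] using h2

lemma T_bdd (T : Lp ℝ 2 κ →L[ℝ] Lp ℝ 2 κ)
    (hTpos : ∀ u : Lp ℝ 2 κ, (0 : Ω → ℝ) ≤ᵐ[κ] ⇑u → (0 : Ω → ℝ) ≤ᵐ[κ] ⇑(T u))
    (hT1 : ⇑(T (oneL2 κ)) =ᵐ[κ] fun _ => (1 : ℝ))
    (u : Lp ℝ 2 κ) {C : ℝ} (hC : ∀ᵐ x ∂κ, |u x| ≤ C) :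
    ∀ᵐ x ∂κ, |(T u) x| ≤ C := by
  have key : ∀ v : Lp ℝ 2 κ, (∀ᵐ x ∂κ, v x ≤ C) → ∀ᵐ x ∂κ, (T v) x ≤ C := by
    intro v hv
    have h1 : (0 : Ω → ℝ) ≤ᵐ[κ] ⇑(C • oneL2 κ - v) := by
      filter_upwards [Lp.coeFn_sub (C • oneL2 κ) v, Lp.coeFn_smul C (oneL2 κ),
        oneL2_coe (κ := κ), hv] with x h1 h2 h3 h4
      rw [Pi.zero_apply, h1, Pi.sub_apply, h2, Pi.smul_apply, h3, smul_eq_mul, mul_one]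
      linarith
    have h2 := hTpos _ h1
    rw [map_sub, ContinuousLinearMap.map_smul] at h2
    filter_upwards [h2, Lp.coeFn_sub (C • T (oneL2 κ)) (T v), Lp.coeFn_smul C (T (oneL2 κ)),
      hT1] with x h2 h3 h4 h5
    rw [Pi.zero_apply, h3, Pi.sub_apply, h4, Pi.smul_apply, h5, smul_eq_mul, mul_one] at h2
    linarith
  have hup := key u (by filter_upwards [hC] with x hx using (abs_le.mp hx).2)
  have hdown := key (-u) (by
    filter_upwards [Lp.coeFn_neg u, hC] with x hx hC'
    rw [hx, Pi.neg_apply]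
    linarith [(abs_le.mp hC').1])
  rw [map_neg] at hdown
  filter_upwards [hup, hdown, Lp.coeFn_neg (T u)] with x h1 h2 h3
  rw [h3, Pi.neg_apply] at h2
  rw [abs_le]
  constructor <;> linarith

lemma exists_subseq_integral_tendsto (f : Ω → ℝ) (hf : Integrable f κ)
    {C : ℝ} (u : ℕ → Lp ℝ 2 κ) (v : Lp ℝ 2 κ)
    (hb : ∀ n, ∀ᵐ x ∂κ, |(u n) x| ≤ C)
    (hconv : Tendsto u atTop (𝓝 v)) :
    ∃ φ : ℕ → ℕ, StrictMono φ ∧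
      Tendsto (fun n => ∫ x, f x * (u (φ n)) x ∂κ) atTop (𝓝 (∫ x, f x * v x ∂κ)) := by
  have hsn : Tendsto (fun n => eLpNorm (⇑(u n) - ⇑v) 2 κ) atTop (𝓝 0) := by
    have h1 : ∀ n, eLpNorm (⇑(u n) - ⇑v) 2 κ = ENNReal.ofReal ‖u n - v‖ := by
      intro n
      rw [← eLpNorm_congr_ae (Lp.coeFn_sub (u n) v), Lp.norm_def,
        ENNReal.ofReal_toReal (Lp.eLpNorm_ne_top _)]
    simp_rw [h1]
    have h2 : Tendsto (fun n => ‖u n - v‖) atTop (𝓝 0) := by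
      rw [← tendsto_iff_norm_sub_tendsto_zero]
      exact hconv
    have h3 := (ENNReal.continuous_ofReal.tendsto 0).comp h2
    simpa [Function.comp_def] using h3
  have htm : TendstoInMeasure κ (fun n => ⇑(u n)) atTop ⇑v :=
    tendstoInMeasure_of_tendsto_eLpNorm (by norm_num)
      (fun n => Lp.aestronglyMeasurable _) (Lp.aestronglyMeasurable _) hsn
  obtain ⟨φ, hφ, hae⟩ := htm.exists_seq_tendsto_ae
  refine ⟨φ, hφ, ?_⟩
  refine tendsto_integral_of_dominated_convergence (fun x => |f x| * C)
    (fun n => hf.1.mul (Lp.aestronglyMeasurable _)) (hf.norm.mul_const C) ?_ ?_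
  · intro n
    filter_upwards [hb (φ n)] with x hx
    rw [Real.norm_eq_abs, abs_mul]
    exact mul_le_mul_of_nonneg_left hx (abs_nonneg _)
  · filter_upwards [hae] with x hx
    exact hx.const_mul (f x)

lemma pos_case (T : Lp ℝ 2 κ →L[ℝ] Lp ℝ 2 κ)
    (hTpos : ∀ u : Lp ℝ 2 κ, (0 : Ω → ℝ) ≤ᵐ[κ] ⇑u → (0 : Ω → ℝ) ≤ᵐ[κ] ⇑(T u))
    (hT1 : ⇑(T (oneL2 κ)) =ᵐ[κ] fun _ => (1 : ℝ))
    (f : Ω → ℝ) (hf : Integrable f κ) (hf0 : (0 : Ω → ℝ) ≤ᵐ[κ] f) :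
    ∃ g : Ω → ℝ, Integrable g κ ∧
      ∀ h : Lp ℝ 2 κ, MemLp (⇑h) ∞ κ →
        ∫ x, f x * (T h) x ∂κ = ∫ x, g x * h x ∂κ := by
  -- integrability of f times a bounded Lp function
  have hInt : ∀ (u : Lp ℝ 2 κ) (C : ℝ), (∀ᵐ x ∂κ, |u x| ≤ C) →
      Integrable (fun x => f x * u x) κ := by
    intro u C h
    have h1 := hf.bdd_mul (Lp.aestronglyMeasurable u) (c := C)
      (by simpa [Real.norm_eq_abs] using h)
    exact h1.congr (Eventually.of_forall fun x => mul_comm _ _)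
  have hTind_pos : ∀ {A : Set Ω} (hA : MeasurableSet A),
      (0 : Ω → ℝ) ≤ᵐ[κ] ⇑(T (indL2 κ hA)) := fun hA => hTpos _ (indL2_nonneg hA)
  have hTind_bdd : ∀ {A : Set Ω} (hA : MeasurableSet A),
      ∀ᵐ x ∂κ, |(T (indL2 κ hA)) x| ≤ 1 := fun hA => T_bdd T hTpos hT1 _ (indL2_bdd hA)
  have hm_nonneg : ∀ {A : Set Ω} (hA : MeasurableSet A),
      0 ≤ ∫ x, f x * (T (indL2 κ hA)) x ∂κ := by
    intro A hA
    apply integral_nonneg_of_ae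
    filter_upwards [hf0, hTind_pos hA] with x h1 h2
    exact mul_nonneg h1 h2
  -- integral vanishes on null sets
  have hzero : ∀ {A : Set Ω} (hA : MeasurableSet A), κ A = 0 →
      ∫ x, f x * (T (indL2 κ hA)) x ∂κ = 0 := by
    intro A hA h0
    have hind0 : indL2 κ hA = 0 := by
      apply Lp.ext
      have hnm : ∀ᵐ x ∂κ, x ∉ A := measure_eq_zero_iff_ae_notMem.mp h0
      filter_upwards [indL2_coe (κ := κ) hA, Lp.coeFn_zero ℝ 2 κ, hnm] with x h1 h2 h3
      rw [h1, h2, Set.indicator_of_notMem h3, Pi.zero_apply]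
    rw [hind0, map_zero]
    rw [integral_congr_ae (g := fun _ => (0 : ℝ)) ?_, integral_zero]
    filter_upwards [Lp.coeFn_zero ℝ 2 κ] with x hx
    rw [hx, Pi.zero_apply, mul_zero]
  -- countable additivity
  have hadd : ∀ (A : ℕ → Set Ω) (hA : ∀ i, MeasurableSet (A i)),
      Pairwise (Function.onFun Disjoint A) →
      ENNReal.ofReal (∫ x, f x * (T (indL2 κ (MeasurableSet.iUnion hA))) x ∂κ) =
        ∑' i, ENNReal.ofReal (∫ x, f x * (T (indL2 κ (hA i))) x ∂κ) := by
    intro A hA hd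
    set B : ℕ → Set Ω := fun n => ⋃ i ∈ Finset.range n, A i with hB
    have hBm : ∀ n, MeasurableSet (B n) := fun n =>
      (Finset.range n).measurableSet_biUnion (fun i _ => hA i)
    have hBmono : Monotone B := fun m n hmn =>
      Set.biUnion_subset_biUnion_left (Finset.range_subset_range.2 hmn)
    have hBsucc : ∀ n, B (n + 1) = B n ∪ A n := by
      intro n
      simp only [hB, Finset.range_add_one, Finset.set_biUnion_insert]
      rw [Set.union_comm]
    have hdisj : ∀ n, Disjoint (B n) (A n) := by
      intro n
      rw [Set.disjoint_left]
      intro x hx hxA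
      rcases Set.mem_iUnion₂.mp hx with ⟨i, hi, hxi⟩
      have hne : i ≠ n := by
        intro h; subst h; exact absurd hi (by simp)
      exact Set.disjoint_left.mp (hd hne) hxi hxA
    have hBLp : ∀ n, indL2 κ (hBm (n + 1)) = indL2 κ (hBm n) + indL2 κ (hA n) := by
      intro n
      apply Lp.ext
      filter_upwards [indL2_coe (κ := κ) (hBm (n + 1)), indL2_coe (κ := κ) (hBm n),
        indL2_coe (κ := κ) (hA n), Lp.coeFn_add (indL2 κ (hBm n)) (indL2 κ (hA n))]
        with x h1 h2 h3 h4
      rw [h1, h4, Pi.add_apply, h2, h3, hBsucc n,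
        Set.indicator_union_of_disjoint (hdisj n)]
    have hIntB : ∀ n, Integrable (fun x => f x * (T (indL2 κ (hBm n))) x) κ :=
      fun n => hInt _ 1 (hTind_bdd (hBm n))
    have hIntA : ∀ n, Integrable (fun x => f x * (T (indL2 κ (hA n))) x) κ :=
      fun n => hInt _ 1 (hTind_bdd (hA n))
    have hpart : ∀ n, ∫ x, f x * (T (indL2 κ (hBm n))) x ∂κ =
        ∑ i ∈ Finset.range n, ∫ x, f x * (T (indL2 κ (hA i))) x ∂κ := by
      intro n
      induction n with
      | zero =>
        rw [Finset.sum_range_zero]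
        apply hzero (hBm 0)
        have : B 0 = ∅ := by simp [hB]
        rw [this]; exact measure_empty
      | succ n ih =>
        have h1 : ∫ x, f x * (T (indL2 κ (hBm (n + 1)))) x ∂κ =
            ∫ x, (f x * (T (indL2 κ (hBm n))) x + f x * (T (indL2 κ (hA n))) x) ∂κ := by
          apply integral_congr_ae
          have hTadd : T (indL2 κ (hBm (n + 1))) = T (indL2 κ (hBm n)) + T (indL2 κ (hA n)) := by
            rw [hBLp n, map_add]
          rw [hTadd]
          filter_upwards [Lp.coeFn_add (T (indL2 κ (hBm n))) (T (indL2 κ (hA n)))] with x hx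
          rw [hx, Pi.add_apply, mul_add]
        rw [h1, integral_add (hIntB n) (hIntA n), ih, Finset.sum_range_succ]
    set c : ℕ → ℝ := fun i => ∫ x, f x * (T (indL2 κ (hA i))) x ∂κ with hc
    set a : ℕ → ℝ := fun n => ∫ x, f x * (T (indL2 κ (hBm n))) x ∂κ with ha
    have hamono : Monotone a := by
      apply monotone_nat_of_le_succ
      intro n
      rw [ha]
      simp only
      rw [hpart n, hpart (n + 1), Finset.sum_range_succ]
      exact le_add_of_nonneg_right (hm_nonneg (hA n))
    have habdd : ∀ n, a n ≤ ∫ x, |f x| ∂κ := by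
      intro n
      calc a n ≤ |a n| := le_abs_self _
        _ ≤ ∫ x, |f x * (T (indL2 κ (hBm n))) x| ∂κ := by
            simpa only [Real.norm_eq_abs] using norm_integral_le_integral_norm
              (μ := κ) (fun x => f x * (T (indL2 κ (hBm n))) x)
        _ ≤ ∫ x, |f x| ∂κ := by
            apply integral_mono_ae (hIntB n).abs hf.abs
            filter_upwards [hTind_bdd (hBm n)] with x hx
            rw [abs_mul]
            calc |f x| * |(T (indL2 κ (hBm n))) x| ≤ |f x| * 1 :=
              mul_le_mul_of_nonneg_left hx (abs_nonneg _)
              _ = |f x| := mul_one _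
    obtain ⟨L, hL⟩ : ∃ L, Tendsto a atTop (𝓝 L) :=
      ⟨_, tendsto_atTop_ciSup hamono ⟨_, Set.forall_mem_range.mpr habdd⟩⟩
    -- convergence of indicators in L²
    set Bf : Set Ω := ⋃ i, A i with hBf
    have hBfm : MeasurableSet Bf := MeasurableSet.iUnion hA
    have hBsub : ∀ n, B n ⊆ Bf := fun n =>
      Set.iUnion₂_subset fun i _ => Set.subset_iUnion A i
    have hmeasconv : Tendsto (fun n => κ (Bf \ B n)) atTop (𝓝 0) := by
      have hint : (⋂ n, Bf \ B n) = ∅ := by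
        rw [Set.eq_empty_iff_forall_notMem]
        intro x hx
        rw [Set.mem_iInter] at hx
        obtain ⟨i, hxi⟩ := Set.mem_iUnion.mp (hx 0).1
        exact (hx (i + 1)).2 (Set.mem_biUnion (Finset.mem_range.mpr (Nat.lt_succ_self i)) hxi)
      have h1 := tendsto_measure_iInter_atTop (μ := κ)
        (fun n => (hBfm.diff (hBm n)).nullMeasurableSet)
        (fun m n hmn => Set.diff_subset_diff_right (hBmono hmn))
        ⟨0, measure_ne_top κ _⟩
      rw [hint] at h1
      simpa [Function.comp_def] using h1
    have hindconv : Tendsto (fun n => indL2 κ (hBm n)) atTop (𝓝 (indL2 κ hBfm)) := by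
      rw [tendsto_iff_dist_tendsto_zero]
      have hsplit : ∀ n, indL2 κ hBfm = indL2 κ (hBm n) + indL2 κ (hBfm.diff (hBm n)) := by
        intro n
        apply Lp.ext
        filter_upwards [indL2_coe (κ := κ) hBfm, indL2_coe (κ := κ) (hBm n),
          indL2_coe (κ := κ) (hBfm.diff (hBm n)),
          Lp.coeFn_add (indL2 κ (hBm n)) (indL2 κ (hBfm.diff (hBm n)))] with x h1 h2 h3 h4
        rw [h1, h4, Pi.add_apply, h2, h3]
        have hxe : Bf = B n ∪ (Bf \ B n) := (Set.union_diff_cancel (hBsub n)).symm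
        conv_lhs => rw [hxe]
        rw [Set.indicator_union_of_disjoint Set.disjoint_sdiff_right]
      have hdist : ∀ n, dist (indL2 κ (hBm n)) (indL2 κ hBfm) =
          (κ (Bf \ B n)).toReal ^ (1 / (2 : ℝ)) := by
        intro n
        rw [dist_eq_norm, norm_sub_rev, hsplit n, add_sub_cancel_left]
        simp only [indL2]
        rw [norm_indicatorConstLp (by norm_num : (2 : ℝ≥0∞) ≠ 0) (by norm_num : (2 : ℝ≥0∞) ≠ ∞)]
        norm_num
        rfl
      simp_rw [hdist]
      have h2 : Tendsto (fun n => (κ (Bf \ B n)).toReal) atTop (𝓝 0) := by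
        have := (ENNReal.tendsto_toReal (by simp : (0 : ℝ≥0∞) ≠ ⊤)).comp hmeasconv
        simpa [Function.comp_def] using this
      have h3 := ((Real.continuousAt_rpow_const 0 (1 / 2)
        (Or.inr (by norm_num))).tendsto).comp h2
      simpa [Function.comp_def, Real.zero_rpow (by norm_num : (1 : ℝ) / 2 ≠ 0)] using h3
    obtain ⟨φ, hφ, hlim⟩ := exists_subseq_integral_tendsto f hf
      (fun n => T (indL2 κ (hBm n))) (T (indL2 κ hBfm))
      (fun n => hTind_bdd (hBm n)) ((T.continuous.tendsto _).comp hindconv)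
    have haL : ∫ x, f x * (T (indL2 κ hBfm)) x ∂κ = L :=
      tendsto_nhds_unique hlim (hL.comp hφ.tendsto_atTop)
    have hhs : HasSum c L := by
      rw [hasSum_iff_tendsto_nat_of_nonneg (fun i => hm_nonneg (hA i))]
      have : ∀ n, ∑ i ∈ Finset.range n, c i = a n := fun n => (hpart n).symm
      exact hL.congr fun n => (this n).symm
    rw [show (MeasurableSet.iUnion hA : MeasurableSet (⋃ i, A i)) = hBfm from rfl, haL,
      ← hhs.tsum_eq, ENNReal.ofReal_tsum_of_nonneg (fun i => hm_nonneg (hA i)) hhs.summable]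
  -- the measure ν
  set ν : Measure Ω := Measure.ofMeasurable
    (fun A hA => ENNReal.ofReal (∫ x, f x * (T (indL2 κ hA)) x ∂κ))
    (by
      show ENNReal.ofReal (∫ x, f x * (T (indL2 κ MeasurableSet.empty)) x ∂κ) = 0
      rw [hzero MeasurableSet.empty measure_empty, ENNReal.ofReal_zero])
    (fun A hA hd => hadd A hA hd) with hν
  have hν_apply : ∀ {A : Set Ω} (hA : MeasurableSet A),
      ν A = ENNReal.ofReal (∫ x, f x * (T (indL2 κ hA)) x ∂κ) := by
    intro A hA
    rw [hν, Measure.ofMeasurable_apply A hA]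
  haveI hνfin : IsFiniteMeasure ν := ⟨by rw [hν_apply MeasurableSet.univ]; exact ofReal_lt_top⟩
  have hac : ν ≪ κ := by
    apply Measure.AbsolutelyContinuous.mk
    intro s hs h0
    rw [hν_apply hs, hzero hs h0, ENNReal.ofReal_zero]
  set g0 : Ω → ℝ := fun x => (ν.rnDeriv κ x).toReal with hg0
  have hg0int : Integrable g0 κ := Measure.integrable_toReal_rnDeriv
  have hind : ∀ {A : Set Ω} (hA : MeasurableSet A),
      ∫ x, f x * (T (indL2 κ hA)) x ∂κ = ∫ x in A, g0 x ∂κ := by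
    intro A hA
    rw [hg0, Measure.setIntegral_toReal_rnDeriv hac A, measureReal_def, hν_apply hA,
      ENNReal.toReal_ofReal (hm_nonneg hA)]
  -- integrability of g0 times bounded functions
  have hg0Int : ∀ (u : Ω → ℝ) (C : ℝ), AEStronglyMeasurable u κ → (∀ᵐ x ∂κ, |u x| ≤ C) →
      Integrable (fun x => g0 x * u x) κ := by
    intro u C hu h
    have h1 := hg0int.bdd_mul hu (c := C) (by simpa [Real.norm_eq_abs] using h)
    exact h1.congr (Eventually.of_forall fun x => mul_comm _ _)
  -- the identity for simple functions
  have hsimple : ∀ (s : SimpleFunc Ω ℝ) (hms : MemLp (⇑s) 2 κ),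
      ∫ x, f x * (T (hms.toLp ⇑s)) x ∂κ = ∫ x, g0 x * s x ∂κ := by
    apply SimpleFunc.induction
      (motive := fun s => ∀ hms : MemLp (⇑s) 2 κ,
        ∫ x, f x * (T (hms.toLp ⇑s)) x ∂κ = ∫ x, g0 x * s x ∂κ)
    · intro cc A hA hms
      have hcoe : ⇑(SimpleFunc.piecewise A hA (SimpleFunc.const Ω cc)
          (SimpleFunc.const Ω 0)) = A.indicator (fun _ => cc) := by
        ext x
        simp only [SimpleFunc.coe_piecewise, SimpleFunc.coe_const, SimpleFunc.coe_zero,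
          Set.piecewise_eq_indicator]
        rfl
      have htoLp : hms.toLp _ = cc • indL2 κ hA := by
        apply Lp.ext
        filter_upwards [MemLp.coeFn_toLp hms, Lp.coeFn_smul cc (indL2 κ hA),
          indL2_coe (κ := κ) hA] with x h1 h2 h3
        rw [h1, h2, Pi.smul_apply, h3, hcoe, smul_eq_mul]
        by_cases hxA : x ∈ A <;> simp [Set.indicator_apply, hxA]
      rw [htoLp]
      have hL : ∫ x, f x * (T (cc • indL2 κ hA)) x ∂κ
          = cc * ∫ x, f x * (T (indL2 κ hA)) x ∂κ := by
        rw [← integral_const_mul]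
        apply integral_congr_ae
        have : T (cc • indL2 κ hA) = cc • T (indL2 κ hA) := by
          rw [ContinuousLinearMap.map_smul]
        rw [this]
        filter_upwards [Lp.coeFn_smul cc (T (indL2 κ hA))] with x hx
        rw [hx, Pi.smul_apply, smul_eq_mul]
        ring
      rw [hL, hind hA]
      have hR : ∫ x, g0 x * (SimpleFunc.piecewise A hA (SimpleFunc.const Ω cc)
          (SimpleFunc.const Ω 0)) x ∂κ = ∫ x, A.indicator (fun y => cc * g0 y) x ∂κ := by
        apply integral_congr_ae
        apply Eventually.of_forall
        intro x
        rw [hcoe]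
        by_cases hxA : x ∈ A <;> simp [Set.indicator_apply, hxA, mul_comm]
      rw [hR, integral_indicator hA, integral_const_mul]
    · intro p q hpq hp hq hms
      obtain ⟨Cp, hCp⟩ := p.exists_forall_norm_le
      obtain ⟨Cq, hCq⟩ := q.exists_forall_norm_le
      have hpm : MemLp (⇑p) 2 κ :=
        MemLp.of_bound p.aestronglyMeasurable Cp (Eventually.of_forall hCp)
      have hqm : MemLp (⇑q) 2 κ :=
        MemLp.of_bound q.aestronglyMeasurable Cq (Eventually.of_forall hCq)
      have htoLp : hms.toLp _ = hpm.toLp ⇑p + hqm.toLp ⇑q := by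
        apply Lp.ext
        filter_upwards [MemLp.coeFn_toLp hms, MemLp.coeFn_toLp hpm, MemLp.coeFn_toLp hqm,
          Lp.coeFn_add (hpm.toLp ⇑p) (hqm.toLp ⇑q)] with x h1 h2 h3 h4
        rw [h1, h4, Pi.add_apply, h2, h3, SimpleFunc.coe_add, Pi.add_apply]
      have hbp : ∀ᵐ x ∂κ, |(hpm.toLp ⇑p) x| ≤ Cp := by
        filter_upwards [MemLp.coeFn_toLp hpm] with x hx
        rw [hx]; exact hCp x
      have hbq : ∀ᵐ x ∂κ, |(hqm.toLp ⇑q) x| ≤ Cq := by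
        filter_upwards [MemLp.coeFn_toLp hqm] with x hx
        rw [hx]; exact hCq x
      have hL : ∫ x, f x * (T (hms.toLp _)) x ∂κ =
          ∫ x, f x * (T (hpm.toLp ⇑p)) x ∂κ + ∫ x, f x * (T (hqm.toLp ⇑q)) x ∂κ := by
        rw [← integral_add (hInt _ Cp (T_bdd T hTpos hT1 _ hbp))
          (hInt _ Cq (T_bdd T hTpos hT1 _ hbq))]
        apply integral_congr_ae
        rw [htoLp, map_add]
        filter_upwards [Lp.coeFn_add (T (hpm.toLp ⇑p)) (T (hqm.toLp ⇑q))] with x hx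
        rw [hx, Pi.add_apply]
        ring
      have hR : ∫ x, g0 x * (p + q) x ∂κ =
          ∫ x, g0 x * p x ∂κ + ∫ x, g0 x * q x ∂κ := by
        rw [← integral_add
          (hg0Int _ Cp p.aestronglyMeasurable (Eventually.of_forall hCp))
          (hg0Int _ Cq q.aestronglyMeasurable (Eventually.of_forall hCq))]
        apply integral_congr_ae
        apply Eventually.of_forall
        intro x
        simp only [SimpleFunc.coe_add, Pi.add_apply]
        ring
      rw [hL, hR, hp hpm, hq hqm]
  refine ⟨g0, hg0int, ?_⟩
  intro h hmem
  obtain ⟨C, hC0, hCb⟩ := memℒp_top_bound hmem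
  set h1 : Ω → ℝ := (Lp.aestronglyMeasurable h).mk ⇑h with hh1
  have hh1sm : StronglyMeasurable h1 := (Lp.aestronglyMeasurable h).stronglyMeasurable_mk
  have hh1ae : ⇑h =ᵐ[κ] h1 := (Lp.aestronglyMeasurable h).ae_eq_mk
  set h2 : Ω → ℝ := fun x => max (-C) (min (h1 x) C) with hh2
  have hh2sm : StronglyMeasurable h2 :=
    (measurable_const.max (hh1sm.measurable.min measurable_const)).stronglyMeasurable
  have hh2b : ∀ x, |h2 x| ≤ C := by
    intro x
    rw [abs_le]
    refine ⟨le_max_left _ _, max_le (by linarith) (min_le_right _ _)⟩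
  have hh2ae : ⇑h =ᵐ[κ] h2 := by
    filter_upwards [hh1ae, hCb] with x hx hb
    rw [hh2]
    simp only
    rw [← hx]
    rcases abs_le.mp hb with ⟨hb1, hb2⟩
    rw [min_eq_left hb2, max_eq_right hb1]
  set s : ℕ → SimpleFunc Ω ℝ := fun n =>
    SimpleFunc.approxOn h2 hh2sm.measurable Set.univ 0 (Set.mem_univ 0) n with hs
  have hsb : ∀ n x, |(s n) x| ≤ C + C := by
    intro n x
    have h5 := SimpleFunc.norm_approxOn_zero_le hh2sm.measurable (Set.mem_univ (0 : ℝ)) x n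
    rw [Real.norm_eq_abs, Real.norm_eq_abs] at h5
    have := hh2b x
    calc |(s n) x| ≤ |h2 x| + |h2 x| := h5
      _ ≤ C + C := by linarith
  have hsmem : ∀ n, MemLp (⇑(s n)) 2 κ := fun n =>
    MemLp.of_bound (s n).aestronglyMeasurable (C + C)
      (Eventually.of_forall fun x => by rw [Real.norm_eq_abs]; exact hsb n x)
  set sLp : ℕ → Lp ℝ 2 κ := fun n => (hsmem n).toLp _ with hsLp
  have hsLpb : ∀ n, ∀ᵐ x ∂κ, |(sLp n) x| ≤ C + C := by
    intro n
    filter_upwards [MemLp.coeFn_toLp (hsmem n)] with x hx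
    rw [hx]; exact hsb n x
  have hptw : ∀ x, Tendsto (fun n => (s n) x) atTop (𝓝 (h2 x)) := fun x =>
    SimpleFunc.tendsto_approxOn hh2sm.measurable (Set.mem_univ 0) (by simp)
  have hLpconv : Tendsto sLp atTop (𝓝 h) := by
    rw [tendsto_iff_dist_tendsto_zero]
    have heq : ∀ n, dist (sLp n) h = (eLpNorm (⇑(s n) - h2) 2 κ).toReal := by
      intro n
      rw [Lp.dist_def]
      congr 1
      apply eLpNorm_congr_ae
      filter_upwards [MemLp.coeFn_toLp (hsmem n), hh2ae] with x hb hc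
      rw [Pi.sub_apply, Pi.sub_apply, hb, hc]
    simp_rw [heq]
    have hi : eLpNorm (fun x => h2 x - 0) 2 κ < ∞ := by
      simp only [sub_zero]
      rw [← eLpNorm_congr_ae hh2ae]
      exact Lp.eLpNorm_lt_top h
    have htnd := SimpleFunc.tendsto_approxOn_Lp_eLpNorm hh2sm.measurable
      (Set.mem_univ (0 : ℝ)) (by norm_num : (2 : ℝ≥0∞) ≠ ∞)
      (Eventually.of_forall fun x => by simp) hi
    have := (ENNReal.tendsto_toReal (by simp : (0 : ℝ≥0∞) ≠ ⊤)).comp htnd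
    exact this
  have hTsb : ∀ n, ∀ᵐ x ∂κ, |(T (sLp n)) x| ≤ C + C := fun n =>
    T_bdd T hTpos hT1 _ (hsLpb n)
  obtain ⟨φ, hφ, hlim⟩ := exists_subseq_integral_tendsto f hf (fun n => T (sLp n)) (T h)
    hTsb ((T.continuous.tendsto h).comp hLpconv)
  have heqn : ∀ n, ∫ x, f x * (T (sLp n)) x ∂κ = ∫ x, g0 x * (s n) x ∂κ := fun n =>
    hsimple (s n) (hsmem n)
  have hright : Tendsto (fun n => ∫ x, g0 x * (s n) x ∂κ) atTop
      (𝓝 (∫ x, g0 x * h x ∂κ)) := by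
    refine tendsto_integral_of_dominated_convergence (fun x => |g0 x| * (C + C))
      (fun n => hg0int.1.mul (s n).aestronglyMeasurable) (hg0int.norm.mul_const _) ?_ ?_
    · intro n
      apply Eventually.of_forall
      intro x
      rw [Real.norm_eq_abs, abs_mul]
      exact mul_le_mul_of_nonneg_left (hsb n x) (abs_nonneg _)
    · filter_upwards [hh2ae] with x hx
      rw [hx]
      exact (hptw x).const_mul (g0 x)
  have hfull : Tendsto (fun n => ∫ x, f x * (T (sLp n)) x ∂κ) atTop
      (𝓝 (∫ x, g0 x * h x ∂κ)) := by
    simp_rw [heqn]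
    exact hright
  exact tendsto_nhds_unique hlim (hfull.comp hφ.tendsto_atTop)

end Helpers

/-- for an averaging operator `T` on `L²(κ)` over a finite measure space,
the adjoint maps `L¹(κ)` to `L¹(κ)` (with a.e. uniqueness), is order preserving, and is an
isometry on the positive cone. -/
theorem adjoint_of_averaging_maps_L1
    {Ω : Type*} [MeasurableSpace Ω] (κ : Measure Ω) [IsFiniteMeasure κ]
    (T : Lp ℝ 2 κ →L[ℝ] Lp ℝ 2 κ)
    (hTbdd : ∀ u : Lp ℝ 2 κ, MemLp (⇑u) ∞ κ → MemLp (⇑(T u)) ∞ κ)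
    (hTpos : ∀ u : Lp ℝ 2 κ, (0 : Ω → ℝ) ≤ᵐ[κ] ⇑u → (0 : Ω → ℝ) ≤ᵐ[κ] ⇑(T u))
    (hT1 : ⇑(T ((memLp_const (1 : ℝ) : MemLp (fun _ : Ω => (1 : ℝ)) 2 κ).toLp _))
      =ᵐ[κ] fun _ => (1 : ℝ))
    (f : Ω → ℝ) (hf : Integrable f κ) :
    ∃ g : Ω → ℝ, Integrable g κ ∧
      (∀ h : Lp ℝ 2 κ, MemLp (⇑h) ∞ κ →
        ∫ x, f x * (T h) x ∂κ = ∫ x, g x * h x ∂κ) ∧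
      (∀ g' : Ω → ℝ, Integrable g' κ →
        (∀ h : Lp ℝ 2 κ, MemLp (⇑h) ∞ κ →
          ∫ x, f x * (T h) x ∂κ = ∫ x, g' x * h x ∂κ) →
        g' =ᵐ[κ] g) ∧
      ((0 : Ω → ℝ) ≤ᵐ[κ] f → (0 : Ω → ℝ) ≤ᵐ[κ] g) ∧
      ((0 : Ω → ℝ) ≤ᵐ[κ] f → ∫ x, g x ∂κ = ∫ x, f x ∂κ) := by
  have hT1' : ⇑(T (oneL2 κ)) =ᵐ[κ] fun _ => (1 : ℝ) := hT1
  set fp : Ω → ℝ := fun x => max (f x) 0 with hfp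
  set fm : Ω → ℝ := fun x => max (-f x) 0 with hfm
  have hfpi : Integrable fp κ := hf.pos_part
  have hfmi : Integrable fm κ := hf.neg_part
  obtain ⟨g1, hg1i, hg1⟩ := pos_case T hTpos hT1' fp hfpi
    (Eventually.of_forall fun x => le_max_right _ _)
  obtain ⟨g2, hg2i, hg2⟩ := pos_case T hTpos hT1' fm hfmi
    (Eventually.of_forall fun x => le_max_right _ _)
  set g : Ω → ℝ := fun x => g1 x - g2 x with hg
  have hgi : Integrable g κ := hg1i.sub hg2i
  have hmul : ∀ (u : Ω → ℝ), Integrable u κ → ∀ (w : Lp ℝ 2 κ) (C : ℝ),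
      (∀ᵐ x ∂κ, |w x| ≤ C) → Integrable (fun x => u x * w x) κ := by
    intro u hu w C hw
    have h1 := hu.bdd_mul (Lp.aestronglyMeasurable w) (c := C)
      (by simpa [Real.norm_eq_abs] using hw)
    exact h1.congr (Eventually.of_forall fun x => mul_comm _ _)
  have hmain : ∀ h : Lp ℝ 2 κ, MemLp (⇑h) ∞ κ →
      ∫ x, f x * (T h) x ∂κ = ∫ x, g x * h x ∂κ := by
    intro h hmem
    obtain ⟨C, hC0, hCb⟩ := memℒp_top_bound hmem
    have hTb := T_bdd T hTpos hT1' h hCb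
    have e1 : ∫ x, f x * (T h) x ∂κ =
        ∫ x, fp x * (T h) x ∂κ - ∫ x, fm x * (T h) x ∂κ := by
      rw [← integral_sub (hmul fp hfpi (T h) C hTb) (hmul fm hfmi (T h) C hTb)]
      apply integral_congr_ae
      apply Eventually.of_forall
      intro x
      have hx : fp x - fm x = f x := max_zero_sub_max_neg_zero_eq_self (f x)
      simp only
      rw [← hx]
      ring
    have e2 : ∫ x, g x * h x ∂κ =
        ∫ x, g1 x * h x ∂κ - ∫ x, g2 x * h x ∂κ := by
      rw [← integral_sub (hmul g1 hg1i h C hCb) (hmul g2 hg2i h C hCb)]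
      apply integral_congr_ae
      apply Eventually.of_forall
      intro x
      simp only [hg]
      ring
    rw [e1, hg1 h hmem, hg2 h hmem, e2]
  have hmemInd : ∀ {A : Set Ω} (hA : MeasurableSet A), MemLp (⇑(indL2 κ hA)) ∞ κ :=
    fun hA => memLp_top_of_bound (Lp.aestronglyMeasurable _) 1
      (by simpa [Real.norm_eq_abs] using indL2_bdd (κ := κ) hA)
  have hset : ∀ {A : Set Ω} (hA : MeasurableSet A) (u : Ω → ℝ),
      ∫ x, u x * (indL2 κ hA) x ∂κ = ∫ x in A, u x ∂κ := by
    intro A hA u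
    rw [← integral_indicator hA]
    apply integral_congr_ae
    filter_upwards [indL2_coe (κ := κ) hA] with x hx
    rw [hx]
    by_cases hxA : x ∈ A <;> simp [Set.indicator_apply, hxA]
  refine ⟨g, hgi, hmain, ?_, ?_, ?_⟩
  · intro g' hg'i hg'
    apply Integrable.ae_eq_of_forall_setIntegral_eq g' g hg'i hgi
    intro A hA _
    rw [← hset hA g', ← hset hA g, ← hg' (indL2 κ hA) (hmemInd hA),
      hmain (indL2 κ hA) (hmemInd hA)]
  · intro hf0
    apply ae_nonneg_of_forall_setIntegral_nonneg hgi
    intro A hA _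
    rw [← hset hA g, ← hmain (indL2 κ hA) (hmemInd hA)]
    apply integral_nonneg_of_ae
    filter_upwards [hf0, hTpos _ (indL2_nonneg hA)] with x h1 h2
    exact mul_nonneg h1 h2
  · intro _
    have hone : MemLp (⇑(oneL2 κ)) ∞ κ := memLp_top_of_bound
      (Lp.aestronglyMeasurable _) 1
      (by filter_upwards [oneL2_coe (κ := κ)] with x hx; rw [hx]; simp)
    have h1 := hmain (oneL2 κ) hone
    have hL : ∫ x, f x * (T (oneL2 κ)) x ∂κ = ∫ x, f x ∂κ := by
      apply integral_congr_ae
      filter_upwards [hT1'] with x hx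
      rw [hx]
      simp
    have hR : ∫ x, g x * (oneL2 κ) x ∂κ = ∫ x, g x ∂κ := by
      apply integral_congr_ae
      filter_upwards [oneL2_coe (κ := κ)] with x hx
      rw [hx]
      simp
    rw [← hR, ← h1, hL]
end

section
/- Let (Ω, κ) be a finite measure space and T an averaging operator on L²(κ). Then for every u ∈ L^∞(κ;ℝ) and every continuous function ψ : ℝ → ℝ that is convex, even, and monotonically nondecreasing on [0,∞), the pointwise Jensen inequality ψ(Tu(x)) ≤ T(ψ∘u)(x) holds for κ-almost every x ∈ Ω. -/
open MeasureTheory ENNReal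

/-- Existence of a subgradient for a convex real function at any point. -/
lemma exists_subgradient_aux (ψ : ℝ → ℝ) (hc : ConvexOn ℝ Set.univ ψ) (p : ℝ) :
    ∃ a : ℝ, ∀ t, ψ p + a * (t - p) ≤ ψ t := by
  set S : Set ℝ := (fun t => (ψ p - ψ t) / (p - t)) '' Set.Iio p with hS
  have hne : S.Nonempty := ⟨_, ⟨p - 1, by simp, rfl⟩⟩
  have hub : ∀ y ∈ S, y ≤ ψ (p + 1) - ψ p := by
    rintro y ⟨t, ht, rfl⟩
    have := hc.slope_mono_adjacent (Set.mem_univ t) (Set.mem_univ (p + 1)) ht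
      (by linarith : p < p + 1)
    simpa using this
  have hbdd : BddAbove S := ⟨_, hub⟩
  refine ⟨sSup S, fun t => ?_⟩
  rcases lt_trichotomy t p with h | h | h
  · have hmem : (ψ p - ψ t) / (p - t) ∈ S := ⟨t, h, rfl⟩
    have hle : (ψ p - ψ t) / (p - t) ≤ sSup S := le_csSup hbdd hmem
    have hpt : (0 : ℝ) < p - t := by linarith
    rw [div_le_iff₀ hpt] at hle
    nlinarith
  · simp [h]
  · have hle : sSup S ≤ (ψ t - ψ p) / (t - p) := by
      refine csSup_le hne ?_
      rintro y ⟨s, hs, rfl⟩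
      exact hc.slope_mono_adjacent (Set.mem_univ s) (Set.mem_univ t) hs h
    have hpt : (0 : ℝ) < t - p := by linarith
    rw [le_div_iff₀ hpt] at hle
    nlinarith

/-- If an affine supporting family at rational points is dominated by `C` at `s`,
then `ψ s ≤ C`. -/
lemma le_of_support_lines (ψ : ℝ → ℝ) (hψc : Continuous ψ) (a : ℚ → ℝ)
    (ha : ∀ q : ℚ, ∀ t : ℝ, ψ q + a q * (t - q) ≤ ψ t)
    (s C : ℝ) (hC : ∀ q : ℚ, ψ q + a q * (s - q) ≤ C) : ψ s ≤ C := by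
  -- choose rationals converging to s
  have hch : ∀ n : ℕ, ∃ q : ℚ, |s - q| < 1 / (n + 1) := fun n =>
    exists_rat_near s (by positivity)
  choose q hq using hch
  have hqs : Filter.Tendsto (fun n => (q n : ℝ)) Filter.atTop (nhds s) := by
    have h0 : Filter.Tendsto (fun n : ℕ => 1 / ((n : ℝ) + 1)) Filter.atTop (nhds 0) :=
      tendsto_one_div_add_atTop_nhds_zero_nat
    have : Filter.Tendsto (fun n => s - (q n : ℝ)) Filter.atTop (nhds 0) :=
      squeeze_zero_norm (fun n => le_of_lt (hq n)) h0
    have := (tendsto_const_nhds (x := s)).sub this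
    simpa using this
  -- bound on a (q n) for large n
  obtain ⟨B, hB⟩ : ∃ B : ℝ, ∀ t ∈ Set.Icc (s - 2) (s + 2), |ψ t| ≤ B := by
    obtain ⟨B, hB⟩ := (isCompact_Icc (a := s - 2) (b := s + 2)).exists_bound_of_continuousOn
      hψc.continuousOn
    exact ⟨B, fun t ht => by simpa using hB t ht⟩
  have habound : ∀ n : ℕ, |s - (q n : ℝ)| ≤ 1 → |a (q n)| ≤ 2 * B := by
    intro n hn
    have h1 : (q n : ℝ) ∈ Set.Icc (s - 2) (s + 2) := by
      rw [abs_le] at hn; constructor <;> linarith [hn.1, hn.2]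
    have h2 : (q n : ℝ) + 1 ∈ Set.Icc (s - 2) (s + 2) := by
      rw [abs_le] at hn; constructor <;> linarith [hn.1, hn.2]
    have h3 : (q n : ℝ) - 1 ∈ Set.Icc (s - 2) (s + 2) := by
      rw [abs_le] at hn; constructor <;> linarith [hn.1, hn.2]
    have hu := ha (q n) ((q n : ℝ) + 1)
    have hl := ha (q n) ((q n : ℝ) - 1)
    simp only [add_sub_cancel_left] at hu hl
    have b1 := abs_le.mp (hB _ h1)
    have b2 := abs_le.mp (hB _ h2)
    have b3 := abs_le.mp (hB _ h3)
    rw [abs_le]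
    constructor <;> nlinarith [b1.1, b1.2, b2.1, b2.2, b3.1, b3.2]
  -- the support-line values converge to ψ s
  have hlim : Filter.Tendsto (fun n => ψ (q n) + a (q n) * (s - q n))
      Filter.atTop (nhds (ψ s)) := by
    have h1 : Filter.Tendsto (fun n => ψ ((q n : ℝ))) Filter.atTop (nhds (ψ s)) :=
      (hψc.tendsto s).comp hqs
    have h2 : Filter.Tendsto (fun n => a (q n) * (s - (q n : ℝ))) Filter.atTop (nhds 0) := by
      refine squeeze_zero_norm' ?_ (by
        simpa using tendsto_one_div_add_atTop_nhds_zero_nat.const_mul (2 * B))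
      filter_upwards [Filter.eventually_atTop.mpr ⟨0, fun n _ => hq n⟩] with n hn
      have hn1 : |s - (q n : ℝ)| ≤ 1 := by
        have : 1 / ((n : ℝ) + 1) ≤ 1 := by
          rw [div_le_one (by positivity)]; linarith [Nat.cast_nonneg (α := ℝ) n]
        linarith [hn]
      have := habound n hn1
      have hBnn : 0 ≤ B := le_trans (abs_nonneg _) (hB s (by constructor <;> linarith))
      calc ‖a (q n) * (s - (q n : ℝ))‖ = |a (q n)| * |s - (q n : ℝ)| := abs_mul _ _
        _ ≤ (2 * B) * (((n : ℝ) + 1))⁻¹ := by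
            rw [← one_div]
            apply mul_le_mul this (le_of_lt (hq n)) (abs_nonneg _) (by positivity)
    simpa using h1.add h2
  exact le_of_tendsto hlim (Filter.Eventually.of_forall fun n => hC (q n))

/-- pointwise Jensen inequality for averaging operators. -/
theorem jensen_of_averaging
    {Ω : Type*} [MeasurableSpace Ω] (κ : Measure Ω) [IsFiniteMeasure κ]
    (T : Lp ℝ 2 κ →L[ℝ] Lp ℝ 2 κ)
    (hTbdd : ∀ u : Lp ℝ 2 κ, MemLp (⇑u) ∞ κ → MemLp (⇑(T u)) ∞ κ)
    (hTpos : ∀ u : Lp ℝ 2 κ, (0 : Ω → ℝ) ≤ᵐ[κ] ⇑u → (0 : Ω → ℝ) ≤ᵐ[κ] ⇑(T u))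
    (hT1 : ⇑(T ((memLp_const (1 : ℝ) : MemLp (fun _ : Ω => (1 : ℝ)) 2 κ).toLp _))
      =ᵐ[κ] fun _ => (1 : ℝ))
    (u : Lp ℝ 2 κ) (hu : MemLp (⇑u) ∞ κ)
    (ψ : ℝ → ℝ) (hψc : Continuous ψ) (hψconv : ConvexOn ℝ Set.univ ψ)
    (hψeven : ∀ t : ℝ, ψ (-t) = ψ t) (hψmono : MonotoneOn ψ (Set.Ici 0))
    (hψu : MemLp (fun x => ψ (u x)) 2 κ) :
    ∀ᵐ x ∂κ, ψ ((T u) x) ≤ (T (hψu.toLp _)) x := by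
  set O : Lp ℝ 2 κ :=
    (memLp_const (1 : ℝ) : MemLp (fun _ : Ω => (1 : ℝ)) 2 κ).toLp _ with hO
  set Φ : Lp ℝ 2 κ := hψu.toLp _ with hΦ
  choose a ha using fun q : ℚ => exists_subgradient_aux ψ hψconv q
  have key : ∀ q : ℚ, ∀ᵐ x ∂κ, ψ q + a q * ((T u) x - q) ≤ (T Φ) x := by
    intro q
    have hwpos : (0 : Ω → ℝ) ≤ᵐ[κ] ⇑(Φ - a q • u - (ψ q - a q * q) • O) := by
      filter_upwards [Lp.coeFn_sub (Φ - a q • u) ((ψ q - a q * q) • O),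
        Lp.coeFn_sub Φ (a q • u), Lp.coeFn_smul (a q) u,
        Lp.coeFn_smul (ψ q - a q * q) O, hψu.coeFn_toLp,
        (memLp_const (1 : ℝ) : MemLp (fun _ : Ω => (1 : ℝ)) 2 κ).coeFn_toLp]
        with x h1 h2 h3 h4 h5 h6
      have hs := ha q (u x)
      rw [← hΦ] at h5
      rw [← hO] at h6
      simp only [Pi.zero_apply, h1, Pi.sub_apply, h2, h3, h4, Pi.smul_apply,
        smul_eq_mul, h5, h6]
      nlinarith [hs]
    have hTw := hTpos _ hwpos
    rw [map_sub, map_sub, ContinuousLinearMap.map_smul,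
      ContinuousLinearMap.map_smul] at hTw
    filter_upwards [hTw, Lp.coeFn_sub (T Φ - a q • T u) ((ψ q - a q * q) • T O),
      Lp.coeFn_sub (T Φ) (a q • T u), Lp.coeFn_smul (a q) (T u),
      Lp.coeFn_smul (ψ q - a q * q) (T O), hT1] with x h0 h1 h2 h3 h4 h5
    simp only [Pi.zero_apply, h1, Pi.sub_apply, h2, h3, h4, Pi.smul_apply,
      smul_eq_mul, h5] at h0
    nlinarith [h0]
  have hall : ∀ᵐ x ∂κ, ∀ q : ℚ, ψ q + a q * ((T u) x - q) ≤ (T Φ) x :=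
    (MeasureTheory.ae_all_iff).mpr key
  filter_upwards [hall] with x hx
  exact le_of_support_lines ψ hψc a ha ((T u) x) ((T Φ) x) hx
end

section
/- Let (Ω, κ) be a finite measure space and T an averaging operator on L²(κ). Then the following four conditions are equivalent: (i) T is conservative, i.e. ∫ Tu dκ = ∫ u dκ for all u ∈ L²(κ); (ii) ‖T*1‖_{L^∞(κ)} ≤ 1; (iii) T is p-contractive for every 1 ≤ p ≤ ∞, i.e. ‖Tu‖_{L^p(κ)} ≤ ‖u‖_{L^p(κ)} for all u ∈ L^∞(κ) and all 1 ≤ p ≤ ∞; (iv) T is 1-contractive, i.e. ‖Tu‖_{L¹(κ)} ≤ ‖u‖_{L¹(κ)} for all u ∈ L^∞(κ). -/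
open MeasureTheory ENNReal Filter

/-- Optimizing Young's inequality over rational parameters. -/
lemma young_opt_rat {p q A s : ℝ} (hpq : p.HolderConjugate q) (hA : 0 ≤ A) (hs : 0 ≤ s)
    (h : ∀ r : ℚ, 0 < r → s ≤ (r : ℝ) ^ p * A / p + (r : ℝ) ^ (-q) / q) :
    s ^ p ≤ A := by
  have hp0 : 0 < p := hpq.pos
  have hq0 : 0 < q := hpq.symm.pos
  have hreal : ∀ l : ℝ, 0 < l → s ≤ l ^ p * A / p + l ^ (-q) / q := by
    intro l hl
    set f : ℝ → ℝ := fun t => t ^ p * A / p + t ^ (-q) / q with hf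
    have hcont : ContinuousAt f l := by
      have h1 : ContinuousAt (fun t : ℝ => t ^ p) l :=
        Real.continuousAt_rpow_const l p (Or.inl hl.ne')
      have h2 : ContinuousAt (fun t : ℝ => t ^ (-q)) l :=
        Real.continuousAt_rpow_const l (-q) (Or.inl hl.ne')
      exact ((h1.mul continuousAt_const).div_const p).add (h2.div_const q)
    have hseq : ∀ n : ℕ, ∃ r : ℚ, l < (r : ℝ) ∧ (r : ℝ) < l + 1 / (n + 1) := by
      intro n
      exact exists_rat_btwn (lt_add_of_pos_right l (by positivity))
    choose r hr1 hr2 using hseq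
    have htend : Tendsto (fun n => ((r n : ℝ))) atTop (nhds l) := by
      have h0 : Tendsto (fun n : ℕ => l + 1 / ((n : ℝ) + 1)) atTop (nhds (l + 0)) :=
        tendsto_const_nhds.add tendsto_one_div_add_atTop_nhds_zero_nat
      rw [add_zero] at h0
      exact tendsto_of_tendsto_of_tendsto_of_le_of_le tendsto_const_nhds h0
        (fun n => (hr1 n).le) (fun n => (hr2 n).le)
    have : Tendsto (fun n => f (r n)) atTop (nhds (f l)) := hcont.tendsto.comp htend
    exact ge_of_tendsto this (Eventually.of_forall fun n => h (r n)
      (by exact_mod_cast (lt_trans hl (hr1 n) : (0:ℝ) < r n)))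
  rcases eq_or_lt_of_le hA with hA0 | hApos
  · have hs0 : s ≤ 0 := by
      have h1 : Tendsto (fun l : ℝ => l ^ (-q)) atTop (nhds 0) :=
        tendsto_rpow_neg_atTop hq0
      have htend : Tendsto (fun l : ℝ => l ^ p * A / p + l ^ (-q) / q) atTop
          (nhds (0 / q)) := by
        have := (h1.div_const q)
        rw [zero_div] at this ⊢
        have heq : (fun l : ℝ => l ^ p * A / p + l ^ (-q) / q)
            = fun l : ℝ => l ^ (-q) / q := by
          funext l; rw [← hA0]; ring
        rw [heq]; exact this
      rw [zero_div] at htend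
      exact ge_of_tendsto htend (eventually_atTop.2 ⟨1, fun l hl => hreal l (by linarith)⟩)
    have hseq : s = 0 := le_antisymm hs0 hs
    rw [hseq, Real.zero_rpow hp0.ne', ← hA0]
  · set l := A ^ (-(1 / (p * q))) with hl
    have hlpos : 0 < l := Real.rpow_pos_of_pos hApos _
    have key := hreal l hlpos
    have hco : 1 / p + 1 / q = 1 := by simpa [one_div] using hpq.inv_add_inv_eq_one
    have e1 : l ^ p * A = A ^ (1 / p) := by
      rw [hl, ← Real.rpow_mul hA]
      nth_rewrite 2 [← Real.rpow_one A]
      rw [← Real.rpow_add hApos]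
      congr 1
      have hco' : p + q = p * q := by field_simp at hco ⊢; linarith
      field_simp
      linear_combination (-1) * hco'
    have e2 : l ^ (-q) = A ^ (1 / p) := by
      rw [hl, ← Real.rpow_mul hA]
      congr 1
      field_simp
    have key2 : s ≤ A ^ (1 / p) := by
      rw [e1, e2] at key
      calc s ≤ A ^ (1/p) / p + A ^ (1/p) / q := key
        _ = A ^ (1/p) * (1/p + 1/q) := by ring
        _ = A ^ (1/p) := by rw [hco, mul_one]
    calc s ^ p ≤ (A ^ (1/p)) ^ p := Real.rpow_le_rpow hs key2 hp0.le
      _ = A := by rw [← Real.rpow_mul hA, one_div_mul_cancel hp0.ne', Real.rpow_one]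

set_option maxHeartbeats 1600000 in
/-- for an averaging operator, the following are equivalent:
conservativity, `‖T*1‖_∞ ≤ 1`, p-contractivity for all `1 ≤ p ≤ ∞`, and 1-contractivity. -/
theorem averaging_conservative_tfae
    {Ω : Type*} [MeasurableSpace Ω] (κ : Measure Ω) [IsFiniteMeasure κ]
    (T : Lp ℝ 2 κ →L[ℝ] Lp ℝ 2 κ)
    (hTbdd : ∀ u : Lp ℝ 2 κ, MemLp (⇑u) ∞ κ → MemLp (⇑(T u)) ∞ κ)
    (hTpos : ∀ u : Lp ℝ 2 κ, (0 : Ω → ℝ) ≤ᵐ[κ] ⇑u → (0 : Ω → ℝ) ≤ᵐ[κ] ⇑(T u))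
    (hT1 : ⇑(T ((memLp_const (1 : ℝ) : MemLp (fun _ : Ω => (1 : ℝ)) 2 κ).toLp _))
      =ᵐ[κ] fun _ => (1 : ℝ)) :
    [ -- (i) conservative
      (∀ u : Lp ℝ 2 κ, ∫ x, (T u) x ∂κ = ∫ x, u x ∂κ),
      -- (ii) the adjoint of 1 is bounded by 1
      (∃ g : Ω → ℝ, Integrable g κ ∧
        (∀ h : Lp ℝ 2 κ, MemLp (⇑h) ∞ κ →
          ∫ x, (T h) x ∂κ = ∫ x, g x * h x ∂κ) ∧
        (∀ᵐ x ∂κ, |g x| ≤ 1)),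
      -- (iii) p-contractive for all 1 ≤ p ≤ ∞
      (∀ p : ℝ≥0∞, 1 ≤ p → ∀ u : Lp ℝ 2 κ, MemLp (⇑u) ∞ κ →
        eLpNorm (⇑(T u)) p κ ≤ eLpNorm (⇑u) p κ),
      -- (iv) 1-contractive
      (∀ u : Lp ℝ 2 κ, MemLp (⇑u) ∞ κ →
        eLpNorm (⇑(T u)) 1 κ ≤ eLpNorm (⇑u) 1 κ) ].TFAE := by
  classical
  set oneL : Lp ℝ 2 κ := (memLp_const (1 : ℝ)).toLp _ with honeL
  have hone : ⇑oneL =ᵐ[κ] fun _ => (1 : ℝ) := MemLp.coeFn_toLp _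
  have hT1' : ⇑(T oneL) =ᵐ[κ] fun _ => (1 : ℝ) := hT1
  -- a.e. bound from MemLp ∞
  have hbdd : ∀ f : Ω → ℝ, MemLp f ∞ κ → ∃ C : ℝ, 0 ≤ C ∧
      ENNReal.ofReal C = eLpNorm f ∞ κ ∧ ∀ᵐ x ∂κ, |f x| ≤ C := by
    intro f hf
    refine ⟨(eLpNorm f ∞ κ).toReal, ENNReal.toReal_nonneg, ?_, ?_⟩
    · exact ENNReal.ofReal_toReal hf.2.ne
    · filter_upwards [ae_le_eLpNormEssSup (f := f) (μ := κ)] with x hx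
      have hx' : (‖f x‖₊ : ℝ≥0∞).toReal ≤ (eLpNormEssSup f κ).toReal := by
        apply ENNReal.toReal_mono _ hx
        rw [← eLpNorm_exponent_top]
        exact hf.2.ne
      simpa [Real.norm_eq_abs] using hx'
  -- maximum principle
  have hmax : ∀ (u : Lp ℝ 2 κ) (C : ℝ), (∀ᵐ x ∂κ, |u x| ≤ C) →
      (∀ᵐ x ∂κ, |(T u) x| ≤ C) := by
    intro u C hu
    have h1 : (0 : Ω → ℝ) ≤ᵐ[κ] ⇑(C • oneL + u) := by
      filter_upwards [Lp.coeFn_add (C • oneL) u, Lp.coeFn_smul C oneL, hone, hu]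
        with x ha hs h1 h2
      rw [Pi.add_apply] at ha
      rw [ha, hs, Pi.smul_apply, h1, smul_eq_mul, mul_one]
      have := abs_le.1 h2
      simp only [Pi.zero_apply]
      linarith [this.1]
    have h2 : (0 : Ω → ℝ) ≤ᵐ[κ] ⇑(C • oneL - u) := by
      filter_upwards [Lp.coeFn_sub (C • oneL) u, Lp.coeFn_smul C oneL, hone, hu]
        with x ha hs h1 h2
      rw [Pi.sub_apply] at ha
      rw [ha, hs, Pi.smul_apply, h1, smul_eq_mul, mul_one]
      have := abs_le.1 h2
      simp only [Pi.zero_apply]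
      linarith [this.2]
    have p1 := hTpos _ h1
    have p2 := hTpos _ h2
    have e1 : T (C • oneL + u) = C • T oneL + T u := by rw [map_add, T.map_smul]
    have e2 : T (C • oneL - u) = C • T oneL - T u := by rw [map_sub, T.map_smul]
    rw [e1] at p1; rw [e2] at p2
    filter_upwards [p1, p2, Lp.coeFn_add (C • T oneL) (T u), Lp.coeFn_sub (C • T oneL) (T u),
      Lp.coeFn_smul C (T oneL), hT1'] with x hp1 hp2 ha hs hsm h1x
    rw [Pi.add_apply] at ha
    rw [Pi.sub_apply] at hs
    simp only [Pi.zero_apply] at hp1 hp2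
    rw [ha, hsm, Pi.smul_apply, h1x, smul_eq_mul, mul_one] at hp1
    rw [hs, hsm, Pi.smul_apply, h1x, smul_eq_mul, mul_one] at hp2
    rw [abs_le]
    constructor <;> linarith
  -- |T u| ≤ T |u| a.e.
  have habsu : ∀ u : Lp ℝ 2 κ, (0 : Ω → ℝ) ≤ᵐ[κ] ⇑|u| := by
    intro u
    filter_upwards [Lp.coeFn_abs u] with x hx
    rw [hx]; exact abs_nonneg _
  have habs : ∀ u : Lp ℝ 2 κ, ∀ᵐ x ∂κ, |(T u) x| ≤ (T |u|) x := by
    intro u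
    have h1 : (0 : Ω → ℝ) ≤ᵐ[κ] ⇑(|u| + u) := by
      filter_upwards [Lp.coeFn_add |u| u, Lp.coeFn_abs u] with x ha hb
      rw [Pi.add_apply] at ha
      rw [ha, hb]
      simp only [Pi.zero_apply]
      linarith [neg_abs_le (u x)]
    have h2 : (0 : Ω → ℝ) ≤ᵐ[κ] ⇑(|u| - u) := by
      filter_upwards [Lp.coeFn_sub |u| u, Lp.coeFn_abs u] with x ha hb
      rw [Pi.sub_apply] at ha
      rw [ha, hb]
      simp only [Pi.zero_apply]
      linarith [le_abs_self (u x)]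
    have p1 := hTpos _ h1
    have p2 := hTpos _ h2
    rw [map_add] at p1
    rw [map_sub] at p2
    filter_upwards [p1, p2, Lp.coeFn_add (T |u|) (T u), Lp.coeFn_sub (T |u|) (T u)]
      with x hp1 hp2 ha hs
    rw [Pi.add_apply] at ha
    rw [Pi.sub_apply] at hs
    simp only [Pi.zero_apply] at hp1 hp2
    rw [ha] at hp1
    rw [hs] at hp2
    rw [abs_le]
    constructor <;> linarith
  haveI hFact : Fact ((1 : ℝ≥0∞) ≤ 2) := ⟨one_le_two⟩
  tfae_have 1 → 2 := by
    intro h1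
    refine ⟨fun _ => 1, integrable_const 1, fun h _ => ?_, Eventually.of_forall (by simp)⟩
    rw [h1 h]
    simp
  tfae_have 3 → 4 := fun h3 => h3 1 le_rfl
  tfae_have 2 → 3 := by
    rintro ⟨g, hgint, hgeq, hgbd⟩ p hp u hu
    have hp0 : p ≠ 0 := (lt_of_lt_of_le zero_lt_one hp).ne'
    have hint : ∀ h : Lp ℝ 2 κ, MemLp (⇑h) ∞ κ → (0 : Ω → ℝ) ≤ᵐ[κ] ⇑h →
        ∫ x, (T h) x ∂κ ≤ ∫ x, h x ∂κ := by
      intro h hh hh0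
      rw [hgeq h hh]
      have hhint : Integrable (⇑h) κ := (Lp.memLp h).integrable one_le_two
      have hgh : Integrable (fun x => g x * h x) κ := by
        refine Integrable.mono' hhint.abs
          (hgint.aestronglyMeasurable.mul (Lp.aestronglyMeasurable h)) ?_
        filter_upwards [hgbd] with x hx
        rw [Real.norm_eq_abs, abs_mul]
        exact mul_le_of_le_one_left (abs_nonneg _) hx
      refine integral_mono_ae hgh hhint ?_
      filter_upwards [hgbd, hh0] with x hg hx
      rw [Pi.zero_apply] at hx
      calc g x * h x ≤ 1 * h x :=
            mul_le_mul_of_nonneg_right (le_trans (le_abs_self _) hg) hx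
        _ = h x := one_mul _
    by_cases hptop : p = ∞
    · subst hptop
      obtain ⟨C, hC0, hCeq, hCb⟩ := hbdd _ hu
      have hTb := hmax u C hCb
      rw [eLpNorm_exponent_top, ← hCeq]
      exact eLpNormEssSup_le_of_ae_bound
        (by filter_upwards [hTb] with x hx; rwa [Real.norm_eq_abs])
    · set pr := p.toReal with hpr
      have hpr1 : 1 ≤ pr := by
        rw [hpr, ← ENNReal.toReal_one]
        exact ENNReal.toReal_mono hptop hp
      have hpr0 : 0 < pr := lt_of_lt_of_le zero_lt_one hpr1
      obtain ⟨C, hC0, -, hCb⟩ := hbdd _ hu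
      set wf : Ω → ℝ := fun x => |u x| ^ pr with hwf
      have hwmeas : AEStronglyMeasurable wf κ := by
        have h1 : AEStronglyMeasurable (fun x => |u x|) κ := by
          simpa [Real.norm_eq_abs] using (Lp.aestronglyMeasurable u).norm
        exact (Real.continuous_rpow_const hpr0.le).comp_aestronglyMeasurable h1
      have hwbd : ∀ᵐ x ∂κ, ‖wf x‖ ≤ C ^ pr := by
        filter_upwards [hCb] with x hx
        rw [hwf]
        rw [Real.norm_eq_abs, abs_of_nonneg (Real.rpow_nonneg (abs_nonneg _) _)]
        exact Real.rpow_le_rpow (abs_nonneg _) hx hpr0.le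
      have hwtop : MemLp wf ∞ κ := memLp_top_of_bound hwmeas _ hwbd
      have hw2 : MemLp wf 2 κ := hwtop.mono_exponent le_top
      set w : Lp ℝ 2 κ := hw2.toLp wf with hwdef
      have hwcoe : ⇑w =ᵐ[κ] wf := MemLp.coeFn_toLp _
      have hwtop' : MemLp (⇑w) ∞ κ := hwtop.ae_eq hwcoe.symm
      have hw0 : (0 : Ω → ℝ) ≤ᵐ[κ] ⇑w := by
        filter_upwards [hwcoe] with x hx
        rw [Pi.zero_apply, hx, hwf]
        exact Real.rpow_nonneg (abs_nonneg _) _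
      have hTw0 : (0 : Ω → ℝ) ≤ᵐ[κ] ⇑(T w) := hTpos w hw0
      have hjen : ∀ᵐ x ∂κ, |(T u) x| ^ pr ≤ (T w) x := by
        rcases eq_or_lt_of_le hpr1 with hpr_eq | hpr_gt
        · have hcoeeq : ⇑w =ᵐ[κ] ⇑|u| := by
            filter_upwards [hwcoe, Lp.coeFn_abs u] with x h1 h2
            rw [h1, h2]
            simp only [hwf, ← hpr_eq, Real.rpow_one]
          have hweq : w = |u| := Lp.ext hcoeeq
          rw [hweq]
          filter_upwards [habs u] with x hx
          rw [← hpr_eq, Real.rpow_one]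
          exact hx
        · set qr := Real.conjExponent pr with hqr
          have hpq : pr.HolderConjugate qr := Real.HolderConjugate.conjExponent hpr_gt
          have hqr0 : 0 < qr := hpq.symm.pos
          have hyoung : ∀ r : ℚ, 0 < r → ∀ x : Ω,
              |u x| ≤ (r:ℝ)^pr * wf x / pr + (r:ℝ)^(-qr)/qr := by
            intro r hr x
            have hrpos : (0:ℝ) < (r:ℝ) := by exact_mod_cast hr
            have h := Real.young_inequality ((r:ℝ) * |u x|) ((r:ℝ)⁻¹) hpq
            have e0 : (r:ℝ) * |u x| * (r:ℝ)⁻¹ = |u x| := by field_simp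
            have e1 : (abs ((r:ℝ) * |u x|)) ^ pr = (r:ℝ)^pr * wf x := by
              show (abs ((r:ℝ) * |u x|)) ^ pr = (r:ℝ)^pr * (|u x| ^ pr)
              rw [abs_of_nonneg (mul_nonneg hrpos.le (abs_nonneg _)),
                Real.mul_rpow hrpos.le (abs_nonneg _)]
            have e2 : (abs ((r:ℝ)⁻¹)) ^ qr = (r:ℝ)^(-qr) := by
              rw [abs_of_nonneg (inv_nonneg.2 hrpos.le), Real.inv_rpow hrpos.le,
                ← Real.rpow_neg hrpos.le]
            rw [e0, e1, e2] at h
            exact h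
          have hstep : ∀ r : ℚ, ∀ᵐ x ∂κ, 0 < r →
              (T |u|) x ≤ (r:ℝ)^pr * (T w) x / pr + (r:ℝ)^(-qr)/qr := by
            intro r
            by_cases hr : 0 < r
            · have hrpos : (0:ℝ) < (r:ℝ) := by exact_mod_cast hr
              set a : ℝ := (r:ℝ)^pr / pr with ha
              set b : ℝ := (r:ℝ)^(-qr) / qr with hb
              have hz0 : (0 : Ω → ℝ) ≤ᵐ[κ] ⇑(a • w + b • oneL - |u|) := by
                filter_upwards [Lp.coeFn_sub (a • w + b • oneL) |u|,
                  Lp.coeFn_add (a • w) (b • oneL), Lp.coeFn_smul a w, Lp.coeFn_smul b oneL,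
                  hwcoe, hone, Lp.coeFn_abs u] with x e1 e2 e3 e4 e5 e6 e7
                rw [Pi.zero_apply, e1, Pi.sub_apply, e2, Pi.add_apply, e3, e4,
                  Pi.smul_apply, Pi.smul_apply, e5, e6, e7, smul_eq_mul, smul_eq_mul, mul_one]
                have hy := hyoung r hr x
                have harith : (r:ℝ)^pr * wf x / pr = a * wf x := by rw [ha]; ring
                rw [harith] at hy
                linarith
              have hTz := hTpos _ hz0
              have he : T (a • w + b • oneL - |u|) = a • T w + b • T oneL - T |u| := by
                rw [map_sub, map_add, T.map_smul, T.map_smul]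
              rw [he] at hTz
              filter_upwards [hTz, Lp.coeFn_sub (a • T w + b • T oneL) (T |u|),
                Lp.coeFn_add (a • T w) (b • T oneL), Lp.coeFn_smul a (T w),
                Lp.coeFn_smul b (T oneL), hT1'] with x h0 e1 e2 e3 e4 e5
              intro _
              rw [Pi.zero_apply, e1, Pi.sub_apply, e2, Pi.add_apply, e3, e4,
                Pi.smul_apply, Pi.smul_apply, e5, smul_eq_mul, smul_eq_mul, mul_one] at h0
              have harith : (r:ℝ)^pr * (T w) x / pr = a * (T w) x := by rw [ha]; ring
              rw [harith]
              linarith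
            · filter_upwards with x hr'
              exact absurd hr' hr
          have hall : ∀ᵐ x ∂κ, ∀ r : ℚ, 0 < r →
              (T |u|) x ≤ (r:ℝ)^pr * (T w) x / pr + (r:ℝ)^(-qr)/qr := ae_all_iff.2 hstep
          have hTabs0 := hTpos _ (habsu u)
          filter_upwards [hall, habs u, hTabs0, hTw0] with x hx habsx hT0x hTw0x
          rw [Pi.zero_apply] at hT0x hTw0x
          have key := young_opt_rat hpq hTw0x hT0x (fun r hr => hx r hr)
          calc |(T u) x| ^ pr ≤ ((T |u|) x) ^ pr :=
                Real.rpow_le_rpow (abs_nonneg _) habsx hpr0.le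
            _ ≤ (T w) x := key
      have hTwint : Integrable (⇑(T w)) κ := (Lp.memLp (T w)).integrable one_le_two
      have hwint : Integrable (⇑w) κ := (Lp.memLp w).integrable one_le_two
      have hchain : ∫⁻ x, (‖(T u) x‖₊ : ℝ≥0∞) ^ pr ∂κ ≤ ∫⁻ x, (‖u x‖₊ : ℝ≥0∞) ^ pr ∂κ := by
        calc ∫⁻ x, (‖(T u) x‖₊ : ℝ≥0∞) ^ pr ∂κ
            = ∫⁻ x, ENNReal.ofReal (|(T u) x| ^ pr) ∂κ := by
              apply lintegral_congr
              intro x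
              rw [← ENNReal.ofReal_rpow_of_nonneg (abs_nonneg _) hpr0.le,
                ← enorm_eq_nnnorm, Real.enorm_eq_ofReal_abs]
          _ ≤ ∫⁻ x, ENNReal.ofReal ((T w) x) ∂κ :=
              lintegral_mono_ae (hjen.mono fun x hx => ENNReal.ofReal_le_ofReal hx)
          _ = ENNReal.ofReal (∫ x, (T w) x ∂κ) :=
              (ofReal_integral_eq_lintegral_ofReal hTwint hTw0).symm
          _ ≤ ENNReal.ofReal (∫ x, w x ∂κ) := ENNReal.ofReal_le_ofReal (hint w hwtop' hw0)
          _ = ∫⁻ x, ENNReal.ofReal (w x) ∂κ := ofReal_integral_eq_lintegral_ofReal hwint hw0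
          _ = ∫⁻ x, ENNReal.ofReal (wf x) ∂κ := by
              apply lintegral_congr_ae
              filter_upwards [hwcoe] with x hx
              rw [hx]
          _ = ∫⁻ x, (‖u x‖₊ : ℝ≥0∞) ^ pr ∂κ := by
              apply lintegral_congr
              intro x
              show ENNReal.ofReal (|u x| ^ pr) = (‖u x‖₊ : ℝ≥0∞) ^ pr
              rw [← ENNReal.ofReal_rpow_of_nonneg (abs_nonneg _) hpr0.le,
                ← enorm_eq_nnnorm, Real.enorm_eq_ofReal_abs]
      rw [eLpNorm_eq_lintegral_rpow_enorm_toReal hp0 hptop,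
        eLpNorm_eq_lintegral_rpow_enorm_toReal hp0 hptop]
      exact ENNReal.rpow_le_rpow hchain (by positivity)
  tfae_have 4 → 1 := by
    intro h4 u
    -- `eLpNorm 1` of a nonnegative Lp element as an integral
    have hsn : ∀ f : Lp ℝ 2 κ, (0 : Ω → ℝ) ≤ᵐ[κ] ⇑f →
        eLpNorm (⇑f) 1 κ = ENNReal.ofReal (∫ x, f x ∂κ) := by
      intro f hf
      have hfi : Integrable (⇑f) κ := (Lp.memLp f).integrable one_le_two
      rw [eLpNorm_one_eq_lintegral_enorm, ofReal_integral_eq_lintegral_ofReal hfi hf]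
      apply lintegral_congr_ae
      filter_upwards [hf] with x hx
      rw [Pi.zero_apply] at hx
      rw [Real.enorm_eq_ofReal_abs, abs_of_nonneg hx]
    -- for bounded elements, ∫ T v ≤ ∫ v
    have hb : ∀ v : Lp ℝ 2 κ, MemLp (⇑v) ∞ κ → ∫ x, (T v) x ∂κ ≤ ∫ x, v x ∂κ := by
      intro v hv
      obtain ⟨C, hC0, -, hCb⟩ := hbdd _ hv
      have hz0 : (0 : Ω → ℝ) ≤ᵐ[κ] ⇑(C • oneL + v) := by
        filter_upwards [Lp.coeFn_add (C • oneL) v, Lp.coeFn_smul C oneL, hone, hCb]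
          with x ha hs h1 h2
        rw [Pi.zero_apply, ha, Pi.add_apply, hs, Pi.smul_apply, h1, smul_eq_mul, mul_one]
        linarith [(abs_le.1 h2).1]
      have hTz0 := hTpos _ hz0
      have hzmem : MemLp (⇑(C • oneL + v)) ∞ κ := by
        apply memLp_top_of_bound (Lp.aestronglyMeasurable _) (|C| + C)
        filter_upwards [Lp.coeFn_add (C • oneL) v, Lp.coeFn_smul C oneL, hone, hCb]
          with x ha hs h1 h2
        rw [ha, Pi.add_apply, hs, Pi.smul_apply, h1, smul_eq_mul, mul_one, Real.norm_eq_abs]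
        calc |C + v x| ≤ |C| + |v x| := abs_add_le _ _
          _ ≤ |C| + C := by linarith
      have hkey := h4 _ hzmem
      rw [hsn _ hTz0, hsn _ hz0] at hkey
      have hineq : ∫ x, (T (C • oneL + v)) x ∂κ ≤ ∫ x, (C • oneL + v) x ∂κ :=
        (ENNReal.ofReal_le_ofReal_iff (integral_nonneg_of_ae hz0)).1 hkey
      have eT : ∫ x, (T (C • oneL + v)) x ∂κ
          = (κ Set.univ).toReal * C + ∫ x, (T v) x ∂κ := by
        have he : T (C • oneL + v) = C • T oneL + T v := by rw [map_add, T.map_smul]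
        rw [he]
        calc ∫ x, (C • T oneL + T v) x ∂κ = ∫ x, (C + (T v) x) ∂κ := by
              apply integral_congr_ae
              filter_upwards [Lp.coeFn_add (C • T oneL) (T v), Lp.coeFn_smul C (T oneL), hT1']
                with x ha hs h1
              rw [ha, Pi.add_apply, hs, Pi.smul_apply, h1, smul_eq_mul, mul_one]
          _ = (κ Set.univ).toReal * C + ∫ x, (T v) x ∂κ := by
              rw [integral_add (integrable_const C) ((Lp.memLp (T v)).integrable one_le_two),
                integral_const, smul_eq_mul, measureReal_def]
      have ev : ∫ x, (C • oneL + v) x ∂κ = (κ Set.univ).toReal * C + ∫ x, v x ∂κ := by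
        calc ∫ x, (C • oneL + v) x ∂κ = ∫ x, (C + v x) ∂κ := by
              apply integral_congr_ae
              filter_upwards [Lp.coeFn_add (C • oneL) v, Lp.coeFn_smul C oneL, hone]
                with x ha hs h1
              rw [ha, Pi.add_apply, hs, Pi.smul_apply, h1, smul_eq_mul, mul_one]
          _ = (κ Set.univ).toReal * C + ∫ x, v x ∂κ := by
              rw [integral_add (integrable_const C) ((Lp.memLp v).integrable one_le_two),
                integral_const, smul_eq_mul, measureReal_def]
      rw [eT, ev] at hineq
      linarith
    -- for bounded elements, ∫ T v = ∫ v
    have hb2 : ∀ v : Lp ℝ 2 κ, MemLp (⇑v) ∞ κ → ∫ x, (T v) x ∂κ = ∫ x, v x ∂κ := by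
      intro v hv
      have h1 := hb v hv
      have hnegmem : MemLp (⇑(-v)) ∞ κ := by
        obtain ⟨C, -, -, hCb⟩ := hbdd _ hv
        apply memLp_top_of_bound (Lp.aestronglyMeasurable _) C
        filter_upwards [Lp.coeFn_neg v, hCb] with x hn hc
        rw [hn, Pi.neg_apply, Real.norm_eq_abs, abs_neg]
        exact hc
      have h2 := hb _ hnegmem
      have eTn : ∫ x, (T (-v)) x ∂κ = - ∫ x, (T v) x ∂κ := by
        rw [map_neg]
        calc ∫ x, (-(T v) : Lp ℝ 2 κ) x ∂κ = ∫ x, (-((T v) x)) ∂κ := by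
              apply integral_congr_ae
              filter_upwards [Lp.coeFn_neg (T v)] with x h
              rw [h, Pi.neg_apply]
          _ = - ∫ x, (T v) x ∂κ := integral_neg _
      have evn : ∫ x, (-v : Lp ℝ 2 κ) x ∂κ = - ∫ x, v x ∂κ := by
        calc ∫ x, (-v : Lp ℝ 2 κ) x ∂κ = ∫ x, (-(v x)) ∂κ := by
              apply integral_congr_ae
              filter_upwards [Lp.coeFn_neg v] with x h
              rw [h, Pi.neg_apply]
          _ = - ∫ x, v x ∂κ := integral_neg _
      rw [eTn, evn] at h2
      linarith
    -- the integral functional is bounded on L²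
    have hCS : ∀ f : Lp ℝ 2 κ, |∫ x, f x ∂κ| ≤ ‖f‖ * ‖oneL‖ := by
      intro f
      have h2 : (inner ℝ f oneL : ℝ) = ∫ x, f x ∂κ := by
        rw [L2.inner_def]
        apply integral_congr_ae
        filter_upwards [hone] with x ho
        rw [ho]
        simp [RCLike.inner_apply]
      rw [← h2]
      exact abs_real_inner_le_norm f oneL
    -- approximate u by simple functions
    have hdiff : ∀ ε : ℝ, 0 < ε → |∫ x, (T u) x ∂κ - ∫ x, u x ∂κ| ≤ ε := by
      intro ε hε
      set B : ℝ := (‖T‖ + 1) * ‖oneL‖ + 1 with hB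
      have hBpos : 0 < B := by positivity
      have hdense : DenseRange (Subtype.val : Lp.simpleFunc ℝ 2 κ → Lp ℝ 2 κ) :=
        Lp.simpleFunc.denseRange (by norm_num)
      obtain ⟨s, hs⟩ := hdense.exists_dist_lt u (show (0:ℝ) < ε / B by positivity)
      have hdist : ‖u - (↑s : Lp ℝ 2 κ)‖ < ε / B := by
        rwa [dist_eq_norm] at hs
      have hsmem : MemLp (⇑(↑s : Lp ℝ 2 κ)) ∞ κ := by
        obtain ⟨C, hC⟩ := (Lp.simpleFunc.toSimpleFunc s).exists_forall_norm_le
        apply memLp_top_of_bound (Lp.aestronglyMeasurable _) C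
        filter_upwards [Lp.simpleFunc.toSimpleFunc_eq_toFun s] with x hx
        rw [← hx]
        exact hC x
      have hseq := hb2 _ hsmem
      have e1 : ∫ x, (T u) x ∂κ - ∫ x, (T ↑s) x ∂κ = ∫ x, (T (u - ↑s)) x ∂κ := by
        rw [map_sub]
        have h3 : ∫ x, (T u - T ↑s : Lp ℝ 2 κ) x ∂κ = ∫ x, ((T u) x - (T ↑s) x) ∂κ := by
          apply integral_congr_ae
          filter_upwards [Lp.coeFn_sub (T u) (T ↑s)] with x h
          rw [h, Pi.sub_apply]
        rw [h3, integral_sub ((Lp.memLp _).integrable one_le_two)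
          ((Lp.memLp _).integrable one_le_two)]
      have e2 : ∫ x, u x ∂κ - ∫ x, (↑s : Lp ℝ 2 κ) x ∂κ = ∫ x, (u - ↑s : Lp ℝ 2 κ) x ∂κ := by
        have h3 : ∫ x, (u - ↑s : Lp ℝ 2 κ) x ∂κ = ∫ x, (u x - (↑s : Lp ℝ 2 κ) x) ∂κ := by
          apply integral_congr_ae
          filter_upwards [Lp.coeFn_sub u (↑s : Lp ℝ 2 κ)] with x h
          rw [h, Pi.sub_apply]
        rw [h3, integral_sub ((Lp.memLp _).integrable one_le_two)
          ((Lp.memLp _).integrable one_le_two)]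
      have hD : ∫ x, (T u) x ∂κ - ∫ x, u x ∂κ
          = ∫ x, (T (u - ↑s)) x ∂κ - ∫ x, (u - ↑s : Lp ℝ 2 κ) x ∂κ := by
        rw [← e1, ← e2, hseq]
        ring
      rw [hD]
      have b1 := hCS (T (u - ↑s))
      have b2 := hCS (u - ↑s)
      have hTn : ‖T (u - ↑s)‖ ≤ ‖T‖ * ‖u - ↑s‖ := T.le_opNorm _
      have hone0 : (0:ℝ) ≤ ‖oneL‖ := norm_nonneg _
      have hT0 : (0:ℝ) ≤ ‖T‖ := norm_nonneg _
      have hus0 : (0:ℝ) ≤ ‖u - (↑s : Lp ℝ 2 κ)‖ := norm_nonneg _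
      have habs2 : |∫ x, (T (u - ↑s)) x ∂κ - ∫ x, (u - ↑s : Lp ℝ 2 κ) x ∂κ|
          ≤ ‖u - (↑s : Lp ℝ 2 κ)‖ * ((‖T‖ + 1) * ‖oneL‖) := by
        calc |∫ x, (T (u - ↑s)) x ∂κ - ∫ x, (u - ↑s : Lp ℝ 2 κ) x ∂κ|
            ≤ |∫ x, (T (u - ↑s)) x ∂κ| + |∫ x, (u - ↑s : Lp ℝ 2 κ) x ∂κ| := by
              calc |∫ x, (T (u - ↑s)) x ∂κ - ∫ x, (u - ↑s : Lp ℝ 2 κ) x ∂κ|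
                  = |∫ x, (T (u - ↑s)) x ∂κ + -(∫ x, (u - ↑s : Lp ℝ 2 κ) x ∂κ)| := by
                    rw [sub_eq_add_neg]
                _ ≤ |∫ x, (T (u - ↑s)) x ∂κ| + |-(∫ x, (u - ↑s : Lp ℝ 2 κ) x ∂κ)| :=
                    abs_add_le _ _
                _ = |∫ x, (T (u - ↑s)) x ∂κ| + |∫ x, (u - ↑s : Lp ℝ 2 κ) x ∂κ| := by
                    rw [abs_neg]
          _ ≤ ‖T (u - ↑s)‖ * ‖oneL‖ + ‖u - (↑s : Lp ℝ 2 κ)‖ * ‖oneL‖ := add_le_add b1 b2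
          _ ≤ (‖T‖ * ‖u - (↑s : Lp ℝ 2 κ)‖) * ‖oneL‖ + ‖u - (↑s : Lp ℝ 2 κ)‖ * ‖oneL‖ := by
              have := mul_le_mul_of_nonneg_right hTn hone0
              linarith
          _ = ‖u - (↑s : Lp ℝ 2 κ)‖ * ((‖T‖ + 1) * ‖oneL‖) := by ring
      have hcoef : (‖T‖ + 1) * ‖oneL‖ ≤ B := by rw [hB]; linarith
      calc |∫ x, (T (u - ↑s)) x ∂κ - ∫ x, (u - ↑s : Lp ℝ 2 κ) x ∂κ|
          ≤ ‖u - (↑s : Lp ℝ 2 κ)‖ * ((‖T‖ + 1) * ‖oneL‖) := habs2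
        _ ≤ (ε / B) * B := by
            apply mul_le_mul hdist.le hcoef (by positivity) (by positivity)
        _ = ε := div_mul_cancel₀ ε hBpos.ne'
    have h0 : |∫ x, (T u) x ∂κ - ∫ x, u x ∂κ| ≤ 0 := by
      by_contra hc
      push_neg at hc
      have := hdiff (|∫ x, (T u) x ∂κ - ∫ x, u x ∂κ| / 2) (by linarith)
      linarith
    have h1 : |∫ x, (T u) x ∂κ - ∫ x, u x ∂κ| = 0 := le_antisymm h0 (abs_nonneg _)
    have := abs_eq_zero.1 h1
    linarith [this]
  tfae_finish
end

section
/- Let H be a real inner product space and T : H → H a continuous linear operator that is self-adjoint (⟨Tu, v⟩ = ⟨u, Tv⟩ for all u, v ∈ H), positive semi-definite (⟨Tu, u⟩ ≥ 0 for all u ∈ H), and contractive (‖Tv‖ ≤ ‖v‖ for all v ∈ H). Then T is ball-positive: ⟨Tu, u⟩ ≥ ‖Tu‖² for all u ∈ H. -/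
open RealInnerProductSpace

/-! Positivity of `T` at `u - T u` gives
`0 ≤ ⟪T u, u⟫ - 2 ‖T u‖² + ⟪T (T u), T u⟫`, and by Cauchy–Schwarz and contractivity
the last term is at most `‖T u‖²`. -/

theorem LinearMap.IsSymmetric.inner_map_sub_map_self {H : Type*} [NormedAddCommGroup H]
    [InnerProductSpace ℝ H] {T : H →ₗ[ℝ] H} (hT : T.IsSymmetric) (u : H) :
    ⟪T (u - T u), u - T u⟫ = ⟪T u, u⟫ - 2 * ‖T u‖ ^ 2 + ⟪T (T u), T u⟫ := by
  rw [map_sub, inner_sub_left, inner_sub_right, inner_sub_right, hT (T u) u,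
    real_inner_self_eq_norm_sq]
  ring

theorem real_inner_le_norm_sq_of_norm_le {H : Type*} [NormedAddCommGroup H]
    [InnerProductSpace ℝ H] {x v : H} (h : ‖x‖ ≤ ‖v‖) : ⟪x, v⟫ ≤ ‖v‖ ^ 2 :=
  calc ⟪x, v⟫ ≤ ‖x‖ * ‖v‖ := real_inner_le_norm x v
    _ ≤ ‖v‖ * ‖v‖ := by gcongr
    _ = ‖v‖ ^ 2 := (sq ‖v‖).symm

/-- a self-adjoint, positive semi-definite, contractive operator on a real
inner product space is ball-positive. -/
theorem ballPositive_of_symmetric_psd_contractive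
    {H : Type*} [NormedAddCommGroup H] [InnerProductSpace ℝ H]
    (T : H →L[ℝ] H)
    (hsa : ∀ u v : H, ⟪T u, v⟫ = ⟪u, T v⟫)
    (hpsd : ∀ u : H, 0 ≤ ⟪T u, u⟫)
    (hcontr : ∀ v : H, ‖T v‖ ≤ ‖v‖) :
    ∀ u : H, ‖T u‖ ^ 2 ≤ ⟪T u, u⟫ := by
  intro u
  have hexpand := LinearMap.IsSymmetric.inner_map_sub_map_self (T := (T : H →ₗ[ℝ] H)) hsa u
  have hpos := hpsd (u - T u)
  have hbound := real_inner_le_norm_sq_of_norm_le (hcontr (T u))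
  simp only [ContinuousLinearMap.coe_coe] at hexpand
  linarith
end

section
/- Every ball-positive averaging operator is conservative: let (Ω, κ) be a finite measure space and T an averaging operator on L²(κ) such that ∫ (Tu)·u dκ ≥ ∫ (Tu)² dκ for all u ∈ L²(κ;ℝ). Then ∫ Tu dκ = ∫ u dκ for all u ∈ L²(κ;ℝ). -/
open MeasureTheory ENNReal

lemma expand_int_mul {Ω : Type*} [MeasurableSpace Ω] (κ : Measure Ω) [IsFiniteMeasure κ]
    (f g : Ω → ℝ) (hf : Integrable f κ) (hg : Integrable g κ)
    (hfg : Integrable (fun x => f x * g x) κ) (t : ℝ) :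
    ∫ x, (1 + t * f x) * (1 + t * g x) ∂κ
      = (κ Set.univ).toReal + t * ∫ x, f x ∂κ + t * ∫ x, g x ∂κ
        + t ^ 2 * ∫ x, f x * g x ∂κ := by
  have h : ∀ x, (1 + t * f x) * (1 + t * g x)
      = 1 + (t * f x + (t * g x + t ^ 2 * (f x * g x))) := by intro x; ring
  simp_rw [h]
  have i3 : Integrable (fun x => t ^ 2 * (f x * g x)) κ := hfg.const_mul (t ^ 2)
  have i2 : Integrable (fun x => t * g x + t ^ 2 * (f x * g x)) κ :=
    (hg.const_mul t).add i3
  have i1 : Integrable (fun x => t * f x + (t * g x + t ^ 2 * (f x * g x))) κ :=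
    (hf.const_mul t).add i2
  rw [integral_add (integrable_const 1) i1,
    integral_add (hf.const_mul t) i2,
    integral_add (hg.const_mul t) i3,
    integral_const_mul, integral_const_mul, integral_const_mul, integral_const]
  simp only [smul_eq_mul, mul_one, measureReal_def]
  ring

/-- every ball-positive averaging operator is conservative. -/
theorem conservative_of_ballPositive_averaging
    {Ω : Type*} [MeasurableSpace Ω] (κ : Measure Ω) [IsFiniteMeasure κ]
    (T : Lp ℝ 2 κ →L[ℝ] Lp ℝ 2 κ)
    (hTbdd : ∀ u : Lp ℝ 2 κ, MemLp (⇑u) ∞ κ → MemLp (⇑(T u)) ∞ κ)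
    (hTpos : ∀ u : Lp ℝ 2 κ, (0 : Ω → ℝ) ≤ᵐ[κ] ⇑u → (0 : Ω → ℝ) ≤ᵐ[κ] ⇑(T u))
    (hT1 : ⇑(T ((memLp_const (1 : ℝ) : MemLp (fun _ : Ω => (1 : ℝ)) 2 κ).toLp _))
      =ᵐ[κ] fun _ => (1 : ℝ))
    (hball : ∀ u : Lp ℝ 2 κ, ∫ x, ((T u) x) ^ 2 ∂κ ≤ ∫ x, (T u) x * u x ∂κ) :
    ∀ u : Lp ℝ 2 κ, ∫ x, (T u) x ∂κ = ∫ x, u x ∂κ := by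
  intro u
  set e : Lp ℝ 2 κ :=
    (memLp_const (1 : ℝ) : MemLp (fun _ : Ω => (1 : ℝ)) 2 κ).toLp _ with he
  -- integrability facts
  have hint : ∀ f : Lp ℝ 2 κ, Integrable (⇑f) κ :=
    fun f => (Lp.memLp f).integrable (by norm_num)
  have hmul : ∀ f g : Lp ℝ 2 κ, Integrable (fun x => f x * g x) κ := by
    intro f g
    have := L2.integrable_inner (𝕜 := ℝ) g f
    simpa [RCLike.inner_apply] using this
  -- a.e. descriptions of e + t • u and T (e + t • u)
  have hv : ∀ t : ℝ, ⇑(e + t • u) =ᵐ[κ] fun x => 1 + t * u x := by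
    intro t
    filter_upwards [Lp.coeFn_add e (t • u), Lp.coeFn_smul t u,
      (memLp_const (1 : ℝ) : MemLp (fun _ : Ω => (1 : ℝ)) 2 κ).coeFn_toLp] with x h1 h2 h3
    rw [h1, Pi.add_apply, h2, Pi.smul_apply, he, h3]
    simp
  have hTv : ∀ t : ℝ, ⇑(T (e + t • u)) =ᵐ[κ] fun x => 1 + t * (T u) x := by
    intro t
    have hmap : T (e + t • u) = T e + t • T u := by rw [map_add, ContinuousLinearMap.map_smul]
    rw [hmap]
    filter_upwards [Lp.coeFn_add (T e) (t • T u), Lp.coeFn_smul t (T u), hT1] with x h1 h2 h3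
    rw [h1, Pi.add_apply, h2, Pi.smul_apply, h3]
    simp
  set A := ∫ x, (T u) x ∂κ with hA
  set B := ∫ x, u x ∂κ with hB
  set C := (∫ x, (T u) x * u x ∂κ) - ∫ x, ((T u) x) ^ 2 ∂κ with hC
  have hC0 : 0 ≤ C := by
    have := hball u
    simp only [hC]; linarith
  -- key inequality
  have key : ∀ t : ℝ, t * (A - B) ≤ t ^ 2 * C := by
    intro t
    have h1 : ∫ x, ((T (e + t • u)) x) ^ 2 ∂κ
        = (κ Set.univ).toReal + t * A + t * A + t ^ 2 * ∫ x, (T u) x * (T u) x ∂κ := by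
      rw [show (∫ x, ((T (e + t • u)) x) ^ 2 ∂κ)
          = ∫ x, (1 + t * (T u) x) * (1 + t * (T u) x) ∂κ from
        integral_congr_ae (by filter_upwards [hTv t] with x hx; rw [hx]; ring)]
      exact expand_int_mul κ _ _ (hint (T u)) (hint (T u)) (hmul (T u) (T u)) t
    have h2 : ∫ x, (T (e + t • u)) x * (e + t • u) x ∂κ
        = (κ Set.univ).toReal + t * A + t * B + t ^ 2 * ∫ x, (T u) x * u x ∂κ := by
      rw [show (∫ x, (T (e + t • u)) x * (e + t • u) x ∂κ)
          = ∫ x, (1 + t * (T u) x) * (1 + t * u x) ∂κ from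
        integral_congr_ae (by filter_upwards [hTv t, hv t] with x hx hy; rw [hx, hy])]
      exact expand_int_mul κ _ _ (hint (T u)) (hint u) (hmul (T u) u) t
    have h3 := hball (e + t • u)
    rw [h1, h2] at h3
    have h4 : (∫ x, (T u) x * u x ∂κ) - (∫ x, (T u) x * (T u) x ∂κ) = C := by
      simp only [hC]
      congr 1
      exact integral_congr_ae (Filter.Eventually.of_forall fun x => (pow_two ((T u) x)).symm)
    nlinarith [h3, h4]
  -- conclude A = B
  have hd1 : A - B ≤ 0 := by
    have : ∀ ε > (0 : ℝ), A - B ≤ 0 + ε := by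
      intro ε hε
      have ht : (0 : ℝ) < ε / (C + 1) := by positivity
      have := key (ε / (C + 1))
      have hle : (ε / (C + 1)) * (A - B) ≤ (ε / (C + 1)) ^ 2 * C := this
      have h5 : A - B ≤ (ε / (C + 1)) * C := by
        rw [show (ε / (C + 1)) ^ 2 * C = (ε / (C + 1)) * ((ε / (C + 1)) * C) by ring] at hle
        exact le_of_mul_le_mul_left hle ht
      have h6 : (ε / (C + 1)) * C ≤ ε := by
        rw [div_mul_eq_mul_div, div_le_iff₀ (by linarith)]
        nlinarith
      linarith
    linarith [le_of_forall_pos_le_add this]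
  have hd2 : B - A ≤ 0 := by
    have : ∀ ε > (0 : ℝ), B - A ≤ 0 + ε := by
      intro ε hε
      have ht : (0 : ℝ) < ε / (C + 1) := by positivity
      have := key (-(ε / (C + 1)))
      have hle : (ε / (C + 1)) * (B - A) ≤ (ε / (C + 1)) ^ 2 * C := by nlinarith
      have h5 : B - A ≤ (ε / (C + 1)) * C := by
        rw [show (ε / (C + 1)) ^ 2 * C = (ε / (C + 1)) * ((ε / (C + 1)) * C) by ring] at hle
        exact le_of_mul_le_mul_left hle ht
      have h6 : (ε / (C + 1)) * C ≤ ε := by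
        rw [div_mul_eq_mul_div, div_le_iff₀ (by linarith)]
        nlinarith
      linarith
    linarith [le_of_forall_pos_le_add this]
  linarith
end

section
/- Every ball-positive averaging model on a two-point set is symmetric: let A = (a_{ij}) be a 2×2 real matrix with nonnegative entries and row sums equal to 1 (right-stochastic), and let κ₁, κ₂ > 0. Suppose that for all (u₁, u₂) ∈ ℝ²: κ₁(a₁₁u₁ + a₁₂u₂)u₁ + κ₂(a₂₁u₁ + a₂₂u₂)u₂ ≥ κ₁(a₁₁u₁ + a₁₂u₂)² + κ₂(a₂₁u₁ + a₂₂u₂)². Then κ₁ a₁₂ = κ₂ a₂₁. -/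
/-!
Because `A` fixes the constant vector `1`, the quadratic form
`u ↦ (Au, u)_κ - (Au, Au)_κ`, nonnegative by ball-positivity, vanishes at `1`; hence its derivative
at `1` vanishes in every direction. In the direction `e_j` this derivative is `κ_j - (κA)_j`, so
`κ` is a stationary vector of `A`. For two states, stationarity `κ₁ = κ₁ a₁₁ + κ₂ a₂₁` is exactly
`κ₁ a₁₂ = κ₂ a₂₁`.
-/

open Matrix Finset

theorem eq_zero_of_forall_nonneg_mul_add_sq {b c : ℝ} (h : ∀ t : ℝ, 0 ≤ b * t + c * t ^ 2) :
    b = 0 := by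
  have hdisc : discrim c b 0 ≤ 0 := discrim_le_zero fun t => by linarith [h t]
  simp only [discrim, mul_zero, sub_zero] at hdisc
  exact pow_eq_zero_iff two_ne_zero |>.mp (le_antisymm hdisc (sq_nonneg b))

variable {ι : Type*} [Fintype ι]

def ballGap (A : Matrix ι ι ℝ) (κ u : ι → ℝ) : ℝ :=
  ∑ i, κ i * (A *ᵥ u) i * u i - ∑ i, κ i * (A *ᵥ u) i ^ 2

def BallPositive (A : Matrix ι ι ℝ) (κ : ι → ℝ) : Prop :=
  ∀ u : ι → ℝ, 0 ≤ ballGap A κ u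

theorem ballGap_one_add_smul {A : Matrix ι ι ℝ} (hA : A *ᵥ 1 = 1) (κ w : ι → ℝ) (t : ℝ) :
    ballGap A κ (1 + t • w) =
      (∑ i, κ i * (w i - (A *ᵥ w) i)) * t +
        (∑ i, κ i * (A *ᵥ w) i * (w i - (A *ᵥ w) i)) * t ^ 2 := by
  simp only [ballGap, mulVec_add, mulVec_smul, hA, Pi.add_apply, Pi.smul_apply, Pi.one_apply,
    smul_eq_mul, ← sum_sub_distrib, sum_mul, ← sum_add_distrib]
  exact sum_congr rfl fun i _ => by ring

theorem BallPositive.vecMul_eq [DecidableEq ι] {A : Matrix ι ι ℝ} {κ : ι → ℝ}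
    (hA : A *ᵥ 1 = 1) (hball : BallPositive A κ) : κ ᵥ* A = κ := by
  funext j
  have hderiv := eq_zero_of_forall_nonneg_mul_add_sq fun t => by
    rw [← ballGap_one_add_smul hA κ (Pi.single j 1) t]
    exact hball _
  simp only [mulVec_single_one, mul_sub, sum_sub_distrib, sub_eq_zero] at hderiv
  simpa [vecMul, dotProduct, Pi.single_apply, eq_comm] using hderiv

theorem two_point_ballPositive_symmetric_general
    (a11 a12 a21 a22 κ1 κ2 : ℝ)
    (hrow1 : a11 + a12 = 1) (hrow2 : a21 + a22 = 1)
    (hball : ∀ u1 u2 : ℝ,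
      κ1 * (a11 * u1 + a12 * u2) ^ 2 + κ2 * (a21 * u1 + a22 * u2) ^ 2 ≤
        κ1 * (a11 * u1 + a12 * u2) * u1 + κ2 * (a21 * u1 + a22 * u2) * u2) :
    κ1 * a12 = κ2 * a21 := by
  have hA : !![a11, a12; a21, a22] *ᵥ 1 = 1 := by
    ext i; fin_cases i <;> simp [mulVec, dotProduct, Fin.sum_univ_two, hrow1, hrow2]
  have hpos : BallPositive !![a11, a12; a21, a22] ![κ1, κ2] := fun u => by
    simpa [ballGap, mulVec, dotProduct, Fin.sum_univ_two] using hball (u 0) (u 1)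
  have hstat := congrFun (hpos.vecMul_eq hA) 0
  simp only [vecMul, dotProduct, of_apply, cons_val', cons_val_zero, cons_val_one,
    cons_val_fin_one, Fin.sum_univ_two] at hstat
  linear_combination κ1 * hrow1 - hstat

/-- every ball-positive averaging model on a two-point set is symmetric. -/
theorem two_point_ballPositive_symmetric
    (a11 a12 a21 a22 κ1 κ2 : ℝ)
    (h11 : 0 ≤ a11) (h12 : 0 ≤ a12) (h21 : 0 ≤ a21) (h22 : 0 ≤ a22)
    (hrow1 : a11 + a12 = 1) (hrow2 : a21 + a22 = 1)
    (hκ1 : 0 < κ1) (hκ2 : 0 < κ2)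
    (hball : ∀ u1 u2 : ℝ,
      κ1 * (a11 * u1 + a12 * u2) ^ 2 + κ2 * (a21 * u1 + a22 * u2) ^ 2 ≤
        κ1 * (a11 * u1 + a12 * u2) * u1 + κ2 * (a21 * u1 + a22 * u2) * u2) :
    κ1 * a12 = κ2 * a21 :=
  two_point_ballPositive_symmetric_general a11 a12 a21 a22 κ1 κ2 hrow1 hrow2 hball
end

section
/- Ball-positivity does not imply symmetry: there exists a 3×3 real matrix A with nonnegative entries, all row sums equal to 1 and all column sums equal to 1 (doubly stochastic), such that A is not symmetric (A ≠ Aᵀ), yet A is ball-positive with respect to the standard inner product on ℝ³: ⟨Au, u⟩ ≥ ‖Au‖² for all u ∈ ℝ³. -/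
/-!
Take `A = (1 + P) / 2` with `P` the permutation matrix of the cyclic shift of `Fin 3`. It is
doubly stochastic as a midpoint of two permutation matrices, and it is not symmetric because
`Pᵀ = P⁻¹ ≠ P`. Since `P` is orthogonal, `‖u + Pu‖² = 2‖u‖² + 2⟨Pu, u⟩ = 2⟨u + Pu, u⟩`, so
`‖Au‖² = ⟨Au, u⟩` holds with equality for every `u`.
-/

open Matrix

namespace Matrix

theorem add_dotProduct_add_eq_two_mul_add_dotProduct {n R : Type*} [Fintype n] [CommRing R]
    {u v : n → R} (h : v ⬝ᵥ v = u ⬝ᵥ u) : (u + v) ⬝ᵥ (u + v) = 2 * ((u + v) ⬝ᵥ u) := by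
  simp only [add_dotProduct, dotProduct_add, h, dotProduct_comm v u]
  ring

variable {n : Type*} [DecidableEq n]

/-- Transition matrix of the lazy random walk along `σ`. -/
noncomputable def lazyPermMatrix (σ : Equiv.Perm n) : Matrix n n ℝ :=
  (2⁻¹ : ℝ) • (1 + σ.permMatrix ℝ)

theorem transpose_lazyPermMatrix (σ : Equiv.Perm n) :
    (lazyPermMatrix σ)ᵀ = lazyPermMatrix σ⁻¹ := by
  simp [lazyPermMatrix]

theorem lazyPermMatrix_injective : Function.Injective (lazyPermMatrix (n := n)) := by
  intro σ τ h
  have hP : σ.permMatrix ℝ = τ.permMatrix ℝ :=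
    add_left_cancel (smul_right_injective _ (by norm_num : (2⁻¹ : ℝ) ≠ 0) h)
  have hpe : σ.toPEquiv = τ.toPEquiv := PEquiv.toMatrix_injective hP
  exact Equiv.ext fun x => Option.some_injective _ <| by
    rw [← Equiv.toPEquiv_apply, ← Equiv.toPEquiv_apply, hpe]

variable [Fintype n]

theorem lazyPermMatrix_mem_doublyStochastic (σ : Equiv.Perm n) :
    lazyPermMatrix σ ∈ doublyStochastic ℝ n := by
  have hmid := convex_doublyStochastic (doublyStochastic ℝ n).one_mem
    (permMatrix_mem_doublyStochastic (σ := σ)) (by norm_num : (0 : ℝ) ≤ 2⁻¹)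
    (by norm_num : (0 : ℝ) ≤ 2⁻¹) (by norm_num)
  rwa [← smul_add] at hmid

theorem lazyPermMatrix_mulVec_dotProduct_self (σ : Equiv.Perm n) (u : n → ℝ) :
    lazyPermMatrix σ *ᵥ u ⬝ᵥ lazyPermMatrix σ *ᵥ u = lazyPermMatrix σ *ᵥ u ⬝ᵥ u := by
  have hperm : u ∘ σ ⬝ᵥ u ∘ σ = u ⬝ᵥ u := comp_equiv_dotProduct_comp_equiv u u σ
  have key := add_dotProduct_add_eq_two_mul_add_dotProduct hperm
  simp only [lazyPermMatrix, smul_mulVec, add_mulVec, one_mulVec, permMatrix_mulVec,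
    smul_dotProduct, dotProduct_smul, key, smul_eq_mul]
  ring

end Matrix

/-- ball-positivity does not imply symmetry: there is a non-symmetric doubly
stochastic `3 × 3` matrix that is ball-positive for the standard inner product on `ℝ³`. -/
theorem exists_ballPositive_not_symmetric :
    ∃ A : Matrix (Fin 3) (Fin 3) ℝ,
      (∀ i j, 0 ≤ A i j) ∧
      (∀ i, ∑ j, A i j = 1) ∧
      (∀ j, ∑ i, A i j = 1) ∧
      A ≠ A.transpose ∧
      (∀ u : Fin 3 → ℝ, ∑ i, (A.mulVec u i) ^ 2 ≤ ∑ i, A.mulVec u i * u i) := by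
  obtain ⟨hnonneg, hrow, hcol⟩ :=
    mem_doublyStochastic_iff_sum.mp (lazyPermMatrix_mem_doublyStochastic (finRotate 3))
  refine ⟨lazyPermMatrix (finRotate 3), hnonneg, hrow, hcol, ?_, fun u => ?_⟩
  · rw [transpose_lazyPermMatrix, lazyPermMatrix_injective.ne_iff]
    decide
  · simp only [sq]
    exact (lazyPermMatrix_mulVec_dotProduct_self (finRotate 3) u).le
end

section
/- Chain reduction lemma: let ρ be a Borel probability measure on ℝⁿ, r > 0, and set Θ = inf{ρ(B_r(x)) : x ∈ supp ρ} and assume Θ > 0. Suppose x', x'' ∈ supp ρ are connected by a chain x' = x₁, x₂, …, x_K = x'' with all x_i ∈ supp ρ and |x_i − x_{i+1}| < r. Then there is a chain y₁ = x', y₂, …, y_J = x'' with all y_j ∈ supp ρ, |y_j − y_{j+1}| < 3r for all j, and such that the open balls B_r(y_j), 1 ≤ j ≤ J−1, are pairwise disjoint; consequently J ≤ 1 + 1/Θ ≤ 2/Θ. Moreover, if additionally supp ρ is contained in a ball of radius D, then J ≤ 1 + ((D + 2r)/r)ⁿ, a bound independent of Θ. -/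
open MeasureTheory Metric ENNReal

/-- The support of a measure on a metric space: points all of whose neighborhoods have
positive measure. -/
def msupp {E : Type*} [MeasurableSpace E] [PseudoMetricSpace E] (ρ : Measure E) : Set E :=
  {x | ∀ ε > 0, 0 < ρ (ball x ε)}

theorem chain_aux {E : Type*} [MetricSpace E] (r : ℝ) (hr : 0 < r) :
    ∀ K : ℕ, ∀ x : ℕ → E, 1 ≤ K →
    (∀ i, i + 1 < K → dist (x i) (x (i + 1)) < r) →
    ∃ (J : ℕ) (y : ℕ → E), 1 ≤ J ∧ y 0 = x 0 ∧ y (J - 1) = x (K - 1) ∧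
      (∀ j < J, ∃ i < K, y j = x i) ∧
      (∀ j, j + 1 < J → dist (y j) (y (j + 1)) < 3 * r) ∧
      (∀ j k, j + 1 < J → k + 1 < J → j ≠ k → 2 * r ≤ dist (y j) (y k)) := by
  intro K
  induction K using Nat.strong_induction_on with
  | _ K IH =>
  intro x hK hchain
  by_cases hfar : dist (x 0) (x (K - 1)) < 2 * r
  · refine ⟨2, fun j => if j = 0 then x 0 else x (K - 1), by norm_num, by simp, by simp, ?_, ?_, ?_⟩
    · intro j hj
      rcases eq_or_ne j 0 with h | h
      · exact ⟨0, hK, by simp [h]⟩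
      · exact ⟨K - 1, Nat.sub_lt hK one_pos, by simp [h]⟩
    · intro j hj
      have : j = 0 := by omega
      subst this
      simpa using hfar.trans_le (by linarith)
    · intro j k hj hk hjk
      omega
  · push_neg at hfar
    classical
    set S : Finset ℕ := (Finset.range K).filter (fun i => dist (x i) (x 0) < 2 * r) with hS
    have h0S : 0 ∈ S := by
      refine Finset.mem_filter.2 ⟨Finset.mem_range.2 (by omega), ?_⟩
      simp only [dist_self]
      linarith
    have hSne : S.Nonempty := ⟨0, h0S⟩
    set m := S.max' hSne with hm
    have hmS : m ∈ S := S.max'_mem hSne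
    have hmK : m < K := (Finset.mem_filter.1 hmS).1 |> Finset.mem_range.1
    have hmdist : dist (x m) (x 0) < 2 * r := (Finset.mem_filter.1 hmS).2
    have hmax : ∀ i, m < i → i < K → 2 * r ≤ dist (x i) (x 0) := by
      intro i hmi hiK
      by_contra h
      push_neg at h
      exact absurd (S.le_max' i (Finset.mem_filter.2 ⟨Finset.mem_range.2 hiK, h⟩)) (by omega)
    have hmK1 : m < K - 1 := by
      rcases Nat.lt_or_ge m (K - 1) with h | h
      · exact h
      · exfalso
        have : m = K - 1 := by omega
        rw [this, dist_comm] at hmdist; linarith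
    -- subchain from m+1
    set K' := K - 1 - m with hK'
    have hK'1 : 1 ≤ K' := by omega
    have hK'K : K' < K := by omega
    obtain ⟨J', y', hJ'1, hy'0, hy'last, hy'mem, hy'chain, hy'sep⟩ :=
      IH K' hK'K (fun i => x (m + 1 + i)) hK'1
        (fun i hi => hchain (m + 1 + i) (by omega))
    have hy'far : ∀ j < J', 2 * r ≤ dist (x 0) (y' j) := by
      intro j hj
      obtain ⟨i, hi, hyi⟩ := hy'mem j hj
      rw [hyi, dist_comm]
      exact hmax _ (by omega) (by omega)
    refine ⟨J' + 1, fun j => if j = 0 then x 0 else y' (j - 1), by omega, by simp, ?_, ?_, ?_, ?_⟩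
    · show (if J' + 1 - 1 = 0 then x 0 else y' (J' + 1 - 1 - 1)) = x (K - 1)
      rw [if_neg (by omega)]
      have h2 : J' + 1 - 1 - 1 = J' - 1 := by omega
      rw [h2, hy'last]
      congr 1
      omega
    · intro j hj
      rcases eq_or_ne j 0 with h | h
      · exact ⟨0, by omega, by simp [h]⟩
      · obtain ⟨i, hi, hyi⟩ := hy'mem (j - 1) (by omega)
        exact ⟨m + 1 + i, by omega, by simp [h, hyi]⟩
    · intro j hj
      rcases eq_or_ne j 0 with h | h
      · subst h
        simp only [if_pos rfl, if_neg (by omega : (0:ℕ) + 1 ≠ 0), Nat.add_sub_cancel]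
        rw [hy'0]
        calc dist (x 0) (x (m + 1 + 0)) ≤ dist (x 0) (x m) + dist (x m) (x (m + 1 + 0)) :=
              dist_triangle _ _ _
          _ < 2 * r + r := by
              have h1 := hchain m (by omega)
              rw [dist_comm] at hmdist
              have : m + 1 + 0 = m + 1 := by omega
              rw [this]
              linarith
          _ = 3 * r := by ring
      · simp only [if_neg h, if_neg (by omega : j + 1 ≠ 0)]
        have : j + 1 - 1 = (j - 1) + 1 := by omega
        rw [this]
        exact hy'chain (j - 1) (by omega)
    · intro j k hj hk hjk
      rcases eq_or_ne j 0 with h | h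
      · subst h
        simp only [if_pos rfl, if_neg (Ne.symm hjk)]
        exact hy'far (k - 1) (by omega)
      · rcases eq_or_ne k 0 with h' | h'
        · subst h'
          simp only [if_pos rfl, if_neg h]
          rw [dist_comm]
          exact hy'far (j - 1) (by omega)
        · simp only [if_neg h, if_neg h']
          exact hy'sep (j - 1) (k - 1) (by omega) (by omega) (by omega)

/-- chain reduction lemma: an `r`-chain in the support of `ρ` can be replaced
by a `3r`-chain whose balls (except around the last point) are pairwise disjoint; hence the
number of links is at most `1 + 1/Θ ≤ 2/Θ`, and for flocks of bounded diameter it admits a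
volume bound independent of the thickness `Θ`. -/
theorem chain_reduction
    (n : ℕ) (ρ : Measure (EuclideanSpace ℝ (Fin n))) [IsProbabilityMeasure ρ]
    (r : ℝ) (hr : 0 < r)
    (Θ : ℝ≥0∞) (hΘdef : Θ = ⨅ x ∈ msupp ρ, ρ (ball x r)) (hΘ : 0 < Θ)
    (x' x'' : EuclideanSpace ℝ (Fin n)) (K : ℕ) (hK : 1 ≤ K)
    (x : ℕ → EuclideanSpace ℝ (Fin n))
    (hx0 : x 0 = x') (hxK : x (K - 1) = x'')
    (hxsupp : ∀ i < K, x i ∈ msupp ρ)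
    (hxchain : ∀ i, i + 1 < K → dist (x i) (x (i + 1)) < r) :
    ∃ (J : ℕ) (y : ℕ → EuclideanSpace ℝ (Fin n)),
      1 ≤ J ∧ y 0 = x' ∧ y (J - 1) = x'' ∧
      (∀ j < J, y j ∈ msupp ρ) ∧
      (∀ j, j + 1 < J → dist (y j) (y (j + 1)) < 3 * r) ∧
      (∀ j k, j + 1 < J → k + 1 < J → j ≠ k →
        Disjoint (ball (y j) r) (ball (y k) r)) ∧
      (J : ℝ≥0∞) ≤ 1 + Θ⁻¹ ∧ (J : ℝ≥0∞) ≤ 2 / Θ ∧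
      (∀ (z : EuclideanSpace ℝ (Fin n)) (D : ℝ), 0 ≤ D →
        msupp ρ ⊆ closedBall z D → (J : ℝ) ≤ 1 + ((D + 2 * r) / r) ^ n) := by
  obtain ⟨J, y, hJ1, hy0, hylast, hymem, hychain, hysep⟩ := chain_aux r hr K x hK hxchain
  have hsuppy : ∀ j < J, y j ∈ msupp ρ := by
    intro j hj
    obtain ⟨i, hi, he⟩ := hymem j hj
    rw [he]; exact hxsupp i hi
  have hdisj : ∀ j k, j + 1 < J → k + 1 < J → j ≠ k →
      Disjoint (ball (y j) r) (ball (y k) r) := by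
    intro j k hj hk hjk
    exact ball_disjoint_ball (by linarith [hysep j k hj hk hjk])
  -- counting bound
  have hΘle : ∀ j < J, Θ ≤ ρ (ball (y j) r) := by
    intro j hj
    rw [hΘdef]
    exact iInf₂_le (y j) (hsuppy j hj)
  have hpd : (↑(Finset.range (J - 1)) : Set ℕ).PairwiseDisjoint (fun j => ball (y j) r) := by
    intro j hj k hk hjk
    simp only [Finset.coe_range, Set.mem_Iio] at hj hk
    exact hdisj j k (by omega) (by omega) hjk
  have hsum : ∑ j ∈ Finset.range (J - 1), ρ (ball (y j) r) ≤ 1 := by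
    rw [← measure_biUnion_finset hpd (fun j _ => measurableSet_ball)]
    exact prob_le_one
  have hcard : ((J - 1 : ℕ) : ℝ≥0∞) * Θ ≤ 1 := by
    calc ((J - 1 : ℕ) : ℝ≥0∞) * Θ = (Finset.range (J - 1)).card • Θ := by
          rw [Finset.card_range, nsmul_eq_mul]
      _ ≤ ∑ j ∈ Finset.range (J - 1), ρ (ball (y j) r) :=
          Finset.card_nsmul_le_sum _ _ _ (fun j hj =>
            hΘle j (by have := Finset.mem_range.1 hj; omega))
      _ ≤ 1 := hsum
  have hJm1 : ((J - 1 : ℕ) : ℝ≥0∞) ≤ Θ⁻¹ := ENNReal.le_inv_iff_mul_le.2 hcard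
  have hJcast : (J : ℝ≥0∞) = ((J - 1 : ℕ) : ℝ≥0∞) + 1 := by
    have : J = (J - 1) + 1 := by omega
    rw [this]; push_cast; ring_nf
  have hbound1 : (J : ℝ≥0∞) ≤ 1 + Θ⁻¹ := by
    rw [hJcast, add_comm]
    exact add_le_add_right hJm1 1
  have hΘ1 : Θ ≤ 1 := (hΘle 0 hJ1).trans prob_le_one
  have hbound2 : (J : ℝ≥0∞) ≤ 2 / Θ := by
    calc (J : ℝ≥0∞) ≤ 1 + Θ⁻¹ := hbound1
      _ ≤ Θ⁻¹ + Θ⁻¹ := add_le_add_left (ENNReal.one_le_inv.2 hΘ1) _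
      _ = 2 / Θ := by rw [ENNReal.div_eq_inv_mul, mul_two]
  refine ⟨J, y, hJ1, hy0 ▸ hx0 ▸ rfl, hylast ▸ hxK ▸ rfl, hsuppy, hychain, hdisj,
    hbound1, hbound2, ?_⟩
  -- volume bound
  intro z D hD hsub
  rcases Nat.eq_zero_or_pos n with hn | hn
  · subst hn
    haveI : Subsingleton (EuclideanSpace ℝ (Fin 0)) := ⟨fun a b => PiLp.ext fun i => i.elim0⟩
    have hJ2 : J ≤ 2 := by
      by_contra h
      push_neg at h
      have hd := hdisj 0 1 (by omega) (by omega) (by omega)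
      have h01 : y 1 = y 0 := Subsingleton.elim _ _
      rw [h01] at hd
      exact (Set.disjoint_left.1 hd (mem_ball_self hr)) (mem_ball_self hr)
    have h2 : (J : ℝ) ≤ 2 := by exact_mod_cast hJ2
    rw [pow_zero]
    linarith
  · haveI : Nontrivial (EuclideanSpace ℝ (Fin n)) :=
      Module.nontrivial_of_finrank_pos (R := ℝ) (by rw [finrank_euclideanSpace_fin]; omega)
    set μ := (volume : Measure (EuclideanSpace ℝ (Fin n))) with hμ
    have hballsub : ∀ j < J - 1, ball (y j) r ⊆ closedBall z (D + 2 * r) := by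
      intro j hj w hw
      have hy : y j ∈ closedBall z D := hsub (hsuppy j (by omega))
      rw [mem_closedBall] at hy ⊢
      rw [mem_ball] at hw
      calc dist w z ≤ dist w (y j) + dist (y j) z := dist_triangle _ _ _
        _ ≤ D + 2 * r := by linarith
    have hμball : ∀ w : EuclideanSpace ℝ (Fin n),
        μ (ball w r) = ENNReal.ofReal (r ^ n) * μ (ball 0 1) := by
      intro w
      rw [Measure.addHaar_ball μ w hr.le, finrank_euclideanSpace_fin]
    have hμcb : μ (closedBall z (D + 2 * r)) =
        ENNReal.ofReal ((D + 2 * r) ^ n) * μ (ball 0 1) := by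
      rw [Measure.addHaar_closedBall μ z (by linarith), finrank_euclideanSpace_fin]
    have hsum2 : ((J - 1 : ℕ) : ℝ≥0∞) * (ENNReal.ofReal (r ^ n) * μ (ball 0 1))
        ≤ ENNReal.ofReal ((D + 2 * r) ^ n) * μ (ball 0 1) := by
      calc ((J - 1 : ℕ) : ℝ≥0∞) * (ENNReal.ofReal (r ^ n) * μ (ball 0 1))
          = ∑ j ∈ Finset.range (J - 1), μ (ball (y j) r) := by
            rw [Finset.sum_congr rfl (fun j _ => hμball (y j)), Finset.sum_const,
              Finset.card_range, nsmul_eq_mul]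
        _ = μ (⋃ j ∈ Finset.range (J - 1), ball (y j) r) :=
            (measure_biUnion_finset hpd (fun j _ => measurableSet_ball)).symm
        _ ≤ μ (closedBall z (D + 2 * r)) := by
            apply measure_mono
            intro w hw
            simp only [Set.mem_iUnion, Finset.mem_range] at hw
            obtain ⟨j, hj, hwj⟩ := hw
            exact hballsub j hj hwj
        _ = ENNReal.ofReal ((D + 2 * r) ^ n) * μ (ball 0 1) := hμcb
    have hb0 : μ (ball (0 : EuclideanSpace ℝ (Fin n)) 1) ≠ 0 :=
      (measure_ball_pos μ 0 one_pos).ne'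
    have hbt : μ (ball (0 : EuclideanSpace ℝ (Fin n)) 1) ≠ ⊤ :=
      measure_ball_lt_top.ne
    have hcanc : ((J - 1 : ℕ) : ℝ≥0∞) * ENNReal.ofReal (r ^ n)
        ≤ ENNReal.ofReal ((D + 2 * r) ^ n) := by
      rw [← ENNReal.mul_le_mul_iff_left hb0 hbt, mul_assoc]
      exact hsum2
    have hreal : ((J - 1 : ℕ) : ℝ) * r ^ n ≤ (D + 2 * r) ^ n := by
      have := hcanc
      rw [← ENNReal.ofReal_natCast, ← ENNReal.ofReal_mul (by positivity)] at this
      exact (ENNReal.ofReal_le_ofReal_iff (by positivity)).1 this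
    have hdiv : ((J - 1 : ℕ) : ℝ) ≤ ((D + 2 * r) / r) ^ n := by
      rw [div_pow, le_div_iff₀ (by positivity)]
      exact hreal
    have hJr : (J : ℝ) = ((J - 1 : ℕ) : ℝ) + 1 := by
      have : J = (J - 1) + 1 := by omega
      nth_rewrite 1 [this]
      push_cast
      ring
    rw [hJr]
    linarith
end

section
/- Let 0 < r < R, 0 < c ≤ C, and let φ : ℝⁿ → [0,∞) be measurable with c·1_{B_r(0)}(x) ≤ φ(x) ≤ C·1_{B_R(0)}(x) for all x. Let 0 ≤ β ≤ 1. Then there exists a constant C' depending only on n, r, R, c, C, β such that for every Borel probability measure ρ on ℝⁿ and every x ∈ ℝⁿ: ∫ φ(x−y) (ρ_φ(y))^{β−1} dρ(y) ≤ C' (ρ_φ(x))^β, where ρ_φ(y) = ∫ φ(y−z) dρ(z), with the convention that the integrand vanishes on the ρ-null set where ρ_φ(y) = 0. -/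
open MeasureTheory Metric
open scoped ENNReal

/-- the kernel bound `(φ(x-·) , ρ_φ^{β-1})`-estimate: for a kernel comparable to
indicators of balls and `0 ≤ β ≤ 1`, one has
`∫ φ(x-y) ρ_φ(y)^{β-1} dρ(y) ≤ C' ρ_φ(x)^β` uniformly in the probability measure `ρ`. -/
theorem kernel_beta_estimate
    (n : ℕ) (r R c C : ℝ) (hr : 0 < r) (hrR : r < R) (hc : 0 < c) (hcC : c ≤ C)
    (φ : EuclideanSpace ℝ (Fin n) → ℝ) (hφm : Measurable φ)
    (hφl : ∀ x, c * (ball (0 : EuclideanSpace ℝ (Fin n)) r).indicator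
      (fun _ => (1 : ℝ)) x ≤ φ x)
    (hφu : ∀ x, φ x ≤ C * (ball (0 : EuclideanSpace ℝ (Fin n)) R).indicator
      (fun _ => (1 : ℝ)) x)
    (β : ℝ) (hβ0 : 0 ≤ β) (hβ1 : β ≤ 1) :
    ∃ C' : ℝ, 0 < C' ∧
      ∀ ρ : Measure (EuclideanSpace ℝ (Fin n)), IsProbabilityMeasure ρ →
        ∀ x, ∫ y, φ (x - y) * (∫ z, φ (y - z) ∂ρ) ^ (β - 1) ∂ρ ≤
          C' * (∫ z, φ (x - z) ∂ρ) ^ β := by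
  classical
  have hC : 0 < C := lt_of_lt_of_le hc hcC
  have hφ0 : ∀ w, 0 ≤ φ w := by
    intro w
    refine le_trans ?_ (hφl w)
    exact mul_nonneg hc.le (Set.indicator_nonneg (fun _ _ => zero_le_one) w)
  -- finite cover of the ball of radius R by balls of radius r/2
  obtain ⟨s, hs⟩ : ∃ s : Finset (EuclideanSpace ℝ (Fin n)),
      closedBall (0 : (EuclideanSpace ℝ (Fin n))) R ⊆ ⋃ i ∈ s, ball i (r / 2) := by
    have hcomp : IsCompact (closedBall (0 : (EuclideanSpace ℝ (Fin n))) R) := isCompact_closedBall _ _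
    exact hcomp.elim_finite_subcover (fun i => ball i (r / 2)) (fun i => isOpen_ball)
      (fun y _ => Set.mem_iUnion.2 ⟨y, mem_ball_self (by linarith)⟩)
  set K : ℝ := C / c * s.card with hK_def
  refine ⟨max 1 K, lt_of_lt_of_le one_pos (le_max_left _ _), ?_⟩
  set C' : ℝ := max 1 K with hC'_def
  have hC'1 : (1 : ℝ) ≤ C' := le_max_left _ _
  have hKC' : K ≤ C' := le_max_right _ _
  have hC'0 : (0 : ℝ) ≤ C' := by linarith
  intro ρ hρ x
  set g : (EuclideanSpace ℝ (Fin n)) → ℝ≥0∞ := fun w => ENNReal.ofReal (φ w) with hg_def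
  set L : (EuclideanSpace ℝ (Fin n)) → ℝ≥0∞ := fun y => ∫⁻ z, g (y - z) ∂ρ with hL_def
  have hgm : Measurable g := hφm.ennreal_ofReal
  have hLm : Measurable L := by
    apply Measurable.lintegral_prod_right (f := fun y z => g (y - z))
    exact hgm.comp (measurable_fst.sub measurable_snd)
  have hgC : ∀ w, g w ≤ ENNReal.ofReal C := by
    intro w
    apply ENNReal.ofReal_le_ofReal
    refine (hφu w).trans ?_
    by_cases h : w ∈ ball (0 : (EuclideanSpace ℝ (Fin n))) R
    · simp [Set.indicator_of_mem h]
    · simp [Set.indicator_of_notMem h, hC.le]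
  have hLtop : ∀ y, L y ≤ ENNReal.ofReal C := by
    intro y
    calc L y ≤ ∫⁻ _, ENNReal.ofReal C ∂ρ := lintegral_mono fun z => hgC _
      _ = ENNReal.ofReal C := by simp
  have hLne : ∀ y, L y ≠ ⊤ := fun y =>
    ne_top_of_le_ne_top ENNReal.ofReal_ne_top (hLtop y)
  have hcne : ENNReal.ofReal c ≠ 0 := (ENNReal.ofReal_pos.mpr hc).ne'
  -- lower bound for L
  have hLlb : ∀ y, ENNReal.ofReal c * ρ (ball y r) ≤ L y := by
    intro y
    have hpt : ∀ z, (ball y r).indicator (fun _ => ENNReal.ofReal c) z ≤ g (y - z) := by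
      intro z
      by_cases hz : z ∈ ball y r
      · rw [Set.indicator_of_mem hz]
        apply ENNReal.ofReal_le_ofReal
        have h1 : y - z ∈ ball (0 : (EuclideanSpace ℝ (Fin n))) r := by
          rw [mem_ball_zero_iff]
          have := mem_ball.mp hz
          rwa [dist_eq_norm, norm_sub_rev] at this
        have := hφl (y - z)
        rwa [Set.indicator_of_mem h1, mul_one] at this
      · simp [Set.indicator_of_notMem hz]
    calc ENNReal.ofReal c * ρ (ball y r)
        = ∫⁻ z, (ball y r).indicator (fun _ => ENNReal.ofReal c) z ∂ρ := by
          rw [lintegral_indicator measurableSet_ball, setLIntegral_const]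
      _ ≤ L y := lintegral_mono hpt
  -- a.e. positivity of L
  have hLpos : ∀ᵐ y ∂ρ, L y ≠ 0 := by
    have hnull : ρ {y : (EuclideanSpace ℝ (Fin n)) | ρ (ball y r) = 0} = 0 := by
      apply measure_null_of_locally_null
      intro y hy
      exact ⟨ball y r, mem_nhdsWithin_of_mem_nhds (ball_mem_nhds y hr), hy⟩
    rw [ae_iff]
    refine measure_mono_null ?_ hnull
    intro y hy
    simp only [Set.mem_setOf_eq, not_not] at hy ⊢
    have h1 := hLlb y
    rw [hy, le_zero_iff] at h1
    rcases mul_eq_zero.mp h1 with h | h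
    · exact absurd h hcne
    · exact h
  -- the key `β = 0` bound
  have hK' : (∫⁻ y, g (x - y) * (L y)⁻¹ ∂ρ) ≤ ENNReal.ofReal C' := by
    have hmem : ∀ y : (EuclideanSpace ℝ (Fin n)), y ∈ ball x R ↔ x - y ∈ ball (0 : (EuclideanSpace ℝ (Fin n))) R := by
      intro y
      rw [mem_ball, mem_ball_zero_iff, dist_eq_norm, norm_sub_rev]
    have step1 : ∀ y, g (x - y) * (L y)⁻¹ ≤
        (ball x R).indicator
          (fun y => ENNReal.ofReal C * (ENNReal.ofReal c * ρ (ball y r))⁻¹) y := by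
      intro y
      by_cases hy : y ∈ ball x R
      · rw [Set.indicator_of_mem hy]
        exact mul_le_mul' (hgC _) (ENNReal.inv_le_inv' (hLlb y))
      · rw [Set.indicator_of_notMem hy]
        have h0 : φ (x - y) ≤ 0 := by
          have h2 := hφu (x - y)
          have hmem' : x - y ∉ ball (0 : (EuclideanSpace ℝ (Fin n))) R := fun h => hy ((hmem y).mpr h)
          rwa [Set.indicator_of_notMem hmem', mul_zero] at h2
        have : g (x - y) = 0 := by
          simp only [hg_def, ENNReal.ofReal_eq_zero]
          exact h0
        simp [this]
    have hcov : ball x R ⊆ ⋃ i ∈ s, ball (x + i) (r / 2) := by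
      intro y hy
      have h1 : y - x ∈ closedBall (0 : (EuclideanSpace ℝ (Fin n))) R := by
        rw [mem_closedBall_zero_iff]
        have := mem_ball.mp hy
        rw [dist_eq_norm] at this
        exact this.le
      obtain ⟨i, hi, hyi⟩ := Set.mem_iUnion₂.mp (hs h1)
      refine Set.mem_iUnion₂.2 ⟨i, hi, ?_⟩
      rw [mem_ball, dist_eq_norm] at hyi ⊢
      have he : y - (x + i) = y - x - i := by abel
      rw [he]
      exact hyi
    have hpiece : ∀ i : (EuclideanSpace ℝ (Fin n)),
        (∫⁻ y in ball (x + i) (r / 2), (ENNReal.ofReal c * ρ (ball y r))⁻¹ ∂ρ)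
          ≤ (ENNReal.ofReal c)⁻¹ := by
      intro i
      have hsub : ∀ y ∈ ball (x + i) (r / 2), ρ (ball (x + i) (r / 2)) ≤ ρ (ball y r) := by
        intro y hy
        apply measure_mono
        intro z hz
        rw [mem_ball] at hy hz ⊢
        calc dist z y ≤ dist z (x + i) + dist (x + i) y := dist_triangle _ _ _
          _ < r / 2 + r / 2 := by
              rw [dist_comm (x + i) y]; exact add_lt_add hz hy
          _ = r := by ring
      calc (∫⁻ y in ball (x + i) (r / 2), (ENNReal.ofReal c * ρ (ball y r))⁻¹ ∂ρ)
          ≤ ∫⁻ _ in ball (x + i) (r / 2),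
              (ENNReal.ofReal c * ρ (ball (x + i) (r / 2)))⁻¹ ∂ρ := by
            refine setLIntegral_mono measurable_const ?_
            intro y hy
            exact ENNReal.inv_le_inv' (mul_le_mul_right (hsub y hy) _)
        _ = (ENNReal.ofReal c * ρ (ball (x + i) (r / 2)))⁻¹ * ρ (ball (x + i) (r / 2)) :=
            setLIntegral_const _ _
        _ ≤ (ENNReal.ofReal c)⁻¹ := by
            rw [ENNReal.mul_inv (Or.inl hcne) (Or.inl ENNReal.ofReal_ne_top), mul_assoc]
            refine mul_le_of_le_one_right' ?_
            rcases eq_or_ne (ρ (ball (x + i) (r / 2))) 0 with h | h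
            · simp [h]
            · rw [ENNReal.inv_mul_cancel h (measure_ne_top ρ _)]
    calc (∫⁻ y, g (x - y) * (L y)⁻¹ ∂ρ)
        ≤ ∫⁻ y, (ball x R).indicator
            (fun y => ENNReal.ofReal C * (ENNReal.ofReal c * ρ (ball y r))⁻¹) y ∂ρ :=
          lintegral_mono step1
      _ = ∫⁻ y in ball x R, ENNReal.ofReal C * (ENNReal.ofReal c * ρ (ball y r))⁻¹ ∂ρ :=
          lintegral_indicator measurableSet_ball _
      _ ≤ ∫⁻ y in ⋃ i ∈ s, ball (x + i) (r / 2),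
            ENNReal.ofReal C * (ENNReal.ofReal c * ρ (ball y r))⁻¹ ∂ρ :=
          lintegral_mono_set hcov
      _ = ∫⁻ y in ⋃ i : s, ball (x + (i : (EuclideanSpace ℝ (Fin n)))) (r / 2),
            ENNReal.ofReal C * (ENNReal.ofReal c * ρ (ball y r))⁻¹ ∂ρ := by
          have hsets : (⋃ i ∈ s, ball (x + i) (r / 2))
              = ⋃ i : s, ball (x + (i : (EuclideanSpace ℝ (Fin n)))) (r / 2) := by
            ext z
            simp only [Set.mem_iUnion, Finset.mem_coe, Subtype.exists, exists_prop]
          rw [hsets]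
      _ ≤ ∑' i : s, ∫⁻ y in ball (x + (i : (EuclideanSpace ℝ (Fin n)))) (r / 2),
            ENNReal.ofReal C * (ENNReal.ofReal c * ρ (ball y r))⁻¹ ∂ρ :=
          lintegral_iUnion_le _ _
      _ = ∑ i ∈ s, ∫⁻ y in ball (x + i) (r / 2),
            ENNReal.ofReal C * (ENNReal.ofReal c * ρ (ball y r))⁻¹ ∂ρ :=
          Finset.tsum_subtype s (fun i => ∫⁻ y in ball (x + i) (r / 2),
            ENNReal.ofReal C * (ENNReal.ofReal c * ρ (ball y r))⁻¹ ∂ρ)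
      _ ≤ ∑ i ∈ s, ENNReal.ofReal C * (ENNReal.ofReal c)⁻¹ := by
          refine Finset.sum_le_sum fun i _ => ?_
          rw [lintegral_const_mul' _ _ ENNReal.ofReal_ne_top]
          exact mul_le_mul_right (hpiece i) _
      _ = (s.card : ℝ≥0∞) * (ENNReal.ofReal C * (ENNReal.ofReal c)⁻¹) := by
          rw [Finset.sum_const, nsmul_eq_mul]
      _ ≤ ENNReal.ofReal C' := by
          rw [← ENNReal.ofReal_inv_of_pos hc, ← ENNReal.ofReal_natCast s.card,
            ← ENNReal.ofReal_mul (by positivity), ← ENNReal.ofReal_mul (by positivity)]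
          apply ENNReal.ofReal_le_ofReal
          calc (s.card : ℝ) * (C * c⁻¹) = K := by rw [hK_def]; field_simp
            _ ≤ C' := hKC'
  -- representation of the inner integral
  have hρφ : ∀ w : (EuclideanSpace ℝ (Fin n)), (∫ z, φ (w - z) ∂ρ) = (L w).toReal := by
    intro w
    have hm : Measurable fun z : EuclideanSpace ℝ (Fin n) => φ (w - z) :=
      hφm.comp (measurable_const.sub measurable_id)
    rw [integral_eq_lintegral_of_nonneg_ae (Filter.Eventually.of_forall fun z => hφ0 _)
      hm.aestronglyMeasurable]
  -- core ENNReal bound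
  set J : ℝ≥0∞ := ∫⁻ y, g (x - y) * L y ^ (β - 1) ∂ρ with hJ_def
  have hC'big : (1 : ℝ≥0∞) ≤ ENNReal.ofReal C' := ENNReal.one_le_ofReal.mpr hC'1
  have hJ : J ≤ L x ^ β * ENNReal.ofReal C' := by
    rcases eq_or_lt_of_le hβ0 with hβz | hβpos
    · -- β = 0
      have : J = ∫⁻ y, g (x - y) * (L y)⁻¹ ∂ρ := by
        rw [hJ_def]
        congr 1
        funext y
        rw [← hβz, zero_sub, ENNReal.rpow_neg_one]
      rw [this, ← hβz, ENNReal.rpow_zero, one_mul]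
      exact hK'
    rcases eq_or_lt_of_le hβ1 with hβo | hβlt
    · -- β = 1
      have : J = L x := by
        rw [hJ_def]
        simp only [hβo, sub_self, ENNReal.rpow_zero, mul_one]
        rfl
      rw [this, hβo, ENNReal.rpow_one]
      calc L x = L x * 1 := (mul_one _).symm
        _ ≤ L x * ENNReal.ofReal C' := mul_le_mul_right hC'big _
    · -- 0 < β < 1
      have h1β : 0 < 1 - β := by linarith
      have hpq : (1 / β).HolderConjugate (1 / (1 - β)) := by
        refine Real.holderConjugate_iff.mpr ⟨?_, ?_⟩
        · rw [lt_div_iff₀ hβpos]; linarith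
        · rw [one_div, one_div, inv_inv, inv_inv]; ring
      have hgxm : Measurable fun y => g (x - y) :=
        hgm.comp (measurable_const.sub measurable_id)
      have hf1 : AEMeasurable (fun y => g (x - y) ^ β) ρ :=
        (hgxm.pow measurable_const).aemeasurable
      have hf2 : AEMeasurable (fun y => g (x - y) ^ (1 - β) * L y ^ (β - 1)) ρ :=
        ((hgxm.pow measurable_const).mul (hLm.pow measurable_const)).aemeasurable
      have key := ENNReal.lintegral_mul_le_Lp_mul_Lq ρ hpq hf1 hf2
      have e1 : ∀ y : (EuclideanSpace ℝ (Fin n)), (fun y => g (x - y) ^ β) y *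
          (fun y => g (x - y) ^ (1 - β) * L y ^ (β - 1)) y
            = g (x - y) * L y ^ (β - 1) := by
        intro y
        rw [← mul_assoc, ← ENNReal.rpow_add_of_nonneg β (1 - β) hβpos.le h1β.le]
        rw [show β + (1 - β) = 1 by ring, ENNReal.rpow_one]
      have e2 : ∀ y : (EuclideanSpace ℝ (Fin n)), ((fun y => g (x - y) ^ β) y) ^ (1 / β) = g (x - y) := by
        intro y
        rw [← ENNReal.rpow_mul, mul_one_div_cancel hβpos.ne', ENNReal.rpow_one]
      have e3 : ∀ y : (EuclideanSpace ℝ (Fin n)), ((fun y => g (x - y) ^ (1 - β) * L y ^ (β - 1)) y) ^ (1 / (1 - β))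
          = g (x - y) * (L y)⁻¹ := by
        intro y
        have a1 : (1 - β) * (1 / (1 - β)) = 1 := mul_one_div_cancel h1β.ne'
        have a2 : (β - 1) * (1 / (1 - β)) = -1 := by field_simp; ring
        simp only []
        rw [ENNReal.mul_rpow_of_nonneg _ _ (by positivity : (0:ℝ) ≤ 1 / (1 - β)),
          ← ENNReal.rpow_mul, ← ENNReal.rpow_mul, a1, a2, ENNReal.rpow_one,
          ENNReal.rpow_neg_one]
      have hLx : (∫⁻ y, g (x - y) ∂ρ) = L x := rfl
      calc J = ∫⁻ y, ((fun y => g (x - y) ^ β) *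
            fun y => g (x - y) ^ (1 - β) * L y ^ (β - 1)) y ∂ρ := by
            rw [hJ_def]
            apply lintegral_congr
            intro y
            simp only [Pi.mul_apply]
            exact (e1 y).symm
        _ ≤ (∫⁻ y, ((fun y => g (x - y) ^ β) y) ^ (1 / β) ∂ρ) ^ (1 / (1 / β)) *
            (∫⁻ y, ((fun y => g (x - y) ^ (1 - β) * L y ^ (β - 1)) y) ^ (1 / (1 - β)) ∂ρ)
              ^ (1 / (1 / (1 - β))) := key
        _ = L x ^ β * (∫⁻ y, g (x - y) * (L y)⁻¹ ∂ρ) ^ (1 - β) := by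
            rw [lintegral_congr e2, lintegral_congr e3, one_div_one_div, one_div_one_div, hLx]
        _ ≤ L x ^ β * ENNReal.ofReal C' := by
            refine mul_le_mul_right ?_ _
            calc (∫⁻ y, g (x - y) * (L y)⁻¹ ∂ρ) ^ (1 - β)
                ≤ ENNReal.ofReal C' ^ (1 - β) := ENNReal.rpow_le_rpow hK' h1β.le
              _ ≤ ENNReal.ofReal C' ^ (1 : ℝ) :=
                  ENNReal.rpow_le_rpow_of_exponent_le hC'big (by linarith)
              _ = ENNReal.ofReal C' := ENNReal.rpow_one _
  -- convert back to real integrals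
  simp only [hρφ]
  have hFm : AEStronglyMeasurable (fun y => φ (x - y) * (L y).toReal ^ (β - 1)) ρ := by
    apply Measurable.aestronglyMeasurable
    exact (hφm.comp (measurable_const.sub measurable_id)).mul
      ((hLm.ennreal_toReal).pow measurable_const)
  have hFnn : 0 ≤ᵐ[ρ] fun y => φ (x - y) * (L y).toReal ^ (β - 1) :=
    Filter.Eventually.of_forall fun y =>
      mul_nonneg (hφ0 _) (Real.rpow_nonneg ENNReal.toReal_nonneg _)
  rw [integral_eq_lintegral_of_nonneg_ae hFnn hFm]
  have hJeq : (∫⁻ y, ENNReal.ofReal (φ (x - y) * (L y).toReal ^ (β - 1)) ∂ρ) = J := by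
    rw [hJ_def]
    apply lintegral_congr_ae
    filter_upwards [hLpos] with y hy
    rw [ENNReal.ofReal_mul (hφ0 _),
      ← ENNReal.ofReal_rpow_of_pos (ENNReal.toReal_pos hy (hLne y)),
      ENNReal.ofReal_toReal (hLne y)]
  rw [hJeq]
  have hne : L x ^ β * ENNReal.ofReal C' ≠ ⊤ :=
    ENNReal.mul_ne_top (ENNReal.rpow_ne_top_of_nonneg hβ0 (hLne x)) ENNReal.ofReal_ne_top
  calc J.toReal ≤ (L x ^ β * ENNReal.ofReal C').toReal := ENNReal.toReal_mono hne hJ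
    _ = C' * (L x).toReal ^ β := by
        rw [ENNReal.toReal_mul, ENNReal.toReal_ofReal hC'0, ← ENNReal.toReal_rpow, mul_comm]
end

section
/- L²-contractivity of the Favre filtration (property (ev2) for the Cucker–Smale model): let ρ be a Borel probability measure on ℝⁿ, φ : ℝⁿ → [0,∞) a bounded measurable even kernel (φ(−x) = φ(x)), and u : ℝⁿ → ℝ a bounded measurable function. Define ρ_φ(x) = ∫ φ(x−y) dρ(y) and (uρ)_φ(x) = ∫ φ(x−y) u(y) dρ(y). Then ∫ ((uρ)_φ(x))² / ρ_φ(x) dρ(x) ≤ ∫ u(x)² ρ_φ(x) dρ(x), with the convention 0/0 = 0 (note |(uρ)_φ| ≤ ‖u‖_∞ ρ_φ, so the numerator vanishes wherever the denominator does). Equivalently, the Favre average ⟨u⟩_ρ = (uρ)_φ/ρ_φ satisfies ‖⟨u⟩_ρ‖_{L²(κ_ρ)} ≤ ‖u‖_{L²(κ_ρ)} where dκ_ρ = ρ_φ dρ. -/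
open MeasureTheory

/-- `L²`-contractivity of the Favre filtration (property (ev2) for the
Cucker–Smale model). -/
theorem favre_L2_contractive
    (n : ℕ) (ρ : Measure (EuclideanSpace ℝ (Fin n))) [IsProbabilityMeasure ρ]
    (φ : EuclideanSpace ℝ (Fin n) → ℝ) (hφm : Measurable φ)
    (hφ0 : ∀ x, 0 ≤ φ x) (hφb : ∃ B : ℝ, ∀ x, φ x ≤ B)
    (hφe : ∀ x, φ (-x) = φ x)
    (u : EuclideanSpace ℝ (Fin n) → ℝ) (hum : Measurable u)
    (hub : ∃ M : ℝ, ∀ x, |u x| ≤ M) :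
    ∫ x, (∫ y, φ (x - y) * u y ∂ρ) ^ 2 / (∫ y, φ (x - y) ∂ρ) ∂ρ ≤
      ∫ x, u x ^ 2 * (∫ y, φ (x - y) ∂ρ) ∂ρ := by
  obtain ⟨B, hB⟩ := hφb
  obtain ⟨M, hM⟩ := hub
  have hB0 : 0 ≤ B := le_trans (hφ0 0) (hB 0)
  have hM0 : 0 ≤ M := le_trans (abs_nonneg _) (hM 0)
  have hsub : Measurable fun p : EuclideanSpace ℝ (Fin n) × EuclideanSpace ℝ (Fin n) =>
      p.1 - p.2 := measurable_fst.sub measurable_snd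
  have hφp : Measurable fun p : EuclideanSpace ℝ (Fin n) × EuclideanSpace ℝ (Fin n) =>
      φ (p.1 - p.2) := hφm.comp hsub
  have hu2 : ∀ y, u y ^ 2 ≤ M ^ 2 := by
    intro y
    calc u y ^ 2 = |u y| ^ 2 := (sq_abs _).symm
    _ ≤ M ^ 2 := by gcongr; exact hM y
  have Iψ : ∀ x, Integrable (fun y => φ (x - y)) ρ := by
    intro x
    refine (integrable_const B).mono'
      (hφm.comp (measurable_const.sub measurable_id)).aestronglyMeasurable ?_
    filter_upwards with y
    rw [Real.norm_eq_abs, abs_of_nonneg (hφ0 _)]; exact hB _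
  have Iψu : ∀ x, Integrable (fun y => φ (x - y) * u y) ρ := by
    intro x
    refine (integrable_const (B * M)).mono'
      ((hφm.comp (measurable_const.sub measurable_id)).mul hum).aestronglyMeasurable ?_
    filter_upwards with y
    rw [Real.norm_eq_abs, abs_mul, abs_of_nonneg (hφ0 _)]
    exact mul_le_mul (hB _) (hM _) (abs_nonneg _) hB0
  have Iψu2 : ∀ x, Integrable (fun y => φ (x - y) * u y ^ 2) ρ := by
    intro x
    refine (integrable_const (B * M ^ 2)).mono'
      ((hφm.comp (measurable_const.sub measurable_id)).mul (hum.pow_const 2)).aestronglyMeasurable ?_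
    filter_upwards with y
    rw [Real.norm_eq_abs, abs_mul, abs_of_nonneg (hφ0 _), abs_of_nonneg (sq_nonneg _)]
    exact mul_le_mul (hB _) (hu2 y) (sq_nonneg _) hB0
  have key : ∀ x, (∫ y, φ (x - y) * u y ∂ρ) ^ 2 / (∫ y, φ (x - y) ∂ρ) ≤
      ∫ y, φ (x - y) * u y ^ 2 ∂ρ := by
    intro x
    set a := ∫ y, φ (x - y) ∂ρ with ha
    set b := ∫ y, φ (x - y) * u y ∂ρ with hb
    set c := ∫ y, φ (x - y) * u y ^ 2 ∂ρ with hc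
    have ha0 : 0 ≤ a := integral_nonneg fun y => hφ0 _
    have hc0 : 0 ≤ c := integral_nonneg fun y => mul_nonneg (hφ0 _) (sq_nonneg _)
    rcases eq_or_lt_of_le ha0 with h | h
    · have hb0 : b = 0 := by
        have h1 : |b| ≤ ∫ y, M * φ (x - y) ∂ρ := by
          rw [hb, ← Real.norm_eq_abs]
          refine (norm_integral_le_integral_norm _).trans ?_
          refine integral_mono (Iψu x).norm ((Iψ x).const_mul M) fun y => ?_
          rw [Real.norm_eq_abs, abs_mul, abs_of_nonneg (hφ0 _), mul_comm]
          exact mul_le_mul_of_nonneg_right (hM _) (hφ0 _)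
        rw [integral_const_mul, ← ha, ← h, mul_zero] at h1
        exact abs_eq_zero.mp (le_antisymm h1 (abs_nonneg _))
      rw [hb0]; simpa using hc0
    · set t := b / a with ht
      have expand : ∫ y, φ (x - y) * (u y - t) ^ 2 ∂ρ = c - 2 * t * b + t ^ 2 * a := by
        rw [show (fun y => φ (x - y) * (u y - t) ^ 2) =
            (fun y => (φ (x - y) * u y ^ 2 - 2 * t * (φ (x - y) * u y)) + t ^ 2 * φ (x - y))
            from funext fun y => by ring]
        have hInt : Integrable
            (fun y => φ (x - y) * u y ^ 2 - 2 * t * (φ (x - y) * u y)) ρ := by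
          exact (Iψu2 x).sub ((Iψu x).const_mul (2 * t))
        rw [integral_add hInt ((Iψ x).const_mul _),
          integral_sub (Iψu2 x) ((Iψu x).const_mul _), integral_const_mul, integral_const_mul,
          ← ha, ← hb, ← hc]
      have hnn : 0 ≤ ∫ y, φ (x - y) * (u y - t) ^ 2 ∂ρ :=
        integral_nonneg fun y => mul_nonneg (hφ0 _) (sq_nonneg _)
      rw [expand] at hnn
      have ht2 : t ^ 2 * a = b ^ 2 / a := by rw [ht]; field_simp
      have h2t : 2 * t * b = 2 * (b ^ 2 / a) := by rw [ht]; field_simp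
      rw [ht2, h2t] at hnn
      linarith
  have smul_int : StronglyMeasurable fun x => ∫ y, φ (x - y) * u y ∂ρ :=
    (hφp.mul (hum.comp measurable_snd)).stronglyMeasurable.integral_prod_right'
  have smul_int2 : StronglyMeasurable fun x => ∫ y, φ (x - y) * u y ^ 2 ∂ρ :=
    (hφp.mul ((hum.pow_const 2).comp measurable_snd)).stronglyMeasurable.integral_prod_right'
  have sm_den : StronglyMeasurable fun x => ∫ y, φ (x - y) ∂ρ :=
    hφp.stronglyMeasurable.integral_prod_right'
  have bound2 : ∀ x, ∫ y, φ (x - y) * u y ^ 2 ∂ρ ≤ B * M ^ 2 := by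
    intro x
    calc ∫ y, φ (x - y) * u y ^ 2 ∂ρ ≤ ∫ _y, B * M ^ 2 ∂ρ :=
          integral_mono (Iψu2 x) (integrable_const _) fun y =>
            mul_le_mul (hB _) (hu2 y) (sq_nonneg _) hB0
    _ = B * M ^ 2 := by simp
  have Ig : Integrable
      (fun x => (∫ y, φ (x - y) * u y ∂ρ) ^ 2 / (∫ y, φ (x - y) ∂ρ)) ρ := by
    refine (integrable_const (B * M ^ 2)).mono'
      (((smul_int.measurable.pow_const 2).div sm_den.measurable).aestronglyMeasurable) ?_
    filter_upwards with x
    rw [Real.norm_eq_abs,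
      abs_of_nonneg (div_nonneg (sq_nonneg _) (integral_nonneg fun y => hφ0 _))]
    exact (key x).trans (bound2 x)
  have Ih : Integrable (fun x => ∫ y, φ (x - y) * u y ^ 2 ∂ρ) ρ := by
    refine (integrable_const (B * M ^ 2)).mono' smul_int2.aestronglyMeasurable ?_
    filter_upwards with x
    rw [Real.norm_eq_abs,
      abs_of_nonneg (integral_nonneg fun y => mul_nonneg (hφ0 _) (sq_nonneg _))]
    exact bound2 x
  have step1 : ∫ x, (∫ y, φ (x - y) * u y ∂ρ) ^ 2 / (∫ y, φ (x - y) ∂ρ) ∂ρ ≤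
      ∫ x, ∫ y, φ (x - y) * u y ^ 2 ∂ρ ∂ρ := integral_mono Ig Ih key
  refine step1.trans_eq ?_
  have Iprod : Integrable (fun p : EuclideanSpace ℝ (Fin n) × EuclideanSpace ℝ (Fin n) =>
      φ (p.1 - p.2) * u p.2 ^ 2) (ρ.prod ρ) := by
    refine (integrable_const (B * M ^ 2)).mono'
      (hφp.mul ((hum.pow_const 2).comp measurable_snd)).aestronglyMeasurable ?_
    filter_upwards with p
    rw [Real.norm_eq_abs, abs_mul, abs_of_nonneg (hφ0 _), abs_of_nonneg (sq_nonneg _)]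
    exact mul_le_mul (hB _) (hu2 _) (sq_nonneg _) hB0
  rw [integral_integral_swap Iprod]
  refine integral_congr_ae (Filter.Eventually.of_forall fun y => ?_)
  calc ∫ x, φ (x - y) * u y ^ 2 ∂ρ = ∫ x, u y ^ 2 * φ (y - x) ∂ρ := by
        refine integral_congr_ae (Filter.Eventually.of_forall fun x => ?_)
        show φ (x - y) * u y ^ 2 = u y ^ 2 * φ (y - x)
        rw [← hφe (y - x), neg_sub]; ring
  _ = u y ^ 2 * ∫ x, φ (y - x) ∂ρ := integral_const_mul _ _
end

section
/- Spectral gap transfer between weighted zero-mean subspaces: let ρ be a probability measure on a measurable space Ω, let s : Ω → ℝ be measurable with 0 < c₀ ≤ s ≤ c₁ ρ-a.e., and let κ be the measure dκ = s dρ. Let T be a bounded linear operator on L²(κ;ℝ) with T1 = 1 and ∫ Tu dκ = ∫ u dκ for all u ∈ L²(κ) (conservative). If ∫ (Tu)u dκ ≤ (1−ε)∫ u² dκ for all u ∈ L²(κ) with ∫ u dκ = 0, then ∫ (Tu)u dκ ≤ (1 − ε·c₀/(c₀+c₁)) ∫ u² dκ for all u ∈ L²(κ) with ∫ u dρ = 0.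 Conversely, if ∫ (Tu)u dκ ≤ (1−δ)∫ u² dκ for all u ∈ L²(κ) with ∫ u dρ = 0, then ∫ (Tu)u dκ ≤ (1 − δ·c₀/(c₀+c₁)) ∫ u² dκ for all u ∈ L²(κ) with ∫ u dκ = 0. -/
open MeasureTheory ENNReal

private theorem sgt_shift {Ω : Type*} [MeasurableSpace Ω] {κ : Measure Ω} [IsFiniteMeasure κ]
    (T : Lp ℝ 2 κ →L[ℝ] Lp ℝ 2 κ)
    (hT1 : ⇑(T ((memLp_const (1 : ℝ) : MemLp (fun _ : Ω => (1 : ℝ)) 2 κ).toLp _))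
      =ᵐ[κ] fun _ => (1 : ℝ))
    (u : Lp ℝ 2 κ) (a : ℝ) :
    ∃ v : Lp ℝ 2 κ, (⇑v =ᵐ[κ] fun x => u x - a) ∧ (⇑(T v) =ᵐ[κ] fun x => (T u) x - a) := by
  set c : Lp ℝ 2 κ := (memLp_const (1 : ℝ) : MemLp (fun _ : Ω => (1 : ℝ)) 2 κ).toLp _ with hc
  refine ⟨u - a • c, ?_, ?_⟩
  · filter_upwards [Lp.coeFn_sub u (a • c), Lp.coeFn_smul a c,
      MemLp.coeFn_toLp (memLp_const (1 : ℝ) : MemLp (fun _ : Ω => (1 : ℝ)) 2 κ)] with x h1 h2 h3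
    rw [h1]; simp only [Pi.sub_apply]; rw [h2]; simp only [Pi.smul_apply, smul_eq_mul]
    rw [h3, mul_one]
  · have hmap : T (u - a • c) = T u - a • T c := by rw [map_sub, _root_.map_smul]
    rw [hmap]
    filter_upwards [Lp.coeFn_sub (T u) (a • T c), Lp.coeFn_smul a (T c), hT1] with x h1 h2 h3
    rw [h1]; simp only [Pi.sub_apply]; rw [h2]; simp only [Pi.smul_apply, smul_eq_mul]
    rw [h3, mul_one]

private theorem sgt_cross {Ω : Type*} [MeasurableSpace Ω] {κ : Measure Ω} [IsFiniteMeasure κ]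
    (f g : Ω → ℝ) (hf : MemLp f 2 κ) (hg : MemLp g 2 κ)
    (hfg : Integrable (fun x => g x * f x) κ) (a : ℝ) :
    ∫ x, (g x - a) * (f x - a) ∂κ
      = ∫ x, g x * f x ∂κ - a * ∫ x, g x ∂κ - a * ∫ x, f x ∂κ
          + a ^ 2 * (κ Set.univ).toReal := by
  have hfi := hf.integrable one_le_two
  have hgi := hg.integrable one_le_two
  have hrw : (fun x => (g x - a) * (f x - a))
      = fun x => g x * f x - a * g x - a * f x + a ^ 2 := by
    funext x; ring
  have h1 : Integrable (fun x => g x * f x - a * g x) κ := hfg.sub (hgi.const_mul a)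
  have h2 : Integrable (fun x => g x * f x - a * g x - a * f x) κ := h1.sub (hfi.const_mul a)
  rw [hrw, integral_add h2 (integrable_const _), integral_sub h1 (hfi.const_mul a),
    integral_sub hfg (hgi.const_mul a), integral_const_mul, integral_const_mul, integral_const]
  simp only [smul_eq_mul, measureReal_def]; ring

private theorem sgt_sq {Ω : Type*} [MeasurableSpace Ω] {κ : Measure Ω} [IsFiniteMeasure κ]
    (f : Ω → ℝ) (hf : MemLp f 2 κ) (a : ℝ) :
    ∫ x, (f x - a) ^ 2 ∂κ
      = ∫ x, f x ^ 2 ∂κ - 2 * a * ∫ x, f x ∂κ + a ^ 2 * (κ Set.univ).toReal := by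
  have h := sgt_cross f f hf hf (by simpa [sq] using hf.integrable_sq) a
  simp_rw [← sq] at h
  rw [h]; ring

/-- spectral gap transfer between the `κ`-weighted zero-mean subspace and the
zero-momentum (`ρ`-mean zero) subspace, for a conservative averaging operator. -/
theorem spectral_gap_transfer
    {Ω : Type*} [MeasurableSpace Ω] (ρ : Measure Ω) [IsProbabilityMeasure ρ]
    (s : Ω → ℝ) (hs : Measurable s) (c₀ c₁ : ℝ) (hc₀ : 0 < c₀)
    (hsb : ∀ᵐ x ∂ρ, c₀ ≤ s x ∧ s x ≤ c₁)
    (κ : Measure Ω) (hκ : κ = ρ.withDensity fun x => ENNReal.ofReal (s x))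
    [IsFiniteMeasure κ]
    (T : Lp ℝ 2 κ →L[ℝ] Lp ℝ 2 κ)
    (hT1 : ⇑(T ((memLp_const (1 : ℝ) : MemLp (fun _ : Ω => (1 : ℝ)) 2 κ).toLp _))
      =ᵐ[κ] fun _ => (1 : ℝ))
    (hcons : ∀ u : Lp ℝ 2 κ, ∫ x, (T u) x ∂κ = ∫ x, u x ∂κ) :
    (∀ ε : ℝ, 0 ≤ ε →
      (∀ u : Lp ℝ 2 κ, ∫ x, u x ∂κ = 0 →
        ∫ x, (T u) x * u x ∂κ ≤ (1 - ε) * ∫ x, (u x) ^ 2 ∂κ) →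
      (∀ u : Lp ℝ 2 κ, ∫ x, u x ∂ρ = 0 →
        ∫ x, (T u) x * u x ∂κ ≤ (1 - ε * c₀ / (c₀ + c₁)) * ∫ x, (u x) ^ 2 ∂κ)) ∧
    (∀ δ : ℝ, 0 ≤ δ →
      (∀ u : Lp ℝ 2 κ, ∫ x, u x ∂ρ = 0 →
        ∫ x, (T u) x * u x ∂κ ≤ (1 - δ) * ∫ x, (u x) ^ 2 ∂κ) →
      (∀ u : Lp ℝ 2 κ, ∫ x, u x ∂κ = 0 →
        ∫ x, (T u) x * u x ∂κ ≤ (1 - δ * c₀ / (c₀ + c₁)) * ∫ x, (u x) ^ 2 ∂κ)) := by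
  -- basic constants
  have hc01 : c₀ ≤ c₁ := by
    obtain ⟨x, hx⟩ := hsb.exists
    linarith [hx.1, hx.2]
  have hc1 : 0 < c₁ := lt_of_lt_of_le hc₀ hc01
  have hsum : 0 < c₀ + c₁ := by linarith
  -- measure comparison : ofReal c₀ • ρ ≤ κ
  have hle : (ENNReal.ofReal c₀) • ρ ≤ κ := by
    rw [hκ, ← withDensity_const]
    exact withDensity_mono (hsb.mono fun x hx => ENNReal.ofReal_le_ofReal hx.1)
  have hc₀0 : (ENNReal.ofReal c₀) ≠ 0 := by
    simp [ENNReal.ofReal_eq_zero, not_le, hc₀]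
  have hρle : ρ ≤ (ENNReal.ofReal c₀)⁻¹ • κ := by
    intro A
    have h := hle A
    rw [Measure.smul_apply, smul_eq_mul] at h
    rw [Measure.smul_apply, smul_eq_mul]
    calc ρ A = (ENNReal.ofReal c₀)⁻¹ * (ENNReal.ofReal c₀ * ρ A) := by
          rw [← mul_assoc, ENNReal.inv_mul_cancel hc₀0 ENNReal.ofReal_ne_top, one_mul]
      _ ≤ (ENNReal.ofReal c₀)⁻¹ * κ A := mul_le_mul_right h _
  have habs : ρ ≪ κ := Measure.absolutelyContinuous_of_le_smul hρle
  have hmemρ : ∀ f : Ω → ℝ, MemLp f 2 κ → MemLp f 2 ρ := fun f hf =>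
    hf.of_measure_le_smul (by simp [hc₀0]) hρle
  -- total mass
  set M : ℝ := (κ Set.univ).toReal with hM
  have hκuniv : κ Set.univ = ∫⁻ x, ENNReal.ofReal (s x) ∂ρ := by
    rw [hκ, withDensity_apply _ MeasurableSet.univ, Measure.restrict_univ]
  have hMub : κ Set.univ ≤ ENNReal.ofReal c₁ := by
    rw [hκuniv]
    calc ∫⁻ x, ENNReal.ofReal (s x) ∂ρ
        ≤ ∫⁻ _, ENNReal.ofReal c₁ ∂ρ :=
          lintegral_mono_ae (hsb.mono fun x hx => ENNReal.ofReal_le_ofReal hx.2)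
      _ = ENNReal.ofReal c₁ := by simp
  have hMlb : ENNReal.ofReal c₀ ≤ κ Set.univ := by
    rw [hκuniv]
    calc (ENNReal.ofReal c₀ : ℝ≥0∞) = ∫⁻ _, ENNReal.ofReal c₀ ∂ρ := by simp
      _ ≤ ∫⁻ x, ENNReal.ofReal (s x) ∂ρ :=
          lintegral_mono_ae (hsb.mono fun x hx => ENNReal.ofReal_le_ofReal hx.1)
  have hM2 : M ≤ c₁ := by
    have := ENNReal.toReal_mono ENNReal.ofReal_ne_top hMub
    rwa [ENNReal.toReal_ofReal hc1.le] at this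
  have hM1 : c₀ ≤ M := by
    have := ENNReal.toReal_mono (measure_ne_top κ _) hMlb
    rwa [ENNReal.toReal_ofReal hc₀.le] at this
  have hM0 : 0 < M := lt_of_lt_of_le hc₀ hM1
  -- comparison of integrals for nonnegative functions
  have hcomp : ∀ f : Ω → ℝ, Integrable f κ → (∀ x, 0 ≤ f x) →
      c₀ * ∫ x, f x ∂ρ ≤ ∫ x, f x ∂κ := by
    intro f hfi hfpos
    have h := integral_mono_measure hle (Filter.Eventually.of_forall hfpos) hfi
    rwa [integral_smul_measure, ENNReal.toReal_ofReal hc₀.le, smul_eq_mul] at h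
  -- generic facts about a shifted element
  have key : ∀ (u : Lp ℝ 2 κ) (a : ℝ), ∃ v : Lp ℝ 2 κ,
      (∫ x, (T v) x * v x ∂κ
        = ∫ x, (T u) x * u x ∂κ - 2 * a * ∫ x, u x ∂κ + a ^ 2 * M) ∧
      (∫ x, (v x) ^ 2 ∂κ = ∫ x, (u x) ^ 2 ∂κ - 2 * a * ∫ x, u x ∂κ + a ^ 2 * M) ∧
      (∫ x, v x ∂κ = ∫ x, u x ∂κ - a * M) ∧
      (∫ x, v x ∂ρ = ∫ x, u x ∂ρ - a) ∧
      (c₀ * ∫ x, (v x) ^ 2 ∂ρ ≤ ∫ x, (v x) ^ 2 ∂κ) ∧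
      ((∫ x, v x ∂ρ) ^ 2 ≤ ∫ x, (v x) ^ 2 ∂ρ) := by
    intro u a
    obtain ⟨v, hv, hTv⟩ := sgt_shift T hT1 u a
    have hu2 : MemLp (⇑u) 2 κ := Lp.memLp u
    have hTu2 : MemLp (⇑(T u)) 2 κ := Lp.memLp (T u)
    have hfg : Integrable (fun x => (T u) x * u x) κ := by
      have := L2.integrable_inner (𝕜 := ℝ) (T u) u
      simpa [RCLike.inner_apply, mul_comm] using this
    have huρ : MemLp (⇑u) 2 ρ := hmemρ _ hu2
    have hv2 : MemLp (⇑v) 2 κ := Lp.memLp v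
    have hvρ : MemLp (⇑v) 2 ρ := hmemρ _ hv2
    refine ⟨v, ?_, ?_, ?_, ?_, ?_, ?_⟩
    · have hcongr : ∫ x, (T v) x * v x ∂κ = ∫ x, ((T u) x - a) * (u x - a) ∂κ := by
        apply integral_congr_ae
        filter_upwards [hv, hTv] with x h1 h2
        rw [h1, h2]
      rw [hcongr, sgt_cross _ _ hu2 hTu2 hfg a, hcons u, ← hM]
      ring
    · have hcongr : ∫ x, (v x) ^ 2 ∂κ = ∫ x, (u x - a) ^ 2 ∂κ := by
        apply integral_congr_ae
        filter_upwards [hv] with x h1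
        rw [h1]
      rw [hcongr, sgt_sq _ hu2 a, ← hM]
    · have hcongr : ∫ x, v x ∂κ = ∫ x, (u x - a) ∂κ := integral_congr_ae hv
      rw [hcongr, integral_sub (hu2.integrable one_le_two) (integrable_const _),
        integral_const, measureReal_def, ← hM]
      simp [smul_eq_mul, mul_comm]
    · have hvρ' : ⇑v =ᵐ[ρ] fun x => u x - a := habs.ae_eq hv
      have hcongr : ∫ x, v x ∂ρ = ∫ x, (u x - a) ∂ρ := integral_congr_ae hvρ'
      rw [hcongr, integral_sub (huρ.integrable one_le_two) (integrable_const _),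
        integral_const]
      simp
    · exact hcomp (fun x => (v x) ^ 2) hv2.integrable_sq (fun x => sq_nonneg _)
    · have h0 := ProbabilityTheory.variance_nonneg (⇑v) ρ
      rw [ProbabilityTheory.variance_eq_sub hvρ] at h0
      simp only [Pi.pow_apply] at h0
      linarith
  constructor
  · -- direction 1
    intro ε hε H u hu
    obtain ⟨v, h1, h2, h3, h4, h5, h6⟩ := key u ((∫ x, u x ∂κ) / M)
    set A := ∫ x, (T u) x * u x ∂κ with hA
    set B := ∫ x, u x ∂κ with hB
    set S := ∫ x, (u x) ^ 2 ∂κ with hS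
    set a : ℝ := B / M with ha
    have haM : a * M = B := by rw [ha, div_mul_cancel₀ B hM0.ne']
    have hvmean : ∫ x, v x ∂κ = 0 := by rw [h3, haM, sub_self]
    have hH := H v hvmean
    rw [h1, h2] at hH
    rw [← haM] at hH
    -- zero-momentum : ∫ v dρ = -a
    rw [hu, zero_sub] at h4
    rw [h4, neg_sq] at h6
    have hQ : ∫ x, (v x) ^ 2 ∂κ = S - a ^ 2 * M := by
      rw [h2, ← haM]; ring
    -- Cauchy–Schwarz chain : c₀ a² ≤ S - a²M
    have h7 : c₀ * a ^ 2 ≤ S - a ^ 2 * M := by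
      rw [← hQ]
      exact le_trans (mul_le_mul_of_nonneg_left h6 hc₀.le) h5
    have hQnn : 0 ≤ S - a ^ 2 * M :=
      le_trans (by positivity) h7
    have e1 : a ^ 2 * M ≤ a ^ 2 * c₁ := mul_le_mul_of_nonneg_left hM2 (sq_nonneg a)
    have e2 : c₁ * (c₀ * a ^ 2) ≤ c₁ * (S - a ^ 2 * M) :=
      mul_le_mul_of_nonneg_left h7 hc1.le
    have hkey : c₀ * S ≤ (c₀ + c₁) * (S - a ^ 2 * M) := by nlinarith [e1, e2]
    have hfrac0 : c₀ / (c₀ + c₁) * S ≤ S - a ^ 2 * M := by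
      rw [div_mul_eq_mul_div, div_le_iff₀ hsum]
      linarith [hkey]
    have hfrac : ε * c₀ / (c₀ + c₁) * S ≤ ε * (S - a ^ 2 * M) := by
      have := mul_le_mul_of_nonneg_left hfrac0 hε
      calc ε * c₀ / (c₀ + c₁) * S = ε * (c₀ / (c₀ + c₁) * S) := by ring
        _ ≤ ε * (S - a ^ 2 * M) := this
    have hmain : A ≤ S - ε * (S - a ^ 2 * M) := by linarith [hH]
    calc A ≤ S - ε * (S - a ^ 2 * M) := hmain
      _ ≤ S - ε * c₀ / (c₀ + c₁) * S := by linarith [hfrac]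
      _ = (1 - ε * c₀ / (c₀ + c₁)) * S := by ring
  · -- direction 2
    intro δ hδ H u hu
    obtain ⟨v, h1, h2, h3, h4, _, _⟩ := key u (∫ x, u x ∂ρ)
    set A := ∫ x, (T u) x * u x ∂κ with hA
    set S := ∫ x, (u x) ^ 2 ∂κ with hS
    set b := ∫ x, u x ∂ρ with hb
    have hvρ : ∫ x, v x ∂ρ = 0 := by rw [h4, sub_self]
    have hH := H v hvρ
    rw [h1, h2] at hH
    rw [hu] at hH
    have hSnn : 0 ≤ S := by
      rw [hS]; exact integral_nonneg fun x => sq_nonneg _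
    have hδb : 0 ≤ δ * (b ^ 2 * M) := by positivity
    clear_value A S b M
    have h9 : δ * c₀ / (c₀ + c₁) * S ≤ δ * S := by
      rw [div_mul_eq_mul_div, div_le_iff₀ hsum]
      linarith [mul_nonneg (mul_nonneg hδ hSnn) hc1.le]
    calc A ≤ S - δ * S := by linarith [hH, hδb]
      _ ≤ S - δ * c₀ / (c₀ + c₁) * S := by linarith [h9]
      _ = (1 - δ * c₀ / (c₀ + c₁)) * S := by ring
end

section
/- Segregation energy-gap identity: let ρ be a probability measure on a measurable space Ω, L ∈ ℕ, and g₁,…,g_L : Ω → [0,∞) measurable with Σ_{l=1}^L g_l(x) = 1 for all x and ρ(g_l) := ∫ g_l dρ > 0 for each l. For u ∈ L²(ρ;ℝ) define the segregation average ⟨u⟩(x) = Σ_{l=1}^L g_l(x)·ρ(u g_l)/ρ(g_l), where ρ(u g_l) = ∫ u g_l dρ. Then ∫ u·⟨u⟩ dρ − ∫ ⟨u⟩² dρ = (1/2) Σ_{l,l'=1}^L ρ(g_l g_{l'}) · ( ρ(u g_l)/ρ(g_l) − ρ(u g_{l'})/ρ(g_{l'}) )². -/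
open MeasureTheory

/-- segregation energy-gap identity
`E₁ − E₂ = (1/2) Σ_{l,l'} ρ(g_l g_{l'}) (ρ(u g_l)/ρ(g_l) − ρ(u g_{l'})/ρ(g_{l'}))²`. -/
theorem segregation_energy_gap
    {Ω : Type*} [MeasurableSpace Ω] (ρ : Measure Ω) [IsProbabilityMeasure ρ]
    (L : ℕ) (g : Fin L → Ω → ℝ)
    (hgm : ∀ l, Measurable (g l)) (hg0 : ∀ l x, 0 ≤ g l x)
    (hgsum : ∀ x, ∑ l, g l x = 1)
    (hgpos : ∀ l, 0 < ∫ x, g l x ∂ρ)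
    (u : Ω → ℝ) (hu : MemLp u 2 ρ) :
    ∫ x, u x * (∑ l, g l x * ((∫ y, u y * g l y ∂ρ) / (∫ y, g l y ∂ρ))) ∂ρ -
        ∫ x, (∑ l, g l x * ((∫ y, u y * g l y ∂ρ) / (∫ y, g l y ∂ρ))) ^ 2 ∂ρ =
      (1 / 2) * ∑ l, ∑ l', (∫ y, g l y * g l' y ∂ρ) *
        ((∫ y, u y * g l y ∂ρ) / (∫ y, g l y ∂ρ) -
          (∫ y, u y * g l' y ∂ρ) / (∫ y, g l' y ∂ρ)) ^ 2 := by
  classical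
  set c : Fin L → ℝ := fun l => (∫ y, u y * g l y ∂ρ) / (∫ y, g l y ∂ρ) with hc
  show (∫ x, u x * (∑ l, g l x * c l) ∂ρ) - (∫ x, (∑ l, g l x * c l) ^ 2 ∂ρ)
      = (1 / 2) * ∑ l, ∑ l', (∫ y, g l y * g l' y ∂ρ) * (c l - c l') ^ 2
  -- pointwise bound on g
  have hb : ∀ l x, g l x ≤ 1 := by
    intro l x
    calc g l x ≤ ∑ l', g l' x :=
          Finset.single_le_sum (fun i _ => hg0 i x) (Finset.mem_univ l)
      _ = 1 := hgsum x
  -- integrability facts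
  have hui : Integrable u ρ := hu.integrable one_le_two
  have hugi : ∀ l, Integrable (fun x => u x * g l x) ρ := by
    intro l
    refine hui.mono (hu.aestronglyMeasurable.mul (hgm l).aestronglyMeasurable)
      (ae_of_all _ fun x => ?_)
    rw [Real.norm_eq_abs, Real.norm_eq_abs, abs_mul]
    calc |u x| * |g l x| ≤ |u x| * 1 := by
          exact mul_le_mul_of_nonneg_left
            (by rw [abs_of_nonneg (hg0 l x)]; exact hb l x) (abs_nonneg _)
      _ = |u x| := mul_one _
  have hggi : ∀ l l', Integrable (fun x => g l x * g l' x) ρ := by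
    intro l l'
    refine (integrable_const (1:ℝ)).mono
      ((hgm l).mul (hgm l')).aestronglyMeasurable (ae_of_all _ fun x => ?_)
    rw [Real.norm_eq_abs, abs_of_nonneg (mul_nonneg (hg0 l x) (hg0 l' x))]
    simp only [norm_one]
    calc g l x * g l' x ≤ 1 * 1 :=
          mul_le_mul (hb l x) (hb l' x) (hg0 l' x) zero_le_one
      _ = 1 := one_mul 1
  -- first energy term
  have hA : ∫ x, u x * (∑ l, g l x * c l) ∂ρ = ∑ l, c l * ∫ y, u y * g l y ∂ρ := by
    have h1 : (fun x => u x * (∑ l, g l x * c l))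
        = fun x => ∑ l, (fun x => u x * g l x) x * c l := by
      funext x
      rw [Finset.mul_sum]
      exact Finset.sum_congr rfl fun l _ => by ring
    rw [h1, integral_finset_sum _ fun l _ => (hugi l).mul_const (c l)]
    exact Finset.sum_congr rfl fun l _ => by rw [integral_mul_const]; ring
  -- second energy term
  have hB : ∫ x, (∑ l, g l x * c l) ^ 2 ∂ρ
      = ∑ l, ∑ l', (∫ y, g l y * g l' y ∂ρ) * (c l * c l') := by
    have h1 : (fun x => (∑ l, g l x * c l) ^ 2)
        = fun x => ∑ l, ∑ l', (fun x => g l x * g l' x) x * (c l * c l') := by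
      funext x
      rw [sq, Finset.sum_mul_sum]
      exact Finset.sum_congr rfl fun l _ => Finset.sum_congr rfl fun l' _ => by ring
    rw [h1, integral_finset_sum _ fun l _ =>
      integrable_finset_sum _ fun l' _ => (hggi l l').mul_const _]
    refine Finset.sum_congr rfl fun l _ => ?_
    rw [integral_finset_sum _ fun l' _ => (hggi l l').mul_const _]
    exact Finset.sum_congr rfl fun l' _ => integral_mul_const _ _
  -- partition of unity: row sums of the Gram matrix
  have hGsum : ∀ l, ∑ l', ∫ y, g l y * g l' y ∂ρ = ∫ y, g l y ∂ρ := by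
    intro l
    rw [← integral_finset_sum _ fun l' _ => hggi l l']
    congr 1
    funext y
    rw [← Finset.mul_sum, hgsum y, mul_one]
  -- I l = c l * G l
  have hIc : ∀ l, ∫ y, u y * g l y ∂ρ = c l * ∫ y, g l y ∂ρ := fun l =>
    (div_mul_cancel₀ _ (hgpos l).ne').symm
  -- Gram matrix symmetry
  have hMsym : ∀ l l', (∫ y, g l y * g l' y ∂ρ) = ∫ y, g l' y * g l y ∂ρ := by
    intro l l'
    congr 1
    funext y
    ring
  rw [hA, hB]
  have h1 : ∑ l, c l * ∫ y, u y * g l y ∂ρ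
      = ∑ l, ∑ l', (∫ y, g l y * g l' y ∂ρ) * c l ^ 2 := by
    refine Finset.sum_congr rfl fun l _ => ?_
    rw [hIc l, ← hGsum l, Finset.mul_sum, Finset.mul_sum]
    exact Finset.sum_congr rfl fun l' _ => by ring
  have h2 : ∑ l, ∑ l', (∫ y, g l y * g l' y ∂ρ) * c l' ^ 2
      = ∑ l, ∑ l', (∫ y, g l y * g l' y ∂ρ) * c l ^ 2 := by
    rw [Finset.sum_comm]
    exact Finset.sum_congr rfl fun l _ => Finset.sum_congr rfl fun l' _ => by
      rw [hMsym]
  have hS : ∑ l, ∑ l', (∫ y, g l y * g l' y ∂ρ) * (c l - c l') ^ 2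
      = ∑ l, ∑ l', (∫ y, g l y * g l' y ∂ρ) * c l ^ 2
        + ∑ l, ∑ l', (∫ y, g l y * g l' y ∂ρ) * c l' ^ 2
        - 2 * ∑ l, ∑ l', (∫ y, g l y * g l' y ∂ρ) * (c l * c l') := by
    rw [Finset.mul_sum, ← Finset.sum_add_distrib, ← Finset.sum_sub_distrib]
    refine Finset.sum_congr rfl fun l _ => ?_
    rw [Finset.mul_sum, ← Finset.sum_add_distrib, ← Finset.sum_sub_distrib]
    exact Finset.sum_congr rfl fun l' _ => by ring
  rw [h1, hS, h2]
  ring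
end

section
/- Energy-gap identity for the over-mollified model: let 𝕋ⁿ be the n-dimensional torus with Lebesgue measure, ρ ∈ L¹(𝕋ⁿ) with ρ ≥ 0, φ ∈ L^∞(𝕋ⁿ) with φ ≥ 0, φ even (φ(−x) = φ(x)), and ∫_{𝕋ⁿ} φ dx = 1. Then for every bounded measurable v : 𝕋ⁿ → ℝ: ∫_{𝕋ⁿ} (ρ*φ)(x) v(x)² dx − ∫_{𝕋ⁿ} ρ(x) ((v*φ)(x))² dx = (1/2) ∫_{𝕋ⁿ}∫_{𝕋ⁿ} ρ_{φφ}(x,y) (v(x) − v(y))² dx dy, where ρ_{φφ}(x,y) = ∫_{𝕋ⁿ} φ(x−ξ)φ(y−ξ)ρ(ξ) dξ and * denotes convolution on 𝕋ⁿ. -/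
open MeasureTheory

theorem energy_gap_aux {G : Type*} [MeasurableSpace G] [AddCommGroup G]
    [MeasurableSub₂ G] [MeasurableAdd G] {μ : Measure G} [IsFiniteMeasure μ]
    [μ.IsAddRightInvariant]
    (ρ φ v : G → ℝ)
    (hρm : Measurable ρ) (hρ0 : ∀ x, 0 ≤ ρ x) (hρi : Integrable ρ μ)
    (hφm : Measurable φ) (hφ0 : ∀ x, 0 ≤ φ x) (hφb : ∃ B : ℝ, ∀ x, φ x ≤ B)
    (hφe : ∀ x, φ (-x) = φ x) (hφ1 : ∫ x, φ x ∂μ = 1)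
    (hvm : Measurable v) (hvb : ∃ M : ℝ, ∀ x, |v x| ≤ M) :
    ∫ x, (∫ y, φ (x - y) * ρ y ∂μ) * v x ^ 2 ∂μ
      - ∫ x, ρ x * (∫ y, φ (x - y) * v y ∂μ) ^ 2 ∂μ =
      (1 / 2) * ∫ x, ∫ y, (∫ ξ, φ (x - ξ) * φ (y - ξ) * ρ ξ ∂μ) * (v x - v y) ^ 2 ∂μ ∂μ := by
  classical
  obtain ⟨B, hB⟩ := hφb
  obtain ⟨M, hM⟩ := hvb
  have hB0 : 0 ≤ B := le_trans (hφ0 0) (hB 0)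
  have hM0 : 0 ≤ M := le_trans (abs_nonneg _) (hM 0)
  have hφabs : ∀ t : G, |φ t| ≤ B := fun t => by
    rw [abs_of_nonneg (hφ0 t)]; exact hB t
  have hv2 : ∀ x : G, v x ^ 2 ≤ M ^ 2 := fun x => by
    rw [← sq_abs]; exact pow_le_pow_left₀ (abs_nonneg _) (hM x) 2
  have hφ' : ∀ x y : G, φ (x - y) = φ (y - x) := fun x y => by
    rw [← hφe (y - x), neg_sub]
  -- integrability of bounded measurable functions on G
  have intb : ∀ (f : G → ℝ) (C : ℝ), Measurable f → (∀ x, |f x| ≤ C) →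
      Integrable f μ := fun f C hf h =>
    ⟨hf.aestronglyMeasurable,
      HasFiniteIntegral.of_bounded (C := C) (ae_of_all _ fun x => by
        simpa [Real.norm_eq_abs] using h x)⟩
  -- master integrability on the product, bound C * ρ p.2
  have hρ2 : Integrable (fun p : G × G => ρ p.2) (μ.prod μ) := by
    simpa using (integrable_const (1 : ℝ)).mul_prod hρi
  have mast : ∀ (F : G × G → ℝ) (C : ℝ), Measurable F →
      (∀ p, |F p| ≤ C * ρ p.2) → Integrable F (μ.prod μ) := by
    intro F C hFm hFb
    exact (hρ2.const_mul C).mono' hFm.aestronglyMeasurable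
      (ae_of_all _ fun p => by simpa [Real.norm_eq_abs] using hFb p)
  -- the averaged quantities
  set a : G → ℝ := fun ξ => ∫ x, φ (x - ξ) * v x ∂μ with ha_def
  set b : G → ℝ := fun ξ => ∫ x, φ (x - ξ) * v x ^ 2 ∂μ with hb_def
  have hmsub : ∀ ξ : G, Measurable fun y : G => φ (y - ξ) :=
    fun ξ => hφm.comp (measurable_id.sub measurable_const)
  have haM : Measurable a := by
    have hsm : StronglyMeasurable (fun p : G × G => φ (p.2 - p.1) * v p.2) :=
      ((hφm.comp (measurable_snd.sub measurable_fst)).mul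
        (hvm.comp measurable_snd)).stronglyMeasurable
    exact hsm.integral_prod_right'.measurable
  have hbM : Measurable b := by
    have hsm : StronglyMeasurable (fun p : G × G => φ (p.2 - p.1) * v p.2 ^ 2) :=
      ((hφm.comp (measurable_snd.sub measurable_fst)).mul
        ((hvm.comp measurable_snd).pow_const 2)).stronglyMeasurable
    exact hsm.integral_prod_right'.measurable
  -- bound for averages
  have haux : ∀ (f : G → ℝ) (C : ℝ), Measurable f → (0 ≤ C) → (∀ x, |f x| ≤ C) →
      ∀ ξ : G, |∫ x, φ (x - ξ) * f x ∂μ| ≤ C := by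
    intro f C hf hC hfC ξ
    have hint : Integrable (fun x => φ (x - ξ) * f x) μ :=
      intb _ (B * C) ((hmsub ξ).mul hf) (fun x => by
        rw [abs_mul, abs_of_nonneg (hφ0 _)]
        exact mul_le_mul (hB _) (hfC x) (abs_nonneg _) hB0)
    calc |∫ x, φ (x - ξ) * f x ∂μ| ≤ ∫ x, |φ (x - ξ) * f x| ∂μ := by
          simpa only [Real.norm_eq_abs] using
            norm_integral_le_integral_norm (μ := μ) (fun x => φ (x - ξ) * f x)
      _ ≤ ∫ x, C * φ (x - ξ) ∂μ := by
          refine integral_mono hint.abs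
            ((intb _ B (hmsub ξ) fun x => hφabs _).const_mul C) fun x => ?_
          rw [abs_mul, abs_of_nonneg (hφ0 _)]
          exact le_trans (mul_le_mul_of_nonneg_left (hfC x) (hφ0 _))
            (le_of_eq (mul_comm _ _))
      _ = C := by
          rw [integral_const_mul, integral_sub_right_eq_self φ ξ, hφ1, mul_one]
  have habd : ∀ ξ, |a ξ| ≤ M := fun ξ => haux v M hvm hM0 hM ξ
  have hbbd : ∀ ξ, |b ξ| ≤ M ^ 2 := fun ξ =>
    haux (fun x => v x ^ 2) (M ^ 2) (hvm.pow_const 2) (by positivity)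
      (fun x => by rw [abs_of_nonneg (sq_nonneg _)]; exact hv2 x) ξ
  -- the core splitting lemma
  have core : ∀ (ξ : G) (p q r : ℝ),
      ∫ y, φ (y - ξ) * (p + q * v y + r * v y ^ 2) ∂μ = p + q * a ξ + r * b ξ := by
    intro ξ p q r
    have h1 : Integrable (fun y => p * φ (y - ξ)) μ :=
      (intb _ B (hmsub ξ) fun y => hφabs _).const_mul p
    have h2 : Integrable (fun y => q * (φ (y - ξ) * v y)) μ :=
      (intb _ (B * M) ((hmsub ξ).mul hvm) fun y => by
        simp only [Pi.mul_apply]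
        rw [abs_mul, abs_of_nonneg (hφ0 _)]
        exact mul_le_mul (hB _) (hM y) (abs_nonneg _) hB0).const_mul q
    have h3 : Integrable (fun y => r * (φ (y - ξ) * v y ^ 2)) μ :=
      (intb _ (B * M ^ 2) ((hmsub ξ).mul (hvm.pow_const 2)) fun y => by
        simp only [Pi.mul_apply]
        rw [abs_mul, abs_of_nonneg (hφ0 _), abs_of_nonneg (sq_nonneg _)]
        exact mul_le_mul (hB _) (hv2 y) (sq_nonneg _) hB0).const_mul r
    have hre : (fun y => φ (y - ξ) * (p + q * v y + r * v y ^ 2)) =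
        fun y => p * φ (y - ξ) + q * (φ (y - ξ) * v y) + r * (φ (y - ξ) * v y ^ 2) :=
      funext fun y => by ring
    have eA : ∫ y, (p * φ (y - ξ) + q * (φ (y - ξ) * v y)) + r * (φ (y - ξ) * v y ^ 2) ∂μ
        = (∫ y, p * φ (y - ξ) + q * (φ (y - ξ) * v y) ∂μ)
          + ∫ y, r * (φ (y - ξ) * v y ^ 2) ∂μ := integral_add (h1.add h2) h3
    have eB : ∫ y, p * φ (y - ξ) + q * (φ (y - ξ) * v y) ∂μ
        = (∫ y, p * φ (y - ξ) ∂μ) + ∫ y, q * (φ (y - ξ) * v y) ∂μ := integral_add h1 h2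
    rw [hre, eA, eB, integral_const_mul, integral_const_mul, integral_const_mul,
      integral_sub_right_eq_self φ ξ, hφ1, mul_one]
  -- E1
  have hE1 : ∫ x, (∫ y, φ (x - y) * ρ y ∂μ) * v x ^ 2 ∂μ = ∫ ξ, ρ ξ * b ξ ∂μ := by
    have h1 : ∀ x : G, (∫ y, φ (x - y) * ρ y ∂μ) * v x ^ 2
        = ∫ y, φ (x - y) * ρ y * v x ^ 2 ∂μ :=
      fun x => (integral_mul_const _ _).symm
    simp_rw [h1]
    rw [integral_integral_swap (f := fun x y => φ (x - y) * ρ y * v x ^ 2)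
      (mast _ (B * M ^ 2)
        (by rw [Function.uncurry_def]; exact (((hφm.comp (measurable_fst.sub measurable_snd)).mul
          (hρm.comp measurable_snd)).mul
          ((hvm.comp measurable_fst).pow_const 2)))
        (fun p => by
          simp only [Function.uncurry]
          rw [abs_of_nonneg (mul_nonneg (mul_nonneg (hφ0 _) (hρ0 _)) (sq_nonneg _))]
          calc φ (p.1 - p.2) * ρ p.2 * v p.1 ^ 2
              ≤ B * ρ p.2 * M ^ 2 := by
                apply mul_le_mul _ (hv2 _) (sq_nonneg _) (mul_nonneg hB0 (hρ0 _))
                exact mul_le_mul_of_nonneg_right (hB _) (hρ0 _)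
            _ = B * M ^ 2 * ρ p.2 := by ring))]
    refine integral_congr_ae (ae_of_all _ fun ξ => ?_)
    show (∫ x, φ (x - ξ) * ρ ξ * v x ^ 2 ∂μ) = ρ ξ * b ξ
    have h2 : (fun x => φ (x - ξ) * ρ ξ * v x ^ 2)
        = fun x => ρ ξ * (φ (x - ξ) * v x ^ 2) := funext fun x => by ring
    rw [h2, integral_const_mul]
  -- E2
  have hE2 : ∫ x, ρ x * (∫ y, φ (x - y) * v y ∂μ) ^ 2 ∂μ = ∫ ξ, ρ ξ * a ξ ^ 2 ∂μ := by
    refine integral_congr_ae (ae_of_all _ fun ξ => ?_)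
    show ρ ξ * (∫ y, φ (ξ - y) * v y ∂μ) ^ 2 = ρ ξ * a ξ ^ 2
    have h2 : (fun y => φ (ξ - y) * v y) = fun y => φ (y - ξ) * v y :=
      funext fun y => by rw [hφ' ξ y]
    rw [h2]
  -- RHS
  have hRHS : ∫ x, ∫ y, (∫ ξ, φ (x - ξ) * φ (y - ξ) * ρ ξ ∂μ) * (v x - v y) ^ 2 ∂μ ∂μ
      = ∫ ξ, ρ ξ * (2 * (b ξ - a ξ ^ 2)) ∂μ := by
    have step1 : ∀ x : G,
        ∫ y, (∫ ξ, φ (x - ξ) * φ (y - ξ) * ρ ξ ∂μ) * (v x - v y) ^ 2 ∂μ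
        = ∫ ξ, φ (x - ξ) * ρ ξ * (v x ^ 2 + (-(2 * v x)) * a ξ + 1 * b ξ) ∂μ := by
      intro x
      have h1 : ∀ y : G, (∫ ξ, φ (x - ξ) * φ (y - ξ) * ρ ξ ∂μ) * (v x - v y) ^ 2
          = ∫ ξ, φ (x - ξ) * φ (y - ξ) * ρ ξ * (v x - v y) ^ 2 ∂μ :=
        fun y => (integral_mul_const _ _).symm
      simp_rw [h1]
      rw [integral_integral_swap
        (f := fun y ξ => φ (x - ξ) * φ (y - ξ) * ρ ξ * (v x - v y) ^ 2)
        (mast _ (B * B * (4 * M ^ 2))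
          (by rw [Function.uncurry_def]; exact ((((hφm.comp (measurable_const.sub measurable_snd)).mul
            (hφm.comp (measurable_fst.sub measurable_snd))).mul
            (hρm.comp measurable_snd)).mul
            (((measurable_const.sub (hvm.comp measurable_fst))).pow_const 2)))
          (fun p => by
            simp only [Function.uncurry]
            rw [abs_of_nonneg (mul_nonneg (mul_nonneg (mul_nonneg (hφ0 _) (hφ0 _))
              (hρ0 _)) (sq_nonneg _))]
            have hvv : (v x - v p.1) ^ 2 ≤ 4 * M ^ 2 := by
              have h1 := hM x; have h2 := hM p.1
              have e1 : |v x - v p.1| ≤ 2 * M := by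
                calc |v x - v p.1| ≤ |v x| + |v p.1| := abs_sub _ _
                  _ ≤ 2 * M := by linarith
              calc (v x - v p.1) ^ 2 = |v x - v p.1| ^ 2 := (sq_abs _).symm
                _ ≤ (2 * M) ^ 2 := pow_le_pow_left₀ (abs_nonneg _) e1 2
                _ = 4 * M ^ 2 := by ring
            calc φ (x - p.2) * φ (p.1 - p.2) * ρ p.2 * (v x - v p.1) ^ 2
                ≤ B * B * ρ p.2 * (4 * M ^ 2) := by
                  apply mul_le_mul _ hvv (sq_nonneg _)
                    (mul_nonneg (mul_nonneg hB0 hB0) (hρ0 _))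
                  apply mul_le_mul _ le_rfl (hρ0 _) (mul_nonneg hB0 hB0)
                  exact mul_le_mul (hB _) (hB _) (hφ0 _) hB0
              _ = B * B * (4 * M ^ 2) * ρ p.2 := by ring))]
      refine integral_congr_ae (ae_of_all _ fun ξ => ?_)
      show (∫ y, φ (x - ξ) * φ (y - ξ) * ρ ξ * (v x - v y) ^ 2 ∂μ)
          = φ (x - ξ) * ρ ξ * (v x ^ 2 + (-(2 * v x)) * a ξ + 1 * b ξ)
      have h2 : (fun y => φ (x - ξ) * φ (y - ξ) * ρ ξ * (v x - v y) ^ 2)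
          = fun y => (φ (x - ξ) * ρ ξ) *
              (φ (y - ξ) * (v x ^ 2 + (-(2 * v x)) * v y + 1 * v y ^ 2)) :=
        funext fun y => by ring
      rw [h2, integral_const_mul, core ξ (v x ^ 2) (-(2 * v x)) 1]
    simp_rw [step1]
    have hwbd : ∀ (x ξ : G), |v x ^ 2 + (-(2 * v x)) * a ξ + 1 * b ξ| ≤ 4 * M ^ 2 := by
      intro x ξ
      have h1 : |v x ^ 2| ≤ M ^ 2 := by
        rw [abs_of_nonneg (sq_nonneg _)]; exact hv2 x
      have h2 : |(-(2 * v x)) * a ξ| ≤ 2 * M * M := by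
        rw [abs_mul, abs_neg, abs_mul, abs_two]
        exact mul_le_mul (mul_le_mul le_rfl (hM x) (abs_nonneg _) (by norm_num))
          (habd ξ) (abs_nonneg _) (by linarith)
      have h3 : |(1 : ℝ) * b ξ| ≤ M ^ 2 := by
        rw [one_mul]; exact hbbd ξ
      calc |v x ^ 2 + (-(2 * v x)) * a ξ + 1 * b ξ|
          ≤ |v x ^ 2 + (-(2 * v x)) * a ξ| + |1 * b ξ| := abs_add_le _ _
        _ ≤ (|v x ^ 2| + |(-(2 * v x)) * a ξ|) + |1 * b ξ| :=
            add_le_add_left (abs_add_le _ _) _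
        _ ≤ 4 * M ^ 2 := by nlinarith
    rw [integral_integral_swap
      (f := fun x ξ => φ (x - ξ) * ρ ξ * (v x ^ 2 + (-(2 * v x)) * a ξ + 1 * b ξ))
      (mast _ (B * (4 * M ^ 2))
        (by rw [Function.uncurry_def]; exact (((hφm.comp (measurable_fst.sub measurable_snd)).mul
          (hρm.comp measurable_snd)).mul
          ((((hvm.comp measurable_fst).pow_const 2).add
            ((((hvm.comp measurable_fst).const_mul 2).neg).mul
              (haM.comp measurable_snd))).add
            ((measurable_const).mul (hbM.comp measurable_snd)))))
        (fun p => by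
          simp only [Function.uncurry]
          rw [abs_mul, abs_mul, abs_of_nonneg (hφ0 _), abs_of_nonneg (hρ0 _)]
          calc φ (p.1 - p.2) * ρ p.2 * |v p.1 ^ 2 + (-(2 * v p.1)) * a p.2 + 1 * b p.2|
              ≤ B * ρ p.2 * (4 * M ^ 2) := by
                apply mul_le_mul _ (hwbd _ _) (abs_nonneg _) (mul_nonneg hB0 (hρ0 _))
                exact mul_le_mul_of_nonneg_right (hB _) (hρ0 _)
            _ = B * (4 * M ^ 2) * ρ p.2 := by ring))]
    refine integral_congr_ae (ae_of_all _ fun ξ => ?_)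
    show (∫ x, φ (x - ξ) * ρ ξ * (v x ^ 2 + (-(2 * v x)) * a ξ + 1 * b ξ) ∂μ)
        = ρ ξ * (2 * (b ξ - a ξ ^ 2))
    have h3 : (fun x => φ (x - ξ) * ρ ξ * (v x ^ 2 + (-(2 * v x)) * a ξ + 1 * b ξ))
        = fun x => ρ ξ *
            (φ (x - ξ) * (b ξ + (-(2 * a ξ)) * v x + 1 * v x ^ 2)) :=
      funext fun x => by ring
    rw [h3, integral_const_mul, core ξ (b ξ) (-(2 * a ξ)) 1]
    ring
  rw [hE1, hE2, hRHS]
  have hiρb : Integrable (fun ξ => ρ ξ * b ξ) μ := by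
    refine (hρi.const_mul (M ^ 2)).mono' (hρm.mul hbM).aestronglyMeasurable
      (ae_of_all _ fun ξ => ?_)
    rw [Real.norm_eq_abs, abs_mul, abs_of_nonneg (hρ0 _), mul_comm]
    exact mul_le_mul_of_nonneg_right (hbbd ξ) (hρ0 _)
  have hiρa : Integrable (fun ξ => ρ ξ * a ξ ^ 2) μ := by
    refine (hρi.const_mul (M ^ 2)).mono' (hρm.mul (haM.pow_const 2)).aestronglyMeasurable
      (ae_of_all _ fun ξ => ?_)
    rw [Real.norm_eq_abs, abs_mul, abs_of_nonneg (hρ0 _), mul_comm]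
    refine mul_le_mul_of_nonneg_right ?_ (hρ0 _)
    rw [abs_of_nonneg (sq_nonneg _), ← sq_abs]
    exact pow_le_pow_left₀ (abs_nonneg _) (habd ξ) 2
  have h4 : (fun ξ => ρ ξ * (2 * (b ξ - a ξ ^ 2)))
      = fun ξ => 2 * (ρ ξ * b ξ - ρ ξ * a ξ ^ 2) := funext fun ξ => by ring
  rw [h4, integral_const_mul, integral_sub hiρb hiρa]
  ring

/-- energy-gap identity for the over-mollified model on the torus:
`∫ ρ_φ v² − ∫ ρ (v*φ)² = (1/2) ∬ ρ_{φφ}(x,y) (v(x)−v(y))² dx dy`. -/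
theorem overmollified_energy_gap
    (n : ℕ)
    (ρ φ v : (Fin n → AddCircle (1 : ℝ)) → ℝ)
    (hρm : Measurable ρ) (hρ0 : ∀ x, 0 ≤ ρ x) (hρi : Integrable ρ)
    (hφm : Measurable φ) (hφ0 : ∀ x, 0 ≤ φ x) (hφb : ∃ B : ℝ, ∀ x, φ x ≤ B)
    (hφe : ∀ x, φ (-x) = φ x) (hφ1 : ∫ x, φ x = 1)
    (hvm : Measurable v) (hvb : ∃ M : ℝ, ∀ x, |v x| ≤ M) :
    ∫ x, (∫ y, φ (x - y) * ρ y) * v x ^ 2 - ∫ x, ρ x * (∫ y, φ (x - y) * v y) ^ 2 =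
      (1 / 2) * ∫ x, ∫ y, (∫ ξ, φ (x - ξ) * φ (y - ξ) * ρ ξ) * (v x - v y) ^ 2 := by
  obtain ⟨B, hB⟩ := hφb
  obtain ⟨M, hM⟩ := hvb
  haveI hprob : IsProbabilityMeasure (volume : Measure (Fin n → AddCircle (1 : ℝ))) := by
    constructor
    rw [MeasureTheory.volume_pi, Measure.pi_univ]
    simp [AddCircle.measure_univ]
  have hB0 : 0 ≤ B := le_trans (hφ0 0) (hB 0)
  have hM0 : 0 ≤ M := le_trans (abs_nonneg _) (hM 0)
  have hv2 : ∀ x, v x ^ 2 ≤ M ^ 2 := fun x => by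
    rw [← sq_abs]; exact pow_le_pow_left₀ (abs_nonneg _) (hM x) 2
  set R : ℝ := ∫ y, ρ y with hR
  have hR0 : 0 ≤ R := integral_nonneg hρ0
  have hsec : ∀ x, Integrable (fun y => φ (x - y) * ρ y) := by
    intro x
    refine (hρi.const_mul B).mono'
      ((hφm.comp (measurable_const.sub measurable_id)).mul hρm).aestronglyMeasurable
      (ae_of_all _ fun y => ?_)
    rw [Real.norm_eq_abs, abs_mul, abs_of_nonneg (hφ0 _), abs_of_nonneg (hρ0 _)]
    exact mul_le_mul_of_nonneg_right (hB _) (hρ0 _)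
  have hconvbd : ∀ x, |∫ y, φ (x - y) * ρ y| ≤ B * R := by
    intro x
    calc |∫ y, φ (x - y) * ρ y| ≤ ∫ y, |φ (x - y) * ρ y| := by
          simpa only [Real.norm_eq_abs] using
            norm_integral_le_integral_norm (fun y => φ (x - y) * ρ y)
      _ ≤ ∫ y, B * ρ y := by
          refine integral_mono (hsec x).abs (hρi.const_mul B) fun y => ?_
          rw [abs_mul, abs_of_nonneg (hφ0 _), abs_of_nonneg (hρ0 _)]
          exact mul_le_mul_of_nonneg_right (hB _) (hρ0 _)
      _ = B * R := by rw [integral_const_mul]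
  have hconvM : Measurable fun x => ∫ y, φ (x - y) * ρ y := by
    have hsm : StronglyMeasurable
        (fun p : (Fin n → AddCircle (1 : ℝ)) × (Fin n → AddCircle (1 : ℝ)) =>
          φ (p.1 - p.2) * ρ p.2) :=
      ((hφm.comp (measurable_fst.sub measurable_snd)).mul
        (hρm.comp measurable_snd)).stronglyMeasurable
    exact hsm.integral_prod_right'.measurable
  have hfi : Integrable fun x => (∫ y, φ (x - y) * ρ y) * v x ^ 2 := by
    refine ⟨(hconvM.mul (hvm.pow_const 2)).aestronglyMeasurable,
      HasFiniteIntegral.of_bounded (C := B * R * M ^ 2) (ae_of_all _ fun x => ?_)⟩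
    rw [Real.norm_eq_abs, abs_mul, abs_of_nonneg (sq_nonneg (v x))]
    exact mul_le_mul (hconvbd x) (hv2 x) (sq_nonneg _) (mul_nonneg hB0 hR0)
  rw [integral_sub hfi (integrable_const _), integral_const, probReal_univ,
    one_smul]
  exact energy_gap_aux ρ φ v hρm hρ0 hρi hφm hφ0 ⟨B, hB⟩ hφe hφ1 hvm ⟨M, hM⟩
end
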